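/- arXiv:1402.2064 — 11 statements merged into one kernel-verified Lean document; each statement's English description precedes it below -/
import Mathlib

section
/- Let d ≥ 1 and let H be a finite hypergraph of d-intervals. Then τ*(H) ≤ 2d·ν(H). -/
/-- A `d`-interval: a union of at most `d` pairwise disjoint closed intervals
on the real line. -/
def IsDInterval (d : ℕ) (h : Set ℝ) : Prop :=
  ∃ (n : ℕ) (a b : Fin n → ℝ), n ≤ d ∧ (∀ i, a i ≤ b i) ∧
    (Set.univ : Set (Fin n)).PairwiseDisjoint (fun i => Set.Icc (a i) (b i)) ∧
    h = ⋃ i, Set.Icc (a i) (b i)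

/-- The matching number: the maximum size of a set of pairwise disjoint edges. -/
noncomputable def nu {α : Type*} (H : Set (Set α)) : ℕ :=
  sSup {n | ∃ M : Finset (Set α), ↑M ⊆ H ∧
    (M : Set (Set α)).PairwiseDisjoint id ∧ M.card = n}

/-- The fractional covering number: the infimum of `∑ₓ f x` over finitely
supported nonnegative `f : α → ℝ` with `∑_{x ∈ e} f x ≥ 1` for every edge `e`. -/
noncomputable def tauStar {α : Type*} (H : Set (Set α)) : ℝ :=
  sInf {t | ∃ f : α → ℝ, (Function.support f).Finite ∧ (∀ x, 0 ≤ f x) ∧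
    (∀ e ∈ H, 1 ≤ ∑ᶠ x ∈ e, f x) ∧ t = ∑ᶠ x, f x}

/-!
A `d`-interval `e` has a set `L e` of at most `d` left endpoints such that every point of `e` is
joined to one of them by a segment inside `e`. If two edges meet at `x`, the larger of the two
endpoints serving `x` lies in both, so intersecting edges meet in a point of `L e ∪ L f`.
For a fractional matching `w` (with constraints only at these points), double counting then gives
`∑ₑ wₑ ∑_{f meets e} w_f ≤ 2d ∑ w`, so some edge of positive weight has a neighbourhood of weight
at most `2d`; taking it into the matching and discarding its neighbours shows `∑ w ≤ 2d ν` by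
induction. Finally, LP duality (from Farkas' lemma) turns this bound on fractional matchings into
fractional covers of weight arbitrarily close to `2d ν`.
-/

open Finset Function Matrix
open scoped Classical

section Duality

variable {ι κ : Type*} [Fintype ι] [Fintype κ]

lemma convex_setOf_nonneg_sum_le (c : ℝ) : Convex ℝ {f : κ → ℝ | 0 ≤ f ∧ ∑ j, f j ≤ c} :=
  (convex_Ici 0).inter (convex_halfSpace_le (f := fun f : κ → ℝ => ∑ j, f j)
    ⟨fun _ _ => sum_add_distrib, fun _ _ => (mul_sum ..).symm⟩ c)

lemma isCompact_setOf_nonneg_sum_le (c : ℝ) : IsCompact {f : κ → ℝ | 0 ≤ f ∧ ∑ j, f j ≤ c} := by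
  refine (isCompact_Icc (a := 0) (b := fun _ => c)).of_isClosed_subset
    (isClosed_Ici.inter (isClosed_le (continuous_finsetSum _ fun j _ => continuous_apply j)
      continuous_const)) ?_
  rintro f ⟨hf0, hfc⟩
  exact ⟨hf0, fun j => (single_le_sum (fun i _ => hf0 i) (mem_univ j)).trans hfc⟩

/-- Separating the compact convex set `{A f - 1 | f ≥ 0, ∑ f ≤ c}` from the nonnegative orthant
(Farkas) yields a nonnegative functional `w`, which after rescaling is a packing of weight `c`. -/
theorem Matrix.exists_cover_of_forall_packing_sum_lt (A : Matrix ι κ ℝ) (c : ℝ)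
    (h : ∀ w : ι → ℝ, 0 ≤ w → w ᵥ* A ≤ 1 → ∑ i, w i < c) :
    ∃ f : κ → ℝ, 0 ≤ f ∧ 1 ≤ A *ᵥ f ∧ ∑ j, f j ≤ c := by
  by_contra! hno
  have hc : 0 < c := by simpa using h 0 le_rfl (by simp)
  set K : Set (κ → ℝ) := {f | 0 ≤ f ∧ ∑ j, f j ≤ c}
  have hconv : Convex ℝ ((fun f => A *ᵥ f - 1) '' K) := by
    have := ((convex_setOf_nonneg_sum_le c).linear_image A.mulVecLin).translate (-1)
    rw [Set.image_image] at this
    simpa [sub_eq_neg_add] using this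
  obtain ⟨φ, hφ0, hφK⟩ := (ProperCone.positive ℝ (ι → ℝ)).hyperplane_separation hconv
    ((isCompact_setOf_nonneg_sum_le c).image (by fun_prop)) (by
      rw [Set.disjoint_left]
      rintro _ ⟨f, hf, rfl⟩ hpos
      exact (hno f hf.1 (by simpa [sub_nonneg] using hpos)).not_ge hf.2)
  set w : ι → ℝ := fun i => φ fun j => if i = j then 1 else 0
  have hw : 0 ≤ w := fun i => hφ0 _ fun j => by dsimp only; split_ifs <;> norm_num
  have hφw (z : ι → ℝ) : φ z = z ⬝ᵥ w :=
    LinearMap.pi_apply_eq_sum_univ (φ : (ι → ℝ) →ₗ[ℝ] ℝ) z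
  have hK : ∀ f ∈ K, f ⬝ᵥ (w ᵥ* A) < ∑ i, w i := fun f hf => by
    have := hφK _ ⟨f, hf, rfl⟩
    rwa [hφw, sub_dotProduct, dotProduct_comm, dotProduct_mulVec, sub_neg, dotProduct_comm,
      one_dotProduct] at this
  have hS : 0 < ∑ i, w i := by simpa using hK 0 ⟨le_rfl, by simpa using hc.le⟩
  have hcol (j : κ) : c * (w ᵥ* A) j < ∑ i, w i := by
    simpa [single_dotProduct] using hK (Pi.single j c) ⟨Pi.single_nonneg.2 hc.le, by simp⟩
  refine (h ((c / ∑ i, w i) • w) (smul_nonneg (by positivity) hw) (fun j => ?_)).ne ?_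
  · rw [smul_vecMul, Pi.smul_apply, smul_eq_mul, div_mul_eq_mul_div, Pi.one_apply, div_le_one hS]
    exact (hcol j).le
  · simp [← mul_sum, hS.ne']

end Duality

section Hypergraph

variable {α : Type*}

lemma tauStar_le_finsum {H : Set (Set α)} {f : α → ℝ} (hf : (support f).Finite)
    (hf0 : ∀ x, 0 ≤ f x) (hcov : ∀ e ∈ H, 1 ≤ ∑ᶠ x ∈ e, f x) : tauStar H ≤ ∑ᶠ x, f x :=
  csInf_le ⟨0, by rintro t ⟨g, -, hg0, -, rfl⟩; exact finsum_nonneg hg0⟩ ⟨f, hf, hf0, hcov, rfl⟩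

lemma tauStar_le_of_forall_fractionalMatching_sum_lt (X : Finset α) (E : Finset (Set α)) (c : ℝ)
    (h : ∀ w : Set α → ℝ, (∀ e, 0 ≤ w e) → (∀ x ∈ X, ∑ e ∈ E with x ∈ e, w e ≤ 1) →
      ∑ e ∈ E, w e < c) :
    tauStar (E : Set (Set α)) ≤ c := by
  let A : Matrix E X ℝ := fun e x => if (x : α) ∈ (e : Set α) then 1 else 0
  obtain ⟨f, hf0, hcov, hfc⟩ := A.exists_cover_of_forall_packing_sum_lt c fun w hw hwA => by
    let W : Set α → ℝ := fun e => if he : e ∈ E then w ⟨e, he⟩ else 0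
    have hW (e : E) : W e = w e := dif_pos e.2
    convert h W (fun e => by unfold W; split_ifs; exacts [hw _, le_rfl]) (fun x hx => ?_) using 1
    · rw [← sum_coe_sort E]; simp only [hW]
    · refine le_of_eq_of_le ?_ (hwA ⟨x, hx⟩)
      rw [sum_filter, ← sum_coe_sort E]
      simp [A, vecMul, dotProduct, hW]
  let F : α → ℝ := fun x => if hx : x ∈ X then f ⟨x, hx⟩ else 0
  have hF (x : X) : F x = f x := dif_pos x.2
  have hFX : support F ⊆ X := fun x hx => by_contra fun hxX => hx (dif_neg hxX)
  have hFsum (s : Set α) : ∑ᶠ x ∈ s, F x = ∑ x : X, if (x : α) ∈ s then f x else 0 := by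
    rw [finsum_mem_def, finsum_eq_sum_of_support_subset _
      (Set.support_indicator.trans_subset (Set.inter_subset_right.trans hFX)), ← sum_coe_sort X]
    simp [Set.indicator_apply, hF]
  calc tauStar (E : Set (Set α)) ≤ ∑ᶠ x, F x :=
        tauStar_le_finsum (X.finite_toSet.subset hFX)
          (fun x => by unfold F; split_ifs; exacts [hf0 _, le_rfl])
          fun e he => by simpa [hFsum, A, mulVec, dotProduct] using hcov ⟨e, he⟩
    _ ≤ c := by
      rwa [finsum_eq_sum_of_support_subset F hFX, ← sum_coe_sort X, Fintype.sum_congr _ _ hF]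

lemma card_le_nu {H : Set (Set α)} (hH : H.Finite) {M : Finset (Set α)} (hMH : ↑M ⊆ H)
    (hM : (M : Set (Set α)).PairwiseDisjoint id) : #M ≤ nu H :=
  le_csSup ⟨#hH.toFinset, by
    rintro _ ⟨M', hM', -, rfl⟩
    exact card_le_card (hH.subset_toFinset.2 hM')⟩ ⟨M, hMH, hM, rfl⟩

end Hypergraph

section Matching

lemma exists_pos_le_of_sum_mul_le {ι : Type*} {s : Finset ι} {w n : ι → ℝ} {c : ℝ}
    (hw : ∀ i ∈ s, 0 ≤ w i) (hpos : 0 < ∑ i ∈ s, w i)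
    (h : ∑ i ∈ s, w i * n i ≤ c * ∑ i ∈ s, w i) : ∃ i ∈ s, 0 < w i ∧ n i ≤ c := by
  by_contra! hlt
  obtain ⟨j, hj, hwj⟩ :=
    exists_lt_of_sum_lt (s := s) (f := fun _ => 0) (g := w) (by simpa using hpos)
  refine h.not_gt ?_
  rw [mul_sum]
  refine sum_lt_sum (fun i hi => ?_) ⟨j, hj, ?_⟩
  · rcases (hw i hi).eq_or_lt with h0 | h0
    · simp [← h0]
    · rw [mul_comm]; exact mul_le_mul_of_nonneg_left (hlt i hi h0).le h0.le
  · rw [mul_comm]; exact mul_lt_mul_of_pos_left (hlt j hj hwj) hwj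

variable {α : Type*} {E : Finset (Set α)} {L : Set α → Finset α} {d : ℕ} {w : Set α → ℝ}

/-- Double counting over the pairs `(e, f)` of intersecting edges: each such pair is charged to a
point of `L e` lying in `f` or to a point of `L f` lying in `e`. -/
lemma sum_mul_sum_inter_nonempty_le (hL : ∀ e ∈ E, #(L e) ≤ d)
    (hmeet : ∀ e ∈ E, ∀ f ∈ E, (e ∩ f).Nonempty → ∃ x ∈ L e ∪ L f, x ∈ e ∩ f)
    (hw : ∀ e, 0 ≤ w e) (hpack : ∀ e ∈ E, ∀ x ∈ L e, ∑ f ∈ E with x ∈ f, w f ≤ 1) :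
    ∑ e ∈ E, w e * ∑ f ∈ E with (e ∩ f).Nonempty, w f ≤ 2 * d * ∑ e ∈ E, w e := by
  let a : Set α → Set α → ℝ := fun e f => #{x ∈ L e | x ∈ f}
  have ha (e f : Set α) : 0 ≤ a e f := Nat.cast_nonneg _
  have hrow : ∀ e ∈ E, ∑ f ∈ E, w f * a e f ≤ d := fun e he => calc
    ∑ f ∈ E, w f * a e f = ∑ x ∈ L e, ∑ f ∈ E with x ∈ f, w f := by
      simp only [a, card_filter, Nat.cast_sum, mul_sum, sum_filter]
      rw [sum_comm]
      simp
    _ ≤ ∑ x ∈ L e, 1 := sum_le_sum (hpack e he)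
    _ ≤ d := by simpa using hL e he
  have hpair : ∀ e ∈ E, ∀ f ∈ E, (e ∩ f).Nonempty → 1 ≤ a e f + a f e := by
    intro e he f hf hef
    obtain ⟨x, hx, hxe, hxf⟩ := hmeet e he f hf hef
    rcases mem_union.1 hx with hx | hx
    · have : 1 ≤ a e f := Nat.one_le_cast.2 (card_pos.2 ⟨x, mem_filter.2 ⟨hx, hxf⟩⟩)
      linarith [ha f e]
    · have : 1 ≤ a f e := Nat.one_le_cast.2 (card_pos.2 ⟨x, mem_filter.2 ⟨hx, hxe⟩⟩)
      linarith [ha e f]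
  have hnbhd : ∀ e ∈ E, ∑ f ∈ E with (e ∩ f).Nonempty, w f ≤ ∑ f ∈ E, w f * (a e f + a f e) := by
    intro e he
    rw [sum_filter]
    refine sum_le_sum fun f hf => ?_
    split_ifs with hef
    · exact le_mul_of_one_le_right (hw f) (hpair e he f hf hef)
    · exact mul_nonneg (hw f) (add_nonneg (ha e f) (ha f e))
  calc ∑ e ∈ E, w e * ∑ f ∈ E with (e ∩ f).Nonempty, w f
      ≤ ∑ e ∈ E, w e * ∑ f ∈ E, w f * (a e f + a f e) :=
        sum_le_sum fun e he => mul_le_mul_of_nonneg_left (hnbhd e he) (hw e)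
    _ = ∑ e ∈ E, w e * ∑ f ∈ E, w f * a e f + ∑ f ∈ E, w f * ∑ e ∈ E, w e * a f e := by
        simp only [mul_add, mul_sum, sum_add_distrib]
        rw [sum_comm (s := E) (t := E) (f := fun e f => w e * (w f * a f e))]
        simp only [mul_left_comm]
    _ ≤ ∑ e ∈ E, w e * d + ∑ f ∈ E, w f * d :=
        add_le_add (sum_le_sum fun e he => mul_le_mul_of_nonneg_left (hrow e he) (hw e))
          (sum_le_sum fun f hf => mul_le_mul_of_nonneg_left (hrow f hf) (hw f))
    _ = 2 * d * ∑ e ∈ E, w e := by rw [← sum_mul]; ring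

theorem exists_pairwiseDisjoint_sum_le_two_mul_card (hne : ∀ e ∈ E, e.Nonempty)
    (hL : ∀ e ∈ E, #(L e) ≤ d)
    (hmeet : ∀ e ∈ E, ∀ f ∈ E, (e ∩ f).Nonempty → ∃ x ∈ L e ∪ L f, x ∈ e ∩ f)
    (hw : ∀ e, 0 ≤ w e) (hpack : ∀ e ∈ E, ∀ x ∈ L e, ∑ f ∈ E with x ∈ f, w f ≤ 1) :
    ∃ M ⊆ E, (M : Set (Set α)).PairwiseDisjoint id ∧ ∑ e ∈ E, w e ≤ 2 * d * #M := by
  induction E using Finset.strongInduction with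
  | H E ih =>
  by_cases hpos : ∑ e ∈ E, w e ≤ 0
  · exact ⟨∅, empty_subset _, by simp, by simpa using hpos⟩
  obtain ⟨e₀, he₀, -, hnb⟩ := exists_pos_le_of_sum_mul_le (fun e _ => hw e) (not_le.1 hpos)
    (sum_mul_sum_inter_nonempty_le hL hmeet hw hpack)
  set E' := E.filter fun f => ¬(e₀ ∩ f).Nonempty
  have he₀' : e₀ ∉ E' := by simp [E', hne e₀ he₀]
  have hE' : E' ⊆ E := filter_subset _ _
  obtain ⟨M, hM, hdisj, hsum⟩ := ih E' (filter_ssubset.2 ⟨e₀, he₀, by simpa using hne e₀ he₀⟩)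
    (fun e he => hne e (hE' he)) (fun e he => hL e (hE' he))
    (fun e he f hf => hmeet e (hE' he) f (hE' hf))
    (fun e he x hx => (sum_le_sum_of_subset_of_nonneg (filter_subset_filter _ hE')
      fun f _ _ => hw f).trans (hpack e (hE' he) x hx))
  refine ⟨insert e₀ M, insert_subset he₀ (hM.trans hE'), ?_, ?_⟩
  · rw [coe_insert]
    exact hdisj.insert fun f hf _ => Set.disjoint_iff_inter_eq_empty.2
      (Set.not_nonempty_iff_eq_empty.1 (mem_filter.1 (hM hf)).2)
  · rw [card_insert_of_notMem fun h => he₀' (hM h), ← sum_filter_add_sum_filter_not E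
      fun f => (e₀ ∩ f).Nonempty]
    push_cast
    linarith

end Matching

section LeftEndpoints

variable {α : Type*} [LinearOrder α]

def LeftAnchors (s : Finset α) (e : Set α) : Prop :=
  ∀ x ∈ e, ∃ l ∈ s, l ≤ x ∧ Set.Icc l x ⊆ e

lemma LeftAnchors.exists_mem_union_mem_inter {s t : Finset α} {e f : Set α}
    (hs : LeftAnchors s e) (ht : LeftAnchors t f) (hef : (e ∩ f).Nonempty) :
    ∃ x ∈ s ∪ t, x ∈ e ∩ f := by
  obtain ⟨x, hxe, hxf⟩ := hef
  obtain ⟨l, hl, hlx, hle⟩ := hs x hxe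
  obtain ⟨m, hm, hmx, hmf⟩ := ht x hxf
  refine ⟨max l m, ?_, hle ⟨le_max_left _ _, max_le hlx hmx⟩,
    hmf ⟨le_max_right _ _, max_le hlx hmx⟩⟩
  rcases max_choice l m with h | h <;> simp [h, hl, hm]

lemma IsDInterval.exists_leftAnchors {d : ℕ} {e : Set ℝ} (he : IsDInterval d e) :
    ∃ s : Finset ℝ, #s ≤ d ∧ LeftAnchors s e := by
  obtain ⟨n, a, b, hnd, -, -, rfl⟩ := he
  refine ⟨univ.image a, card_image_le.trans (by simpa using hnd), fun x hx => ?_⟩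
  obtain ⟨i, hi⟩ := Set.mem_iUnion.1 hx
  exact ⟨a i, mem_image_of_mem a (mem_univ i), hi.1,
    fun y hy => Set.mem_iUnion.2 ⟨i, hy.1, hy.2.trans hi.2⟩⟩

end LeftEndpoints

theorem tauStar_le_two_d_mul_nu_general (d : ℕ)
    (H : Set (Set ℝ)) (hfin : H.Finite)
    (hH : ∀ e ∈ H, IsDInterval d e ∧ e.Nonempty) :
    tauStar H ≤ 2 * d * (nu H : ℝ) := by
  choose! L hL using fun e (he : e ∈ H) => (hH e he).1.exists_leftAnchors
  have hE (e : Set ℝ) (he : e ∈ hfin.toFinset) : e ∈ H := hfin.mem_toFinset.1 he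
  refine le_of_forall_gt_imp_ge_of_dense fun c hc => ?_
  rw [← hfin.coe_toFinset]
  refine tauStar_le_of_forall_fractionalMatching_sum_lt (hfin.toFinset.biUnion L) _ c
    fun w hw hpack => ?_
  obtain ⟨M, hM, hdisj, hsum⟩ := exists_pairwiseDisjoint_sum_le_two_mul_card
    (fun e he => (hH e (hE e he)).2) (fun e he => (hL e (hE e he)).1)
    (fun e he f hf => (hL e (hE e he)).2.exists_mem_union_mem_inter (hL f (hE f hf)).2) hw
    (fun e he x hx => hpack x (mem_biUnion.2 ⟨e, he, hx⟩))
  calc ∑ e ∈ hfin.toFinset, w e ≤ 2 * d * #M := hsum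
    _ ≤ 2 * d * nu H := by
        gcongr
        exact card_le_nu hfin (fun e he => hE e (hM he)) hdisj
    _ < c := hc

/-- For a finite hypergraph of `d`-intervals, `τ*(H) ≤ 2d·ν(H)`. -/
theorem tauStar_le_two_d_mul_nu (d : ℕ) (hd : 1 ≤ d)
    (H : Set (Set ℝ)) (hfin : H.Finite)
    (hH : ∀ e ∈ H, IsDInterval d e ∧ e.Nonempty) :
    tauStar H ≤ 2 * d * (nu H : ℝ) :=
  tauStar_le_two_d_mul_nu_general d H hfin hH
end

section
/- Let d ≥ 1 and let H be a finite hypergraph of d-intervals. Then τ(H) ≤ d·τ*(H). -/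
/-- The covering (transversal) number: the minimum size of a finite set of
points meeting every edge. -/
noncomputable def tau {α : Type*} (H : Set (Set α)) : ℕ :=
  sInf {n | ∃ C : Finset α, (∀ e ∈ H, ∃ x ∈ C, x ∈ e) ∧ C.card = n}

open Set Function

section Finsum

variable {α ι : Type*} {f : α → ℝ}

lemma finite_support_indicator (hf : (support f).Finite) (s : Set α) :
    (support (s.indicator f)).Finite := by
  rw [support_indicator]
  exact hf.subset inter_subset_right

lemma finsum_mem_biUnion_of_finite_support {I : Finset ι} {t : ι → Set α}
    (hf : (support f).Finite) (ht : (I : Set ι).PairwiseDisjoint t) :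
    ∑ᶠ a ∈ ⋃ i ∈ I, t i, f a = ∑ i ∈ I, ∑ᶠ a ∈ t i, f a := by
  rw [← finsum_mem_inter_support, iUnion₂_inter, ← Finset.set_biUnion_coe]
  simp only [← finsum_mem_inter_support f (t _)]
  rw [finsum_mem_biUnion (ht.mono_on fun i _ => inter_subset_left) I.finite_toSet
    fun i _ => hf.subset inter_subset_right, finsum_mem_coe_finset]

lemma finsum_mem_le_finsum (hf : (support f).Finite) (hf0 : ∀ a, 0 ≤ f a) (s : Set α) :
    ∑ᶠ a ∈ s, f a ≤ ∑ᶠ a, f a := by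
  rw [finsum_mem_def]
  exact finsum_le_finsum' (finite_support_indicator hf s) hf (indicator_le_self' fun a _ => hf0 a)

lemma le_finsum_mem_of_mem (hf : (support f).Finite) (hf0 : ∀ a, 0 ≤ f a) {s : Set α} {a : α}
    (ha : a ∈ s) : f a ≤ ∑ᶠ b ∈ s, f b := by
  rw [finsum_mem_def, ← indicator_of_mem ha f]
  exact single_le_finsum a (finite_support_indicator hf s) (indicator_nonneg fun b _ => hf0 b)

lemma exists_one_le_mul_finsum_mem_of_pairwiseDisjoint [Fintype ι] {t : ι → Set α}
    (hf : (support f).Finite) (hf0 : ∀ a, 0 ≤ f a) (ht : (univ : Set ι).PairwiseDisjoint t)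
    {c : ℝ} (hc : (Fintype.card ι : ℝ) ≤ c) (h1 : 1 ≤ ∑ᶠ a ∈ ⋃ i, t i, f a) :
    ∃ i, 1 ≤ c * ∑ᶠ a ∈ t i, f a := by
  rw [← Finset.coe_univ] at ht
  rw [← biUnion_univ, ← Finset.coe_univ, Finset.set_biUnion_coe,
    finsum_mem_biUnion_of_finite_support hf ht] at h1
  have hne : (Finset.univ : Finset ι).Nonempty := by
    by_contra hemp
    rw [Finset.not_nonempty_iff_eq_empty.mp hemp, Finset.sum_empty] at h1
    exact one_pos.not_ge h1
  obtain ⟨i, -, hi⟩ := Finset.exists_le_of_sum_le hne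
    (f := fun _ => (1 : ℝ)) (g := fun i => Fintype.card ι * ∑ᶠ a ∈ t i, f a) (by
      rw [← Finset.mul_sum]
      simpa using mul_le_mul_of_nonneg_left h1 (Nat.cast_nonneg (Fintype.card ι)))
  have hti : 0 ≤ ∑ᶠ a ∈ t i, f a := finsum_nonneg fun a => finsum_nonneg fun _ => hf0 a
  exact ⟨i, hi.trans (mul_le_mul_of_nonneg_right hc hti)⟩

lemma card_le_mul_finsum_of_pairwiseDisjoint {D : Finset ι} {t : ι → Set α}
    (hf : (support f).Finite) (hf0 : ∀ a, 0 ≤ f a) (hD : (D : Set ι).PairwiseDisjoint t)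
    {c : ℝ} (hc : 0 ≤ c) (hheavy : ∀ i ∈ D, 1 ≤ c * ∑ᶠ a ∈ t i, f a) :
    (D.card : ℝ) ≤ c * ∑ᶠ a, f a :=
  calc (D.card : ℝ) = ∑ _i ∈ D, (1 : ℝ) := by simp
    _ ≤ ∑ i ∈ D, c * ∑ᶠ a ∈ t i, f a := Finset.sum_le_sum hheavy
    _ = c * ∑ᶠ a ∈ ⋃ i ∈ D, t i, f a := by
      rw [finsum_mem_biUnion_of_finite_support hf hD, Finset.mul_sum]
    _ ≤ c * ∑ᶠ a, f a := mul_le_mul_of_nonneg_left (finsum_mem_le_finsum hf hf0 _) hc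

end Finsum

lemma IsDInterval.exists_heavy_Icc {d : ℕ} {e : Set ℝ} (he : IsDInterval d e) {f : ℝ → ℝ}
    (hf : (support f).Finite) (hf0 : ∀ x, 0 ≤ f x) (h1 : 1 ≤ ∑ᶠ x ∈ e, f x) :
    ∃ a b, a ≤ b ∧ Icc a b ⊆ e ∧ 1 ≤ d * ∑ᶠ x ∈ Icc a b, f x := by
  obtain ⟨n, a, b, hnd, hab, hdisj, rfl⟩ := he
  obtain ⟨i, hi⟩ := exists_one_le_mul_finsum_mem_of_pairwiseDisjoint hf hf0 hdisj
    (c := d) (by simpa using hnd) h1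
  exact ⟨a i, b i, hab i, subset_iUnion (fun j => Icc (a j) (b j)) i, hi⟩

lemma exists_piercing_finset_card_le_disjoint {ι : Type*} (a b : ι → ℝ) (I : Finset ι)
    (hab : ∀ i ∈ I, a i ≤ b i) :
    ∃ C : Finset ℝ, ∃ D ⊆ I, (∀ i ∈ I, ∃ x ∈ C, x ∈ Icc (a i) (b i)) ∧
      (D : Set ι).PairwiseDisjoint (fun i => Icc (a i) (b i)) ∧ C.card ≤ D.card := by
  classical
  induction I using Finset.strongInduction with
  | _ I ih =>
  rcases I.eq_empty_or_nonempty with rfl | hI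
  · exact ⟨∅, ∅, subset_rfl, by simp, by simp, le_rfl⟩
  -- Pierce at the smallest right endpoint `b i₀` and recurse on the intervals it misses.
  obtain ⟨i₀, hi₀, hmin⟩ := I.exists_min_image b hI
  set J := I.filter (fun i => b i₀ < a i)
  have hJ : J ⊂ I := Finset.filter_ssubset.mpr ⟨i₀, hi₀, not_lt.mpr (hab i₀ hi₀)⟩
  obtain ⟨C, D, hDJ, hC, hD, hCD⟩ :=
    ih J hJ fun i hi => hab i (Finset.mem_of_mem_filter i hi)
  have hi₀D : i₀ ∉ D := fun h => (Finset.mem_filter.mp (hDJ h)).2.not_ge (hab i₀ hi₀)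
  refine ⟨insert (b i₀) C, insert i₀ D, Finset.insert_subset hi₀ (hDJ.trans hJ.subset), ?_, ?_, ?_⟩
  · intro i hi
    by_cases hiJ : b i₀ < a i
    · obtain ⟨x, hx, hxi⟩ := hC i (Finset.mem_filter.mpr ⟨hi, hiJ⟩)
      exact ⟨x, Finset.mem_insert_of_mem hx, hxi⟩
    · exact ⟨b i₀, Finset.mem_insert_self _ _, not_lt.mp hiJ, hmin i hi⟩
  · rw [Finset.coe_insert]
    refine hD.insert fun j hj _ => disjoint_left.mpr fun x hx₀ hxj => ?_
    exact (hx₀.2.trans_lt (Finset.mem_filter.mp (hDJ hj)).2).not_ge hxj.1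
  · rw [Finset.card_insert_of_notMem hi₀D]
    exact (Finset.card_insert_le _ _).trans (Nat.succ_le_succ hCD)

section Covers

variable {α : Type*} {H : Set (Set α)}

lemma tau_le_card {C : Finset α} (hC : ∀ e ∈ H, ∃ x ∈ C, x ∈ e) : tau H ≤ C.card :=
  Nat.sInf_le ⟨C, hC, rfl⟩

lemma exists_fractional_cover (hfin : H.Finite) (hne : ∀ e ∈ H, e.Nonempty) :
    ∃ f : α → ℝ, (support f).Finite ∧ (∀ x, 0 ≤ f x) ∧ ∀ e ∈ H, 1 ≤ ∑ᶠ x ∈ e, f x := by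
  have := hfin.to_subtype
  choose p hp using fun e : H => hne e e.2
  have hf : (support ((range p).indicator 1 : α → ℝ)).Finite :=
    (finite_range p).subset support_indicator_subset
  have hf0 : ∀ x, 0 ≤ (range p).indicator (1 : α → ℝ) x := indicator_nonneg fun _ _ => zero_le_one
  refine ⟨(range p).indicator 1, hf, hf0, fun e he => ?_⟩
  calc (1 : ℝ) = (range p).indicator 1 (p ⟨e, he⟩) := by simp
    _ ≤ _ := le_finsum_mem_of_mem hf hf0 (hp ⟨e, he⟩)

lemma le_mul_tauStar (hfin : H.Finite) (hne : ∀ e ∈ H, e.Nonempty) {r c : ℝ} (hc : 0 ≤ c)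
    (h : ∀ f : α → ℝ, (support f).Finite → (∀ x, 0 ≤ f x) → (∀ e ∈ H, 1 ≤ ∑ᶠ x ∈ e, f x) →
      r ≤ c * ∑ᶠ x, f x) :
    r ≤ c * tauStar H := by
  -- `sInf ∅ = 0`, so the infimum defining `tauStar` needs a fractional cover to exist.
  obtain ⟨f, hf, hf0, hcov⟩ := exists_fractional_cover hfin hne
  rw [tauStar, ← smul_eq_mul, ← Real.sInf_smul_of_nonneg hc]
  refine le_csInf ⟨_, smul_mem_smul_set ⟨f, hf, hf0, hcov, rfl⟩⟩ ?_
  rintro _ ⟨_, ⟨g, hg, hg0, hgcov, rfl⟩, rfl⟩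
  exact h g hg hg0 hgcov

end Covers

lemma tau_le_mul_finsum_of_isDInterval {d : ℕ} {H : Set (Set ℝ)} (hfin : H.Finite)
    (hH : ∀ e ∈ H, IsDInterval d e) {f : ℝ → ℝ} (hf : (support f).Finite) (hf0 : ∀ x, 0 ≤ f x)
    (hcov : ∀ e ∈ H, 1 ≤ ∑ᶠ x ∈ e, f x) :
    (tau H : ℝ) ≤ d * ∑ᶠ x, f x := by
  choose! a b hab hsub hheavy using fun e he => (hH e he).exists_heavy_Icc hf hf0 (hcov e he)
  obtain ⟨C, D, hD, hC, hdisj, hCD⟩ := exists_piercing_finset_card_le_disjoint a b hfin.toFinset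
    fun e he => hab e (hfin.mem_toFinset.mp he)
  have hpierce : ∀ e ∈ H, ∃ x ∈ C, x ∈ e := fun e he =>
    let ⟨x, hx, hxe⟩ := hC e (hfin.mem_toFinset.mpr he)
    ⟨x, hx, hsub e he hxe⟩
  calc (tau H : ℝ) ≤ C.card := by exact_mod_cast tau_le_card hpierce
    _ ≤ D.card := by exact_mod_cast hCD
    _ ≤ d * ∑ᶠ x, f x := card_le_mul_finsum_of_pairwiseDisjoint hf hf0 hdisj (Nat.cast_nonneg d)
      fun e he => hheavy e (hfin.mem_toFinset.mp (hD he))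

theorem tau_le_d_mul_tauStar_general (d : ℕ)
    (H : Set (Set ℝ)) (hfin : H.Finite)
    (hH : ∀ e ∈ H, IsDInterval d e ∧ e.Nonempty) :
    (tau H : ℝ) ≤ d * tauStar H :=
  le_mul_tauStar hfin (fun e he => (hH e he).2) (Nat.cast_nonneg d) fun _ hf hf0 hcov =>
    tau_le_mul_finsum_of_isDInterval hfin (fun e he => (hH e he).1) hf hf0 hcov

/-- For a finite hypergraph of `d`-intervals, `τ(H) ≤ d·τ*(H)`. -/
theorem tau_le_d_mul_tauStar (d : ℕ) (hd : 1 ≤ d)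
    (H : Set (Set ℝ)) (hfin : H.Finite)
    (hH : ∀ e ∈ H, IsDInterval d e ∧ e.Nonempty) :
    (tau H : ℝ) ≤ d * tauStar H :=
  tau_le_d_mul_tauStar_general d H hfin hH
end

section
/- Let d ≥ 1, let H be a finite hypergraph of d-intervals, and let w : E(H) → ℕ be a weight system on the edges of H. Then τ_w(H) ≤ d·τ*_w(H). -/
/-- The weighted covering number `τ_w`: the minimum of `∑ₓ g x` over finitely
supported `g : α → ℕ` with `∑_{x ∈ e} g x ≥ w e` for every edge `e`. -/
noncomputable def tauW {α : Type*} (H : Set (Set α)) (w : Set α → ℕ) : ℕ :=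
  sInf {m | ∃ g : α → ℕ, (Function.support g).Finite ∧
    (∀ e ∈ H, w e ≤ ∑ᶠ x ∈ e, g x) ∧ m = ∑ᶠ x, g x}

/-- The fractional weighted covering number `τ*_w`: the infimum of `∑ₓ g x`
over finitely supported nonnegative `g : α → ℝ` with `∑_{x ∈ e} g x ≥ w e`
for every edge `e`. -/
noncomputable def tauStarW {α : Type*} (H : Set (Set α)) (w : Set α → ℕ) : ℝ :=
  sInf {t | ∃ g : α → ℝ, (Function.support g).Finite ∧ (∀ x, 0 ≤ g x) ∧
    (∀ e ∈ H, (w e : ℝ) ≤ ∑ᶠ x ∈ e, g x) ∧ t = ∑ᶠ x, g x}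

/-!
Round a fractional cover `g` along the line: with `G x = ∑_{y ≤ x} g y` and `G x⁻ = ∑_{y < x} g y`,
put `⌊d G x⌋ - ⌊d G x⁻⌋` points at `x`. These telescope, so the integer cover has total weight
`⌊d ∑ g⌋ ≤ d ∑ g`, and it gives every interval `[a, b]` weight at least `⌊d g([a, b])⌋`.
An edge of weight `w` is a union of at most `d` intervals, so one of them carries `g`-weight at
least `w / d`, and the rounded cover gives that interval, hence the edge, weight at least `w`.
If there is no fractional cover there is no integer cover either, and both infima are `0`.
-/

open Finset Function

section Finsum

variable {α M : Type*} [AddCommMonoid M] [PartialOrder M] [IsOrderedAddMonoid M] {f : α → M}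

lemma finsum_mem_nonneg (hf : 0 ≤ f) (e : Set α) : 0 ≤ ∑ᶠ x ∈ e, f x :=
  finsum_nonneg fun x => finsum_nonneg fun _ => hf x

lemma finsum_mem_mono (hf : 0 ≤ f) (hfin : (support f).Finite) {e e' : Set α} (h : e ⊆ e') :
    ∑ᶠ x ∈ e, f x ≤ ∑ᶠ x ∈ e', f x := by
  rw [← finsum_mem_add_sdiff' h (hfin.subset Set.inter_subset_right)]
  exact le_add_of_nonneg_right (finsum_mem_nonneg hf _)

lemma finsum_mem_union_le (hf : 0 ≤ f) (hfin : (support f).Finite) (e e' : Set α) :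
    ∑ᶠ x ∈ e ∪ e', f x ≤ ∑ᶠ x ∈ e, f x + ∑ᶠ x ∈ e', f x := by
  rw [← finsum_mem_union_inter' (hfin.subset Set.inter_subset_right)
    (hfin.subset Set.inter_subset_right)]
  exact le_add_of_nonneg_right (finsum_mem_nonneg hf _)

lemma finsum_mem_iUnion_le {ι : Type*} [Fintype ι] (hf : 0 ≤ f) (hfin : (support f).Finite)
    (I : ι → Set α) : ∑ᶠ x ∈ ⋃ i, I i, f x ≤ ∑ i, ∑ᶠ x ∈ I i, f x := by
  simpa using Finset.apply_union_le_sum (f := fun e => ∑ᶠ x ∈ e, f x) finsum_mem_empty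
    (finsum_mem_union_le hf hfin _ _) (s := I) univ

end Finsum

lemma finsum_mem_eq_sum_filter_of_support_subset {α M : Type*} [AddCommMonoid M] {f : α → M}
    {s : Finset α} (hf : support f ⊆ s) (e : Set α) [DecidablePred (· ∈ e)] :
    ∑ᶠ x ∈ e, f x = ∑ x ∈ s with x ∈ e, f x :=
  finsum_mem_eq_sum_of_subset f (fun x hx => by simpa using ⟨hf hx.2, hx.1⟩)
    (fun x hx => (mem_filter.mp hx).2)

lemma Nat.floor_add_floor_le {R : Type*} [Semiring R] [LinearOrder R] [FloorSemiring R]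
    [IsStrictOrderedRing R] {x y : R} (hx : 0 ≤ x) (hy : 0 ≤ y) :
    ⌊x⌋₊ + ⌊y⌋₊ ≤ ⌊x + y⌋₊ :=
  Nat.le_floor <| by exact_mod_cast _root_.add_le_add (Nat.floor_le hx) (Nat.floor_le hy)

lemma exists_le_mul_of_le_sum {ι : Type*} {t : Finset ι} {d : ℕ} (ht : #t ≤ d) {x : ι → ℝ}
    {w : ℝ} (hw : 0 < w) (hwx : w ≤ ∑ i ∈ t, x i) : ∃ i ∈ t, w ≤ d * x i := by
  have hne : t.Nonempty := by
    by_contra h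
    rw [not_nonempty_iff_eq_empty.mp h, sum_empty] at hwx
    linarith
  refine exists_le_of_sum_le hne ?_
  calc ∑ _ ∈ t, w = #t * w := by rw [sum_const, nsmul_eq_mul]
    _ ≤ d * w := by gcongr
    _ ≤ d * ∑ i ∈ t, x i := by gcongr
    _ = ∑ i ∈ t, d * x i := mul_sum _ _ _

section RoundCover

variable (s : Finset ℝ) (g : ℝ → ℝ) (d : ℕ)

noncomputable def roundCover (x : ℝ) : ℕ :=
  ⌊d * ∑ y ∈ s with y ≤ x, g y⌋₊ - ⌊d * ∑ y ∈ s with y < x, g y⌋₊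

lemma roundCover_eq_zero_of_notMem {x : ℝ} (hx : x ∉ s) : roundCover s g d x = 0 := by
  have : s.filter (· ≤ x) = s.filter (· < x) :=
    filter_congr fun y hy => ⟨fun h => h.lt_of_ne (by rintro rfl; exact hx hy), le_of_lt⟩
  simp [roundCover, this]

lemma support_roundCover_subset : support (roundCover s g d) ⊆ s :=
  fun _ hx => by_contra (hx ∘ roundCover_eq_zero_of_notMem s g d)

variable {s g}

lemma sum_roundCover_of_lowerClosed (hg : ∀ x ∈ s, 0 ≤ g x) {t : Finset ℝ} (hts : t ⊆ s)
    (hlow : ∀ x ∈ t, ∀ y ∈ s, y ≤ x → y ∈ t) :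
    ∑ x ∈ t, roundCover s g d x = ⌊d * ∑ x ∈ t, g x⌋₊ := by
  induction t using Finset.induction_on_max with
  | empty => simp
  | insert m u hlt ih =>
    have hmu : m ∉ u := fun h => lt_irrefl m (hlt m h)
    have hbelow : s.filter (· < m) = u := by
      ext y
      simp only [mem_filter]
      refine ⟨fun ⟨hy, hym⟩ => ?_, fun hy => ⟨hts (mem_insert_of_mem hy), hlt y hy⟩⟩
      exact (mem_insert.mp (hlow m (mem_insert_self m u) y hy hym.le)).resolve_left hym.ne
    have hupto : s.filter (· ≤ m) = insert m u := by
      ext y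
      simp only [mem_filter]
      exact ⟨fun ⟨hy, hym⟩ => hlow m (mem_insert_self m u) y hy hym,
        fun hy => ⟨hts hy, (mem_insert.mp hy).elim le_of_eq (fun h => (hlt y h).le)⟩⟩
    have hus : u ⊆ s := (subset_insert m u).trans hts
    rw [sum_insert hmu, ih hus fun x hx y hy hyx => ?_, roundCover, hbelow, hupto]
    · have : ⌊d * ∑ x ∈ u, g x⌋₊ ≤ ⌊d * ∑ x ∈ insert m u, g x⌋₊ :=
        Nat.floor_le_floor <| mul_le_mul_of_nonneg_left
          (sum_le_sum_of_subset_of_nonneg (subset_insert m u) fun x hx _ => hg x (hts hx))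
          d.cast_nonneg
      omega
    · rw [← hbelow]
      exact mem_filter.mpr ⟨hy, hyx.trans_lt (hlt x hx)⟩

lemma sum_roundCover (hg : ∀ x ∈ s, 0 ≤ g x) :
    ∑ x ∈ s, roundCover s g d x = ⌊d * ∑ x ∈ s, g x⌋₊ :=
  sum_roundCover_of_lowerClosed d hg subset_rfl fun _ _ _ hy _ => hy

lemma floor_le_sum_roundCover_Icc (hg : ∀ x ∈ s, 0 ≤ g x) (a b : ℝ) :
    ⌊d * ∑ x ∈ s with x ∈ Set.Icc a b, g x⌋₊ ≤
      ∑ x ∈ s with x ∈ Set.Icc a b, roundCover s g d x := by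
  have hsplit {M : Type} [AddCommMonoid M] (f : ℝ → M) : ∑ x ∈ s with x ≤ b ∧ x < a, f x +
      ∑ x ∈ s with x ∈ Set.Icc a b, f x = ∑ x ∈ s with x ≤ b, f x := by
    rw [← sum_filter_add_sum_filter_not (s.filter (· ≤ b)) (· < a), filter_filter, filter_filter]
    congr 2
    exact filter_congr fun x _ => by simp [and_comm]
  have hlow (p : ℝ → Prop) [DecidablePred p] (hp : ∀ x y, y ≤ x → p x → p y) :
      ∑ x ∈ s with p x, roundCover s g d x = ⌊d * ∑ x ∈ s with p x, g x⌋₊ :=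
    sum_roundCover_of_lowerClosed d hg (filter_subset _ _) fun x hx y hy hyx =>
      mem_filter.mpr ⟨hy, hp x y hyx (mem_filter.mp hx).2⟩
  have hsum_nonneg (p : ℝ → Prop) [DecidablePred p] : 0 ≤ (d : ℝ) * ∑ x ∈ s with p x, g x :=
    mul_nonneg d.cast_nonneg (sum_nonneg fun x hx => hg x (mem_filter.mp hx).1)
  -- With `P` the weight strictly left of `a`: `⌊d (P + Q)⌋ - ⌊d P⌋ ≥ ⌊d Q⌋`.
  have := hsplit (roundCover s g d)
  rw [hlow (fun x => x ≤ b ∧ x < a) fun x y hyx hx => ⟨hyx.trans hx.1, hyx.trans_lt hx.2⟩,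
    hlow (· ≤ b) fun x y hyx hx => hyx.trans hx, ← hsplit g, mul_add] at this
  have := Nat.floor_add_floor_le (hsum_nonneg fun x => x ≤ b ∧ x < a)
    (hsum_nonneg (· ∈ Set.Icc a b))
  omega

end RoundCover

lemma le_finsum_mem_roundCover_of_isDInterval {s : Finset ℝ} {g : ℝ → ℝ} (d : ℕ) (hg : 0 ≤ g)
    (hgs : support g ⊆ s) {e : Set ℝ} (he : IsDInterval d e) {w : ℕ}
    (hw : (w : ℝ) ≤ ∑ᶠ x ∈ e, g x) : w ≤ ∑ᶠ x ∈ e, roundCover s g d x := by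
  obtain ⟨n, A, B, hnd, -, -, rfl⟩ := he
  rcases w.eq_zero_or_pos with rfl | hw0
  · exact Nat.zero_le _
  obtain ⟨i, -, hi⟩ := exists_le_mul_of_le_sum (t := univ) (by simpa using hnd)
    (by exact_mod_cast hw0) (hw.trans (finsum_mem_iUnion_le hg (s.finite_toSet.subset hgs) _))
  have hrs := support_roundCover_subset s g d
  calc w ≤ ⌊d * ∑ᶠ x ∈ Set.Icc (A i) (B i), g x⌋₊ := Nat.le_floor hi
    _ ≤ ∑ᶠ x ∈ Set.Icc (A i) (B i), roundCover s g d x := by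
        rw [finsum_mem_eq_sum_filter_of_support_subset hgs,
          finsum_mem_eq_sum_filter_of_support_subset hrs]
        exact floor_le_sum_roundCover_Icc d (fun x _ => hg x) _ _
    _ ≤ ∑ᶠ x ∈ ⋃ i, Set.Icc (A i) (B i), roundCover s g d x :=
        finsum_mem_mono (fun _ => Nat.zero_le _) (s.finite_toSet.subset hrs)
          (Set.subset_iUnion (fun i => Set.Icc (A i) (B i)) i)

section CoveringNumbers

variable {α : Type*} {H : Set (Set α)} {w : Set α → ℕ}

lemma tauW_le_finsum {g : α → ℕ} (hfin : (support g).Finite)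
    (hcov : ∀ e ∈ H, w e ≤ ∑ᶠ x ∈ e, g x) : tauW H w ≤ ∑ᶠ x, g x :=
  Nat.sInf_le ⟨g, hfin, hcov, rfl⟩

lemma tauW_le_mul_tauStarW_of_forall {c : ℝ} (hc : 0 ≤ c)
    (h : ∀ g : α → ℝ, (support g).Finite → (∀ x, 0 ≤ g x) →
      (∀ e ∈ H, (w e : ℝ) ≤ ∑ᶠ x ∈ e, g x) → (tauW H w : ℝ) ≤ c * ∑ᶠ x, g x) :
    (tauW H w : ℝ) ≤ c * tauStarW H w := by
  obtain hS | hS := Set.eq_empty_or_nonempty {t | ∃ g : α → ℝ, (support g).Finite ∧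
    (∀ x, 0 ≤ g x) ∧ (∀ e ∈ H, (w e : ℝ) ≤ ∑ᶠ x ∈ e, g x) ∧ t = ∑ᶠ x, g x}
  · suffices tauW H w = 0 by rw [tauStarW, hS, Real.sInf_empty, this]; simp
    refine Nat.sInf_eq_zero.mpr (Or.inr (Set.eq_empty_of_forall_notMem ?_))
    rintro _ ⟨g, hfin, hcov, -⟩
    refine hS.subset ⟨fun x => g x,
      (support_comp_eq (Nat.cast : ℕ → ℝ) Nat.cast_eq_zero g).symm ▸ hfin,
      fun x => Nat.cast_nonneg _, fun e he => ?_, rfl⟩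
    calc (w e : ℝ) ≤ ((∑ᶠ x ∈ e, g x : ℕ) : ℝ) := by exact_mod_cast hcov e he
      _ = ∑ᶠ x ∈ e, (g x : ℝ) :=
        (Nat.castAddMonoidHom ℝ).map_finsum_mem' (hfin.subset Set.inter_subset_right)
  · rw [tauStarW, ← smul_eq_mul, ← Real.sInf_smul_of_nonneg hc]
    refine le_csInf hS.smul_set ?_
    rintro _ ⟨_, ⟨g, hfin, hg, hcov, rfl⟩, rfl⟩
    exact h g hfin hg hcov

end CoveringNumbers

theorem tauW_le_d_mul_tauStarW_general (d : ℕ) (H : Set (Set ℝ))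
    (hH : ∀ e ∈ H, IsDInterval d e ∧ e.Nonempty) (w : Set ℝ → ℕ) :
    (tauW H w : ℝ) ≤ d * tauStarW H w := by
  refine tauW_le_mul_tauStarW_of_forall d.cast_nonneg fun g hgfin hg hcov => ?_
  have hgs : support g ⊆ hgfin.toFinset := by simp
  calc (tauW H w : ℝ) ≤ ∑ᶠ x, roundCover hgfin.toFinset g d x := by
        exact_mod_cast tauW_le_finsum (hgfin.toFinset.finite_toSet.subset
          (support_roundCover_subset _ g d)) fun e he =>
            le_finsum_mem_roundCover_of_isDInterval d hg hgs (hH e he).1 (hcov e he)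
    _ = ⌊d * ∑ᶠ x, g x⌋₊ := by
        rw [finsum_eq_sum_of_support_subset _ (support_roundCover_subset _ g d),
          finsum_eq_sum_of_support_subset _ hgs, sum_roundCover d fun x _ => hg x]
    _ ≤ d * ∑ᶠ x, g x := Nat.floor_le (mul_nonneg d.cast_nonneg (finsum_nonneg hg))

/-- For a finite hypergraph of `d`-intervals with a weight system `w` on its
edges, `τ_w(H) ≤ d·τ*_w(H)`. -/
theorem tauW_le_d_mul_tauStarW (d : ℕ) (hd : 1 ≤ d)
    (H : Set (Set ℝ)) (hfin : H.Finite)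
    (hH : ∀ e ∈ H, IsDInterval d e ∧ e.Nonempty) (w : Set ℝ → ℕ) :
    (tauW H w : ℝ) ≤ d * tauStarW H w :=
  tauW_le_d_mul_tauStarW_general d H hH w
end

section
/- Let d ≥ 1, let H be a finite hypergraph of d-intervals, and let w : E(H) → ℕ be a weight system on the edges of H. Then τ_w(H) ≤ 2d²·ν_w(H). -/
/-- The weighted matching number `ν_w`: the maximum of `∑_{e ∈ M} w e` over
matchings `M` in `H`. -/
noncomputable def nuW {α : Type*} (H : Set (Set α)) (w : Set α → ℕ) : ℕ :=
  sSup {m | ∃ M : Finset (Set α), ↑M ⊆ H ∧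
    (M : Set (Set α)).PairwiseDisjoint id ∧ m = ∑ e ∈ M, w e}

open Finset

open scoped Classical

section Matching

variable {ι α : Type*}

noncomputable def matchingNum (s : Finset ι) (e : ι → Set α) (w : ι → ℕ) : ℕ :=
  (s.powerset.filter fun M : Finset ι => (M : Set ι).PairwiseDisjoint e).sup
    fun M => ∑ i ∈ M, w i

variable {s : Finset ι} {e : ι → Set α} {w : ι → ℕ}

theorem sum_le_matchingNum {M : Finset ι} (hMs : M ⊆ s) (hM : (M : Set ι).PairwiseDisjoint e) :
    ∑ i ∈ M, w i ≤ matchingNum s e w :=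
  le_sup (f := fun M => ∑ i ∈ M, w i) (mem_filter.2 ⟨mem_powerset.2 hMs, hM⟩)

theorem exists_sum_eq_matchingNum (s : Finset ι) (e : ι → Set α) (w : ι → ℕ) :
    ∃ M ⊆ s, (M : Set ι).PairwiseDisjoint e ∧ ∑ i ∈ M, w i = matchingNum s e w := by
  have hne : (s.powerset.filter fun M : Finset ι => (M : Set ι).PairwiseDisjoint e).Nonempty :=
    ⟨∅, by simp⟩
  obtain ⟨M, hM, hsup⟩ := exists_mem_eq_sup _ hne fun M => ∑ i ∈ M, w i
  rw [mem_filter, mem_powerset] at hM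
  exact ⟨M, hM.1, hM.2, hsup.symm⟩

/-- An optimal matching for the lowered weights either meets `S` in an edge of positive weight,
or its positive edges avoid `e i₀` and `i₀` can be added to it. -/
theorem matchingNum_sub_indicator_lt {i₀ : ι} (hi₀ : i₀ ∈ s) (hw : 0 < w i₀) {S : Set ι}
    (hi₀S : i₀ ∈ S) (hS : ∀ i ∈ s, 0 < w i → ¬Disjoint (e i) (e i₀) → i ∈ S) :
    matchingNum s e (w - S.indicator 1 : ι → ℕ) < matchingNum s e w := by
  obtain ⟨M, hMs, hM, hsum⟩ := exists_sum_eq_matchingNum s e (w - S.indicator 1 : ι → ℕ)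
  rw [← hsum]
  have hle : ∀ i, (w - S.indicator 1 : ι → ℕ) i ≤ w i := fun i => Nat.sub_le _ _
  by_cases hhit : ∃ i ∈ M, i ∈ S ∧ 0 < w i
  · obtain ⟨i, hiM, hiS, hwi⟩ := hhit
    refine (sum_lt_sum (fun i _ => hle i) ⟨i, hiM, ?_⟩).trans_le (sum_le_matchingNum hMs hM)
    rw [Pi.sub_apply, Set.indicator_of_mem hiS, Pi.one_apply]
    omega
  push Not at hhit
  set Mpos := M.filter (0 < w ·)
  have hi₀M : i₀ ∉ Mpos := fun h => (hhit i₀ (mem_filter.1 h).1 hi₀S).not_gt hw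
  have hdisj : ((insert i₀ Mpos : Finset ι) : Set ι).PairwiseDisjoint e := by
    rw [coe_insert]
    refine (hM.subset (coe_subset.2 (filter_subset _ _))).insert fun j hj _ => ?_
    obtain ⟨hjM, hwj⟩ := mem_filter.1 hj
    by_contra hmeet
    exact (hhit j hjM (hS j (hMs hjM) hwj fun h => hmeet h.symm)).not_gt hwj
  have hMpos : ∑ i ∈ Mpos, w i = ∑ i ∈ M, w i :=
    sum_filter_of_ne fun i _ h => Nat.pos_of_ne_zero h
  calc ∑ i ∈ M, (w - S.indicator 1 : ι → ℕ) i ≤ ∑ i ∈ M, w i := sum_le_sum fun i _ => hle i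
    _ < ∑ i ∈ insert i₀ Mpos, w i := by rw [sum_insert hi₀M, hMpos]; omega
    _ ≤ matchingNum s e w :=
      sum_le_matchingNum (insert_subset hi₀ ((filter_subset _ _).trans hMs)) hdisj

theorem sum_mul_le_sum_sub_indicator_mul_add (s : Finset ι) (w : ι → ℕ) (S : Set ι)
    {f : ι → ℝ} (hf : 0 ≤ f) :
    ∑ i ∈ s, (w i : ℝ) * f i ≤
      ∑ i ∈ s, ((w - S.indicator 1 : ι → ℕ) i : ℝ) * f i + ∑ i ∈ s with i ∈ S, f i := by
  rw [sum_filter, ← sum_add_distrib]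
  refine sum_le_sum fun i _ => ?_
  by_cases hi : i ∈ S
  · have : (w i : ℝ) ≤ (w i - 1 : ℕ) + 1 := by exact_mod_cast le_tsub_add
    simp only [Pi.sub_apply, Set.indicator_of_mem hi, Pi.one_apply, if_pos hi]
    linarith [mul_le_mul_of_nonneg_right this (hf i)]
  · simp [hi]

theorem matchingNum_le_sum_of_cover (P : Finset α) {c : α → ℝ} (hc : 0 ≤ c)
    (hcover : ∀ i ∈ s, (w i : ℝ) ≤ ∑ p ∈ P with p ∈ e i, c p) :
    (matchingNum s e w : ℝ) ≤ ∑ p ∈ P, c p := by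
  obtain ⟨M, hMs, hM, hsum⟩ := exists_sum_eq_matchingNum s e w
  have hdisj : (M : Set ι).PairwiseDisjoint fun i => P.filter (· ∈ e i) := fun i hi j hj hij =>
    disjoint_filter.2 fun p _ hpi hpj => Set.disjoint_left.1 (hM hi hj hij) hpi hpj
  calc (matchingNum s e w : ℝ) = ∑ i ∈ M, (w i : ℝ) := by rw [← hsum]; push_cast; rfl
    _ ≤ ∑ i ∈ M, ∑ p ∈ P with p ∈ e i, c p := sum_le_sum fun i hi => hcover i (hMs hi)
    _ = ∑ p ∈ M.biUnion fun i => P.filter (· ∈ e i), c p := (sum_biUnion hdisj).symm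
    _ ≤ ∑ p ∈ P, c p :=
      sum_le_sum_of_subset_of_nonneg (biUnion_subset.2 fun _ _ => filter_subset _ _)
        fun p _ _ => hc p

end Matching

section FractionalDuality

theorem quasilinearOn_of_affine {E : Type*} [AddCommGroup E] [Module ℝ E] {X : Set E}
    (hX : Convex ℝ X) {g : E → ℝ}
    (hg : ∀ x y (a b : ℝ), a + b = 1 → g (a • x + b • y) = a * g x + b * g y) :
    QuasilinearOn ℝ X g :=
  ⟨ConvexOn.quasiconvexOn ⟨hX, fun x _ y _ a b _ _ hab => (hg x y a b hab).le⟩,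
    ConcaveOn.quasiconcaveOn ⟨hX, fun x _ y _ a b _ _ hab => (hg x y a b hab).ge⟩⟩

variable {ι α : Type*} (s : Finset ι) (P : Finset α) (e : ι → Set α) (w : ι → ℝ)

noncomputable def coverSurplus (y : ι → ℝ) (c : α → ℝ) : ℝ :=
  ∑ i ∈ s, y i * (∑ p ∈ P with p ∈ e i, c p - w i)

variable {s P e w}

/-- Against a fixed `y`, put the whole budget `B` on a point of maximal `y`-load: the rescaled
`y` is a fractional matching, so its `w`-weight is at most `B` times that load. -/
theorem exists_coverSurplus_nonneg {B : ℝ} (hB0 : 0 ≤ B) (hP : ∀ i ∈ s, ∃ p ∈ P, p ∈ e i)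
    (hB : ∀ f : ι → ℝ, 0 ≤ f → (∀ p ∈ P, ∑ i ∈ s with p ∈ e i, f i ≤ 1) →
      ∑ i ∈ s, w i * f i ≤ B)
    {y : ι → ℝ} (hy : 0 ≤ y) :
    ∃ c ∈ Set.Icc 0 (fun _ => B) ∩ {c | ∑ p ∈ P, c p ≤ B}, 0 ≤ coverSurplus s P e w y c := by
  set L : α → ℝ := fun p => ∑ i ∈ s with p ∈ e i, y i
  by_cases hpos : ∃ p ∈ P, 0 < L p
  · obtain ⟨p, hp, hLp⟩ := hpos
    obtain ⟨p₀, hp₀, hmax⟩ := P.exists_max_image L ⟨p, hp⟩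
    have hL₀ : 0 < L p₀ := hLp.trans_le (hmax p hp)
    have hpack := hB (fun i => y i / L p₀) (fun i => div_nonneg (hy i) hL₀.le) fun p hp => by
      rw [← sum_div]
      exact div_le_one_of_le₀ (hmax p hp) hL₀.le
    simp only [mul_div_assoc', ← sum_div, div_le_iff₀ hL₀] at hpack
    have hsingle : ∀ i, ∑ p ∈ P with p ∈ e i, Pi.single p₀ B p = if p₀ ∈ e i then B else 0 :=
      fun i => by simp [Pi.single_apply, hp₀]
    have hsurplus : coverSurplus s P e w y (Pi.single p₀ B) = B * L p₀ - ∑ i ∈ s, w i * y i := by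
      simp only [coverSurplus, hsingle, mul_sub, sum_sub_distrib, mul_ite, mul_zero]
      simp only [L, mul_sum, sum_filter, mul_ite, mul_zero, mul_comm]
    refine ⟨Pi.single p₀ B, ⟨⟨Pi.single_nonneg.2 hB0, fun p => ?_⟩, ?_⟩, by linarith⟩
    · by_cases h : p = p₀ <;> simp [h, hB0]
    · simp [Pi.single_apply, hp₀]
  push Not at hpos
  refine ⟨0, ⟨⟨le_rfl, fun _ => hB0⟩, by simp [hB0]⟩, (sum_eq_zero fun i hi => ?_).ge⟩
  obtain ⟨p, hp, hpi⟩ := hP i hi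
  have : y i ≤ L p := single_le_sum (fun j _ => hy j) (mem_filter.2 ⟨hi, hpi⟩)
  simp [le_antisymm (this.trans (hpos p hp)) (hy i)]

/-- Sion's minimax theorem for `coverSurplus` on `[0, 1]^ι × Y`: as every `y` has a response with
nonnegative surplus, a saddle point `(a, b)` gives a cover `b` whose surplus is nonnegative against
every `y`, in particular against the indicator of each edge. -/
theorem exists_fractionalCover_le_of_forall_fractionalMatching_le (B : ℝ)
    (hP : ∀ i ∈ s, ∃ p ∈ P, p ∈ e i)
    (hB : ∀ f : ι → ℝ, 0 ≤ f → (∀ p ∈ P, ∑ i ∈ s with p ∈ e i, f i ≤ 1) →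
      ∑ i ∈ s, w i * f i ≤ B) :
    ∃ c : α → ℝ, 0 ≤ c ∧ (∀ i ∈ s, w i ≤ ∑ p ∈ P with p ∈ e i, c p) ∧ ∑ p ∈ P, c p ≤ B := by
  have hB0 : 0 ≤ B := by simpa using hB 0 le_rfl (by simp)
  set Y : Set (α → ℝ) := Set.Icc 0 (fun _ => B) ∩ {c | ∑ p ∈ P, c p ≤ B}
  have hY : Convex ℝ Y := (convex_Icc _ _).inter (convex_halfSpace_le
    ⟨fun c₁ c₂ => by simp [sum_add_distrib], fun a c => by simp [mul_sum]⟩ B)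
  have hYcpt : IsCompact Y :=
    isCompact_Icc.inter_right (isClosed_le (by fun_prop) continuous_const)
  obtain ⟨a, ha, b, hb, hsaddle⟩ := Sion.exists_isSaddlePointOn (f := coverSurplus s P e w)
    ⟨0, Set.left_mem_Icc.2 zero_le_one⟩ (convex_Icc 0 1) isCompact_Icc
    (fun c _ => (by unfold coverSurplus; fun_prop : Continuous _).lowerSemicontinuous
      |>.lowerSemicontinuousOn _)
    (fun c _ => (quasilinearOn_of_affine (convex_Icc 0 1) fun y₁ y₂ a b hab => by
      simp only [coverSurplus, Pi.add_apply, Pi.smul_apply, smul_eq_mul, mul_sum,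
        ← sum_add_distrib]
      exact sum_congr rfl fun i _ => by ring).1)
    hY ⟨0, ⟨le_rfl, fun _ => hB0⟩, by simp [hB0]⟩ hYcpt
    (fun y _ => (by unfold coverSurplus; fun_prop : Continuous _).upperSemicontinuous
      |>.upperSemicontinuousOn _)
    (fun y _ => (quasilinearOn_of_affine hY fun c₁ c₂ a b hab => by
      simp only [coverSurplus, Pi.add_apply, Pi.smul_apply, smul_eq_mul, mul_sum,
        ← sum_add_distrib]
      exact sum_congr rfl fun i _ => by
        rw [sum_add_distrib, ← mul_sum, ← mul_sum]
        linear_combination (y i * w i) * hab).2)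
  refine ⟨b, hb.1.1, fun i hi => ?_, hb.2⟩
  obtain ⟨c, hc, hsurplus⟩ := exists_coverSurplus_nonneg hB0 hP hB ha.1
  have h := hsurplus.trans (hsaddle (Pi.single i 1) ⟨Pi.single_nonneg.2 zero_le_one,
    fun j => by by_cases h : j = i <;> simp [h]⟩ c hc)
  simpa [coverSurplus, Pi.single_apply, hi] using h

end FractionalDuality

theorem exists_le_mul_sum_filter {β α : Type*} {C : Finset β} (t : β → Set α) (hC : C.Nonempty)
    {d : ℕ} (hCd : #C ≤ d) (P : Finset α) {c : α → ℝ} (hc : 0 ≤ c) {a : ℝ} (ha : 0 ≤ a)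
    (h : a ≤ ∑ p ∈ P with p ∈ ⋃ J ∈ C, t J, c p) :
    ∃ J ∈ C, a ≤ d * ∑ p ∈ P with p ∈ t J, c p := by
  have hunion : ∑ p ∈ P with p ∈ ⋃ J ∈ C, t J, c p ≤ ∑ J ∈ C, ∑ p ∈ P with p ∈ t J, c p :=
    calc ∑ p ∈ P with p ∈ ⋃ J ∈ C, t J, c p
        ≤ ∑ p ∈ P with p ∈ ⋃ J ∈ C, t J, ∑ J ∈ C with p ∈ t J, c p := sum_le_sum fun p hp => by
          obtain ⟨J, hJ, hpJ⟩ := Set.mem_iUnion₂.1 (mem_filter.1 hp).2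
          exact single_le_sum (f := fun _ => c p) (fun _ _ => hc p) (mem_filter.2 ⟨hJ, hpJ⟩)
      _ ≤ ∑ p ∈ P, ∑ J ∈ C with p ∈ t J, c p :=
          sum_le_sum_of_subset_of_nonneg (filter_subset _ _) fun p _ _ =>
            sum_nonneg fun _ _ => hc p
      _ = ∑ J ∈ C, ∑ p ∈ P with p ∈ t J, c p := by
          simp only [sum_filter]
          exact sum_comm
  refine exists_le_of_sum_le hC ?_
  calc ∑ _ ∈ C, a = #C * a := by rw [sum_const, nsmul_eq_mul]
    _ ≤ d * a := mul_le_mul_of_nonneg_right (by exact_mod_cast hCd) ha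
    _ ≤ d * ∑ J ∈ C, ∑ p ∈ P with p ∈ t J, c p :=
        mul_le_mul_of_nonneg_left (h.trans hunion) (Nat.cast_nonneg d)
    _ = ∑ J ∈ C, d * ∑ p ∈ P with p ∈ t J, c p := mul_sum _ _ _

namespace NonemptyInterval

/-- Take the positive-weight interval with the leftmost right endpoint `b`: every positive-weight
interval meeting it contains `b`, so one point at `b` pays for lowering all their weights. -/
theorem exists_multiset_cover_card_le_matchingNum {ι : Type*} (s : Finset ι)
    (I : ι → NonemptyInterval ℝ) (w : ι → ℕ) :
    ∃ T : Multiset ℝ, (∀ i ∈ s, w i ≤ Multiset.card (T.filter (· ∈ I i))) ∧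
      Multiset.card T ≤ matchingNum s (fun i => (I i : Set ℝ)) w := by
  obtain ⟨n, hn⟩ : ∃ n, ∑ i ∈ s, w i = n := ⟨_, rfl⟩
  induction n using Nat.strong_induction_on generalizing w with
  | _ n ih =>
  by_cases hpos : ∃ i ∈ s, 0 < w i
  swap
  · push Not at hpos
    exact ⟨0, fun i hi => by simpa using hpos i hi, by simp⟩
  obtain ⟨i, hi, hwi⟩ := hpos
  obtain ⟨i₀, hi₀, hmin⟩ := (s.filter (0 < w ·)).exists_min_image (fun i => (I i).snd)
    ⟨i, mem_filter.2 ⟨hi, hwi⟩⟩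
  obtain ⟨hi₀s, hwi₀⟩ := mem_filter.1 hi₀
  set b := (I i₀).snd
  set S : Set ι := {i | b ∈ I i}
  have hb : b ∈ I i₀ := mem_def.2 ⟨(I i₀).fst_le_snd, le_rfl⟩
  have hS : ∀ i ∈ s, 0 < w i → ¬Disjoint (I i : Set ℝ) (I i₀) → i ∈ S := by
    intro i hi hwi hmeet
    obtain ⟨x, hxi, hxi₀⟩ := Set.not_disjoint_iff.1 hmeet
    rw [SetLike.mem_coe, mem_def] at hxi hxi₀
    exact mem_def.2 ⟨hxi.1.trans hxi₀.2, hmin i (mem_filter.2 ⟨hi, hwi⟩)⟩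
  have hlt := matchingNum_sub_indicator_lt hi₀s hwi₀ hb hS
  have hsum : ∑ i ∈ s, (w - S.indicator 1 : ι → ℕ) i < n := hn ▸ sum_lt_sum
    (fun i _ => Nat.sub_le _ _) ⟨i₀, hi₀s, by simp [S, hb]; omega⟩
  obtain ⟨T, hT, hcard⟩ := ih _ hsum _ rfl
  refine ⟨b ::ₘ T, fun i hi => ?_, ?_⟩
  · have := hT i hi
    rw [Multiset.filter_cons]
    split_ifs with h <;> simp [S, h] at this ⊢ <;> omega
  · rw [Multiset.card_cons]
    omega

noncomputable def endpointCount (J : NonemptyInterval ℝ) (t : Set ℝ) : ℝ :=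
  (if J.fst ∈ t then 1 else 0) + (if J.snd ∈ t then 1 else 0)

theorem endpointCount_nonneg (J : NonemptyInterval ℝ) (t : Set ℝ) : 0 ≤ J.endpointCount t := by
  unfold endpointCount
  split_ifs <;> norm_num

theorem endpointCount_mono (J : NonemptyInterval ℝ) {t t' : Set ℝ} (h : t ⊆ t') :
    J.endpointCount t ≤ J.endpointCount t' := by
  unfold endpointCount
  split_ifs <;> grind

/-- Of two intersecting intervals, either one contains both endpoints of the other, or each
contains one endpoint of the other. -/
theorem two_le_endpointCount_add {J K : NonemptyInterval ℝ} {x : ℝ} (hJ : x ∈ J) (hK : x ∈ K) :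
    2 ≤ J.endpointCount K + K.endpointCount J := by
  rw [mem_def] at hJ hK
  have := J.fst_le_snd
  have := K.fst_le_snd
  unfold endpointCount
  simp only [coe_def, Set.mem_Icc]
  split_ifs <;> grind

end NonemptyInterval

structure IsDIntervalDecomp (d : ℕ) (C : Finset (NonemptyInterval ℝ)) (e : Set ℝ) : Prop where
  nonempty : C.Nonempty
  card_le : #C ≤ d
  eq_biUnion : e = ⋃ J ∈ C, (J : Set ℝ)

namespace IsDIntervalDecomp

variable {d : ℕ} {C : Finset (NonemptyInterval ℝ)} {e : Set ℝ}

theorem coe_subset (h : IsDIntervalDecomp d C e) {J : NonemptyInterval ℝ} (hJ : J ∈ C) :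
    (J : Set ℝ) ⊆ e :=
  h.eq_biUnion ▸ Set.subset_biUnion_of_mem (u := fun J : NonemptyInterval ℝ => (J : Set ℝ)) hJ

theorem exists_mem (h : IsDIntervalDecomp d C e) {x : ℝ} (hx : x ∈ e) : ∃ J ∈ C, x ∈ J := by
  rw [h.eq_biUnion] at hx
  simpa using hx

theorem set_nonempty (h : IsDIntervalDecomp d C e) : e.Nonempty :=
  let ⟨J, hJ⟩ := h.nonempty
  ⟨J.fst, h.coe_subset hJ (NonemptyInterval.mem_def.2 ⟨le_rfl, J.fst_le_snd⟩)⟩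

end IsDIntervalDecomp

theorem IsDInterval.exists_isDIntervalDecomp {d : ℕ} {e : Set ℝ} (h : IsDInterval d e)
    (he : e.Nonempty) : ∃ C, IsDIntervalDecomp d C e := by
  obtain ⟨n, a, b, hn, hab, -, rfl⟩ := h
  set C := univ.image fun i => NonemptyInterval.mk (a i, b i) (hab i)
  have hC : ⋃ i, Set.Icc (a i) (b i) = ⋃ J ∈ C, (J : Set ℝ) := by
    simp [C, NonemptyInterval.coe_def]
  refine ⟨C, ?_, card_image_le.trans (by simpa using hn), hC⟩
  obtain ⟨x, hx⟩ := he
  obtain ⟨i, -⟩ := Set.mem_iUnion.1 hx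
  exact ⟨_, mem_image_of_mem _ (mem_univ i)⟩

noncomputable def endpoints (E : Finset (Set ℝ)) (C : Set ℝ → Finset (NonemptyInterval ℝ)) :
    Finset ℝ :=
  E.biUnion fun e => (C e).biUnion fun J => {J.fst, J.snd}

section DIntervalFamily

variable {d : ℕ} {E : Finset (Set ℝ)} {C : Set ℝ → Finset (NonemptyInterval ℝ)}

theorem fst_mem_endpoints {e : Set ℝ} (he : e ∈ E) {J : NonemptyInterval ℝ} (hJ : J ∈ C e) :
    J.fst ∈ endpoints E C :=
  mem_biUnion.2 ⟨e, he, mem_biUnion.2 ⟨J, hJ, by simp⟩⟩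

theorem snd_mem_endpoints {e : Set ℝ} (he : e ∈ E) {J : NonemptyInterval ℝ} (hJ : J ∈ C e) :
    J.snd ∈ endpoints E C :=
  mem_biUnion.2 ⟨e, he, mem_biUnion.2 ⟨J, hJ, by simp⟩⟩

theorem two_le_sum_endpointCount_add {d' : ℕ} {C C' : Finset (NonemptyInterval ℝ)}
    {e e' : Set ℝ} (hC : IsDIntervalDecomp d C e) (hC' : IsDIntervalDecomp d' C' e')
    (h : ¬Disjoint e e') :
    2 ≤ ∑ J ∈ C, J.endpointCount e' + ∑ K ∈ C', K.endpointCount e := by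
  obtain ⟨x, hxe, hxe'⟩ := Set.not_disjoint_iff.1 h
  obtain ⟨J, hJ, hxJ⟩ := hC.exists_mem hxe
  obtain ⟨K, hK, hxK⟩ := hC'.exists_mem hxe'
  calc (2 : ℝ) ≤ J.endpointCount K + K.endpointCount J :=
        NonemptyInterval.two_le_endpointCount_add hxJ hxK
    _ ≤ J.endpointCount e' + K.endpointCount e := add_le_add
        (J.endpointCount_mono (hC'.coe_subset hK)) (K.endpointCount_mono (hC.coe_subset hJ))
    _ ≤ _ := add_le_add
        (single_le_sum (fun J _ => NonemptyInterval.endpointCount_nonneg J e') hJ)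
        (single_le_sum (fun K _ => NonemptyInterval.endpointCount_nonneg K e) hK)

theorem sum_mul_sum_endpointCount_le {f : Set ℝ → ℝ}
    (hf : ∀ p ∈ endpoints E C, ∑ e ∈ E with p ∈ e, f e ≤ 1) {e : Set ℝ} (he : e ∈ E)
    (hCe : #(C e) ≤ d) :
    ∑ e' ∈ E, f e' * ∑ J ∈ C e, J.endpointCount e' ≤ 2 * d :=
  calc ∑ e' ∈ E, f e' * ∑ J ∈ C e, J.endpointCount e'
      = ∑ J ∈ C e, ((∑ e' ∈ E with J.fst ∈ e', f e') + ∑ e' ∈ E with J.snd ∈ e', f e') := by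
        simp only [NonemptyInterval.endpointCount, mul_sum, mul_add, mul_ite, mul_one, mul_zero,
          sum_filter, ← sum_add_distrib]
        exact sum_comm
    _ ≤ ∑ J ∈ C e, (1 + 1 : ℝ) := sum_le_sum fun J hJ =>
        add_le_add (hf _ (fst_mem_endpoints he hJ)) (hf _ (snd_mem_endpoints he hJ))
    _ ≤ 2 * d := by
        rw [sum_const, nsmul_eq_mul]
        have : (#(C e) : ℝ) ≤ d := by exact_mod_cast hCe
        linarith

/-- Each intersecting pair `(e, e')` is charged to the endpoints that one edge has inside the
other; the endpoints of a single edge carry load at most `2d` in total. -/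
theorem sum_mul_sum_not_disjoint_le (hE : ∀ e ∈ E, IsDIntervalDecomp d (C e) e)
    {f : Set ℝ → ℝ} (hf0 : 0 ≤ f) (hf : ∀ p ∈ endpoints E C, ∑ e ∈ E with p ∈ e, f e ≤ 1) :
    ∑ e ∈ E, f e * ∑ e' ∈ E with ¬Disjoint e' e, f e' ≤ ∑ e ∈ E, f e * (2 * d) := by
  set N : Set ℝ → Set ℝ → ℝ := fun e e' => ∑ J ∈ C e, J.endpointCount e'
  have hmeet : ∀ e ∈ E, ∀ e' ∈ E, 2 * (if ¬Disjoint e' e then f e' else 0) ≤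
      f e' * (N e e' + N e' e) := fun e he e' he' => by
    split_ifs with h
    · have : 0 ≤ N e e' + N e' e := add_nonneg
        (sum_nonneg fun J _ => NonemptyInterval.endpointCount_nonneg J e')
        (sum_nonneg fun J _ => NonemptyInterval.endpointCount_nonneg J e)
      simpa using mul_nonneg (hf0 e') this
    · have : 2 ≤ N e e' + N e' e :=
        two_le_sum_endpointCount_add (hE e he) (hE e' he') fun h' => h h'.symm
      linarith [mul_le_mul_of_nonneg_left this (hf0 e')]
  have hswap : ∑ e ∈ E, f e * ∑ e' ∈ E, f e' * N e' e =
      ∑ e ∈ E, f e * ∑ e' ∈ E, f e' * N e e' := by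
    simp only [mul_sum]
    rw [sum_comm]
    exact sum_congr rfl fun _ _ => sum_congr rfl fun _ _ => mul_left_comm _ _ _
  have hload : ∀ e ∈ E, f e * ∑ e' ∈ E, f e' * N e e' ≤ f e * (2 * d) := fun e he =>
    mul_le_mul_of_nonneg_left (sum_mul_sum_endpointCount_le hf he (hE e he).card_le) (hf0 e)
  suffices 2 * ∑ e ∈ E, f e * ∑ e' ∈ E with ¬Disjoint e' e, f e' ≤
      2 * ∑ e ∈ E, f e * (2 * d) by linarith
  calc 2 * ∑ e ∈ E, f e * ∑ e' ∈ E with ¬Disjoint e' e, f e'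
        = ∑ e ∈ E, f e * ∑ e' ∈ E, 2 * (if ¬Disjoint e' e then f e' else 0) := by
          simp only [sum_filter, mul_sum]
          ring_nf
      _ ≤ ∑ e ∈ E, f e * ∑ e' ∈ E, f e' * (N e e' + N e' e) :=
          sum_le_sum fun e he => mul_le_mul_of_nonneg_left
            (sum_le_sum fun e' he' => hmeet e he e' he') (hf0 e)
      _ = 2 * ∑ e ∈ E, f e * ∑ e' ∈ E, f e' * N e e' := by
          simp only [mul_add, sum_add_distrib, hswap]
          ring
      _ ≤ 2 * ∑ e ∈ E, f e * (2 * d) := by linarith [sum_le_sum hload]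

theorem exists_sum_not_disjoint_le (hE : ∀ e ∈ E, IsDIntervalDecomp d (C e) e) {f : Set ℝ → ℝ}
    (hf0 : 0 ≤ f) (hf : ∀ p ∈ endpoints E C, ∑ e ∈ E with p ∈ e, f e ≤ 1)
    (hpos : ∃ e ∈ E, 0 < f e) :
    ∃ e₀ ∈ E, 0 < f e₀ ∧ ∑ e ∈ E with ¬Disjoint e e₀, f e ≤ 2 * d := by
  have hsupp : ∀ g : Set ℝ → ℝ, ∑ e ∈ E with 0 < f e, f e * g e = ∑ e ∈ E, f e * g e :=
    fun g => sum_filter_of_ne fun e _ h => (hf0 e).lt_of_ne' (left_ne_zero_of_mul h)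
  obtain ⟨e₀, he₀, hle⟩ := exists_le_of_sum_le (s := E.filter (0 < f ·))
    (f := fun e₀ => f e₀ * ∑ e ∈ E with ¬Disjoint e e₀, f e) (g := fun e => f e * (2 * d))
    (let ⟨e, he, hfe⟩ := hpos; ⟨e, mem_filter.2 ⟨he, hfe⟩⟩)
    (by rw [hsupp, hsupp fun _ => 2 * d]; exact sum_mul_sum_not_disjoint_le hE hf0 hf)
  obtain ⟨he₀E, hfe₀⟩ := mem_filter.1 he₀
  exact ⟨e₀, he₀E, hfe₀, le_of_mul_le_mul_left hle hfe₀⟩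

theorem sum_mul_le_two_mul_matchingNum (hE : ∀ e ∈ E, IsDIntervalDecomp d (C e) e)
    (w : Set ℝ → ℕ) {f : Set ℝ → ℝ} (hf0 : 0 ≤ f)
    (hf : ∀ p ∈ endpoints E C, ∑ e ∈ E with p ∈ e, f e ≤ 1) :
    ∑ e ∈ E, w e * f e ≤ 2 * d * matchingNum E id w := by
  obtain ⟨n, hn⟩ : ∃ n, ∑ e ∈ E, w e = n := ⟨_, rfl⟩
  induction n using Nat.strong_induction_on generalizing w f with
  | _ n ih =>
  set f' : Set ℝ → ℝ := fun e => if 0 < w e then f e else 0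
  have hf'0 : 0 ≤ f' := fun e => by
    simp only [f']
    split_ifs
    exacts [hf0 e, le_rfl]
  have hf' : ∀ p ∈ endpoints E C, ∑ e ∈ E with p ∈ e, f' e ≤ 1 := fun p hp =>
    (sum_le_sum fun e _ => by simp only [f']; split_ifs; exacts [le_rfl, hf0 e]).trans (hf p hp)
  have hwf : ∑ e ∈ E, w e * f e = ∑ e ∈ E, w e * f' e := sum_congr rfl fun e _ => by
    by_cases h : 0 < w e
    · simp [f', h]
    · simp [Nat.eq_zero_of_not_pos h]
  rw [hwf]
  by_cases hpos : ∃ e ∈ E, 0 < f' e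
  swap
  · push Not at hpos
    rw [sum_eq_zero fun e he => by rw [le_antisymm (hpos e he) (hf'0 e), mul_zero]]
    positivity
  obtain ⟨e₀, he₀, hfe₀, hmeet⟩ := exists_sum_not_disjoint_le hE hf'0 hf' hpos
  have hwe₀ : 0 < w e₀ := by
    by_contra h
    simp [f', h] at hfe₀
  set S : Set (Set ℝ) := {e | ¬Disjoint e e₀}
  have he₀S : e₀ ∈ S := by
    simpa [S, Set.not_disjoint_iff_nonempty_inter] using (hE e₀ he₀).set_nonempty
  set w' : Set ℝ → ℕ := w - S.indicator 1
  have hlt : matchingNum E id w' < matchingNum E id w :=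
    matchingNum_sub_indicator_lt he₀ hwe₀ he₀S fun e _ _ h => h
  have hsum : ∑ e ∈ E, w' e < n := hn ▸ sum_lt_sum (fun e _ => Nat.sub_le _ _)
    ⟨e₀, he₀, by simp [w', he₀S]; omega⟩
  calc ∑ e ∈ E, (w e : ℝ) * f' e
      ≤ ∑ e ∈ E, (w' e : ℝ) * f' e + ∑ e ∈ E with e ∈ S, f' e :=
        by convert sum_mul_le_sum_sub_indicator_mul_add E w S hf'0
    _ ≤ 2 * d * matchingNum E id w' + 2 * d := add_le_add (ih _ hsum w' hf'0 hf' rfl) hmeet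
    _ ≤ 2 * d * matchingNum E id w := by
        have : (matchingNum E id w' : ℝ) + 1 ≤ matchingNum E id w := by exact_mod_cast hlt
        nlinarith

theorem exists_multiset_cover_card_le_two_mul_sq_mul_matchingNum
    (hE : ∀ e ∈ E, IsDIntervalDecomp d (C e) e) (w : Set ℝ → ℕ) :
    ∃ T : Multiset ℝ, (∀ e ∈ E, w e ≤ Multiset.card (T.filter (· ∈ e))) ∧
      Multiset.card T ≤ 2 * d ^ 2 * matchingNum E id w := by
  set P := endpoints E C
  obtain ⟨c, hc0, hcover, htotal⟩ := exists_fractionalCover_le_of_forall_fractionalMatching_le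
    (s := E) (P := P) (e := id) (w := fun e => (w e : ℝ)) (2 * d * matchingNum E id w)
    (fun e he => let ⟨J, hJ⟩ := (hE e he).nonempty
      ⟨J.fst, fst_mem_endpoints he hJ,
        (hE e he).coe_subset hJ (NonemptyInterval.mem_def.2 ⟨le_rfl, J.fst_le_snd⟩)⟩)
    (fun f hf0 hf => sum_mul_le_two_mul_matchingNum hE w hf0 hf)
  have hpick : ∀ e ∈ E, ∃ J ∈ C e, (w e : ℝ) ≤ d * ∑ p ∈ P with p ∈ (J : Set ℝ), c p :=
    fun e he => exists_le_mul_sum_filter (fun J : NonemptyInterval ℝ => (J : Set ℝ))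
      (hE e he).nonempty (hE e he).card_le P hc0 (Nat.cast_nonneg _)
      ((hE e he).eq_biUnion ▸ hcover e he)
  choose! I hIC hI using hpick
  obtain ⟨T, hT, hcard⟩ := NonemptyInterval.exists_multiset_cover_card_le_matchingNum E I w
  refine ⟨T, fun e he => (hT e he).trans (Multiset.card_le_card
    (Multiset.monotone_filter_right _ fun x hx => (hE e he).coe_subset (hIC e he) hx)),
    hcard.trans ?_⟩
  have hνI : (matchingNum E (fun e => (I e : Set ℝ)) w : ℝ) ≤ d * ∑ p ∈ P, c p := by
    rw [mul_sum]
    exact matchingNum_le_sum_of_cover P (fun p => mul_nonneg (Nat.cast_nonneg d) (hc0 p))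
      fun e he => by rw [← mul_sum]; exact hI e he
  have : (matchingNum E (fun e => (I e : Set ℝ)) w : ℝ) ≤ 2 * d ^ 2 * matchingNum E id w := by
    nlinarith [Nat.cast_nonneg (α := ℝ) d]
  exact_mod_cast this

end DIntervalFamily

theorem Multiset.finsum_count_eq_card {α : Type*} (T : Multiset α) :
    ∑ᶠ x, T.count x = Multiset.card T := by
  rw [finsum_eq_sum_of_support_subset (s := T.toFinset) _ fun x hx =>
    Multiset.mem_toFinset.2 (Multiset.count_ne_zero.1 hx), Multiset.toFinset_sum_count_eq]

theorem Multiset.finsum_mem_count_eq_card_filter {α : Type*} (T : Multiset α) (t : Set α) :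
    ∑ᶠ x ∈ t, T.count x = Multiset.card (T.filter (· ∈ t)) := by
  rw [finsum_mem_def, ← Multiset.finsum_count_eq_card]
  congr 1 with x
  rw [Multiset.count_filter, Set.indicator_apply]

theorem tauW_le_card {α : Type*} {H : Set (Set α)} {w : Set α → ℕ} (T : Multiset α)
    (hT : ∀ e ∈ H, w e ≤ Multiset.card (T.filter (· ∈ e))) : tauW H w ≤ Multiset.card T := by
  refine Nat.sInf_le ⟨fun x => T.count x, (T.toFinset.finite_toSet).subset fun x hx => ?_,
    fun e he => (T.finsum_mem_count_eq_card_filter e).symm ▸ hT e he, T.finsum_count_eq_card.symm⟩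
  simpa using hx

theorem matchingNum_le_nuW {α : Type*} {H : Set (Set α)} (hH : H.Finite) {E : Finset (Set α)}
    (hE : ↑E ⊆ H) (w : Set α → ℕ) : matchingNum E id w ≤ nuW H w := by
  obtain ⟨M, hME, hM, hsum⟩ := exists_sum_eq_matchingNum E id w
  refine hsum ▸ le_csSup ⟨∑ e ∈ hH.toFinset, w e, ?_⟩ ⟨M, (coe_subset.2 hME).trans hE, hM, rfl⟩
  rintro _ ⟨M', hM'H, -, rfl⟩
  exact sum_le_sum_of_subset fun e he => hH.mem_toFinset.2 (hM'H he)

theorem tauW_le_two_d_sq_mul_nuW_general (d : ℕ)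
    (H : Set (Set ℝ)) (hfin : H.Finite)
    (hH : ∀ e ∈ H, IsDInterval d e ∧ e.Nonempty) (w : Set ℝ → ℕ) :
    tauW H w ≤ 2 * d ^ 2 * nuW H w := by
  choose! C hC using fun e he => (hH e he).1.exists_isDIntervalDecomp (hH e he).2
  obtain ⟨T, hT, hcard⟩ := exists_multiset_cover_card_le_two_mul_sq_mul_matchingNum
    (E := hfin.toFinset) (fun e he => hC e (hfin.mem_toFinset.1 he)) w
  calc tauW H w ≤ Multiset.card T := tauW_le_card T fun e he => hT e (hfin.mem_toFinset.2 he)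
    _ ≤ 2 * d ^ 2 * matchingNum hfin.toFinset id w := hcard
    _ ≤ 2 * d ^ 2 * nuW H w := Nat.mul_le_mul_left _ (matchingNum_le_nuW hfin (by simp) w)

/-- For a finite hypergraph of `d`-intervals with a weight system `w` on its
edges, `τ_w(H) ≤ 2d²·ν_w(H)`. -/
theorem tauW_le_two_d_sq_mul_nuW (d : ℕ) (hd : 1 ≤ d)
    (H : Set (Set ℝ)) (hfin : H.Finite)
    (hH : ∀ e ∈ H, IsDInterval d e ∧ e.Nonempty) (w : Set ℝ → ℕ) :
    tauW H w ≤ 2 * d ^ 2 * nuW H w :=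
  tauW_le_two_d_sq_mul_nuW_general d H hfin hH w
end

section
/- Let d ≥ 1 and n ≥ 1 be integers, and let H be the family of all separated d-intervals e contained in the union [0,1]^{∪d} of d disjoint copies of the unit interval whose total length |e| (the sum of the lengths of its components) exceeds 1/n. Then every set of points meeting all members of H has at least nd² − d points; that is, τ(H) ≥ nd² − d. -/
open MeasureTheory

/-- A separated `d`-interval inside `d` disjoint copies of the unit interval,
modelled as a subset of `Fin d × ℝ`: on the `j`-th copy it is a (possibly
empty) closed subinterval of `[0,1]`.  `SepUnitDInterval d S e` says that `e`
is determined by the family of components `S`. -/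
def SepUnitDInterval (d : ℕ) (S : Fin d → Set ℝ) (e : Set (Fin d × ℝ)) : Prop :=
  (∀ j, S j ⊆ Set.Icc (0 : ℝ) 1) ∧
  (∀ j, S j = ∅ ∨ ∃ a b : ℝ, a ≤ b ∧ S j = Set.Icc a b) ∧
  e = {p : Fin d × ℝ | p.2 ∈ S p.1}

/-!
On the `j`-th copy the `m_j` points of a cover cut `[0,1]` into `m_j + 1` pieces of length
`1/(m_j+1)`, one of which contains none of them. Closed intervals of slightly smaller length in
these pieces form a separated `d`-interval missed by the cover, so `∑ⱼ 1/(m_j+1) ≤ 1/n`, and then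
Cauchy–Schwarz gives `d² ≤ (∑ⱼ (m_j+1)) (∑ⱼ 1/(m_j+1)) ≤ (|C| + d)/n`.
-/

open Finset

lemma exists_Ico_div_forall_notMem (F : Finset ℝ) :
    ∃ k ≤ #F, ∀ x ∈ F, x ∉ Set.Ico (k / (#F + 1 : ℝ)) ((k + 1) / (#F + 1)) := by
  set M : ℝ := #F + 1
  have hM : 0 < M := by positivity
  -- pigeonhole: the `#F` values `⌊x M⌋₊` miss one of `0, …, #F`
  obtain ⟨k, hk, hkF⟩ := exists_mem_notMem_of_card_lt_card
    (s := F.image fun x => ⌊x * M⌋₊) (t := range (#F + 1)) (card_image_le.trans_lt (by simp))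
  refine ⟨k, Nat.lt_succ_iff.mp (mem_range.mp hk), fun x hx hxk => hkF (mem_image.mpr ⟨x, hx, ?_⟩)⟩
  have hk_le : (k : ℝ) ≤ x * M := (div_le_iff₀ hM).mp hxk.1
  rw [Nat.floor_eq_iff ((Nat.cast_nonneg k).trans hk_le)]
  exact ⟨hk_le, (lt_div_iff₀ hM).mp hxk.2⟩

lemma exists_Icc_subset_unitInterval_forall_notMem (F : Finset ℝ) {ℓ : ℝ} (hℓ₀ : 0 ≤ ℓ)
    (hℓ : ℓ < 1 / (#F + 1)) :
    ∃ a, Set.Icc a (a + ℓ) ⊆ Set.Icc 0 1 ∧ ∀ x ∈ F, x ∉ Set.Icc a (a + ℓ) := by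
  obtain ⟨k, hk, hkF⟩ := exists_Ico_div_forall_notMem F
  set M : ℝ := #F + 1
  have hM : 0 < M := by positivity
  set δ := (1 / M - ℓ) / 2 with hδ
  have hsub : Set.Icc (k / M + δ) (k / M + δ + ℓ) ⊆ Set.Ico (k / M) ((k + 1) / M) := by
    rw [Set.Icc_subset_Ico_iff (by linarith), add_div]
    constructor <;> linarith
  have hIco : Set.Ico (k / M) ((k + 1) / M) ⊆ Set.Icc 0 1 := by
    refine Set.Ico_subset_Icc_self.trans (Set.Icc_subset_Icc (by positivity) ?_)
    rw [div_le_one hM]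
    exact add_le_add_left (Nat.cast_le.mpr hk) 1
  exact ⟨k / M + δ, hsub.trans hIco, fun x hx hxI => hkF x hx (hsub hxI)⟩

section PointsOn

variable {ι α : Type*}

noncomputable def pointsOn (C : Finset (ι × α)) (j : ι) : Finset α :=
  C.preimage (Prod.mk j) (Prod.mk_right_injective j).injOn

@[simp]
lemma mem_pointsOn {C : Finset (ι × α)} {j : ι} {x : α} : x ∈ pointsOn C j ↔ (j, x) ∈ C :=
  mem_preimage

lemma sum_card_pointsOn [Fintype ι] [DecidableEq ι] (C : Finset (ι × α)) :
    ∑ j, #(pointsOn C j) = #C := by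
  rw [card_eq_sum_card_fiberwise (fun p _ => mem_univ p.1)]
  refine sum_congr rfl fun j _ => card_nbij' (Prod.mk j) Prod.snd ?_ ?_ ?_ ?_
  · intro x hx
    simpa using hx
  · rintro ⟨i, x⟩ hp
    obtain ⟨hp, rfl⟩ := mem_filter.mp hp
    simpa using hp
  · exact fun _ _ => rfl
  · rintro ⟨i, x⟩ hp
    obtain ⟨-, rfl⟩ := mem_filter.mp hp
    rfl

end PointsOn

lemma sq_card_le_sum_mul_sum_inv {ι : Type*} (s : Finset ι) {x : ι → ℝ} (hx : ∀ i ∈ s, 0 < x i) :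
    (#s : ℝ) ^ 2 ≤ (∑ i ∈ s, x i) * ∑ i ∈ s, (x i)⁻¹ := by
  simpa using sum_sq_le_sum_mul_sum_of_sq_le_mul s (r := 1) (fun i hi => (hx i hi).le)
    (fun i hi => (inv_pos.mpr (hx i hi)).le) fun i hi => by simp [(hx i hi).ne']

lemma sum_inv_card_pointsOn_add_one_le {d : ℕ} {C : Finset (Fin d × ℝ)} {r : ℝ} (hr : 0 ≤ r)
    (hcover : ∀ (S : Fin d → Set ℝ) (e : Set (Fin d × ℝ)), SepUnitDInterval d S e →
      r < ∑ j, (volume (S j)).toReal → ∃ p ∈ C, p ∈ e) :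
    ∑ j, ((#(pointsOn C j) : ℝ) + 1)⁻¹ ≤ r := by
  by_contra! hlt
  -- shrink the gaps by a common factor `t < 1`, keeping the total length above `r`
  obtain ⟨t, hrt, ht⟩ := exists_between ((div_lt_one (hr.trans_lt hlt)).mpr hlt)
  have ht₀ : 0 < t := (div_nonneg hr (hr.trans hlt.le)).trans_lt hrt
  have hgap (j : Fin d) := exists_Icc_subset_unitInterval_forall_notMem (pointsOn C j)
    (ℓ := t / (#(pointsOn C j) + 1)) (by positivity) (div_lt_div_of_pos_right ht (by positivity))
  choose a ha_unit ha_avoid using hgap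
  set S : Fin d → Set ℝ := fun j => Set.Icc (a j) (a j + t / (#(pointsOn C j) + 1))
  have hS : SepUnitDInterval d S {p | p.2 ∈ S p.1} :=
    ⟨ha_unit, fun j => Or.inr ⟨_, _, by simp only [le_add_iff_nonneg_right]; positivity, rfl⟩, rfl⟩
  have hlong : r < ∑ j, (volume (S j)).toReal := by
    simp only [S, Real.volume_Icc, add_sub_cancel_left]
    rw [sum_congr rfl fun j _ => ENNReal.toReal_ofReal (by positivity)]
    simp only [div_eq_mul_inv, ← mul_sum]
    rwa [← div_lt_iff₀ (hr.trans_lt hlt)]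
  obtain ⟨p, hpC, hpS⟩ := hcover S _ hS hlong
  exact ha_avoid p.1 p.2 (mem_pointsOn.mpr hpC) hpS

theorem card_cover_ge_of_long_sep_dIntervals_general (d n : ℕ)
    (C : Finset (Fin d × ℝ))
    (hcover : ∀ (S : Fin d → Set ℝ) (e : Set (Fin d × ℝ)),
      SepUnitDInterval d S e →
      (1 / n : ℝ) < ∑ j, (volume (S j)).toReal →
      ∃ p ∈ C, p ∈ e) :
    (n : ℝ) * d ^ 2 - d ≤ C.card := by
  have hharm := sum_inv_card_pointsOn_add_one_le (by positivity) hcover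
  have hCS := sq_card_le_sum_mul_sum_inv univ fun j _ =>
    (by positivity : (0 : ℝ) < #(pointsOn C j) + 1)
  have hsum : ∑ j, ((#(pointsOn C j) : ℝ) + 1) = #C + d := by
    simp [sum_add_distrib, ← Nat.cast_sum, sum_card_pointsOn]
  rw [card_univ, Fintype.card_fin, hsum] at hCS
  suffices (n : ℝ) * d ^ 2 ≤ #C + d by linarith
  calc (n : ℝ) * d ^ 2 ≤ n * ((#C + d) * ∑ j, ((#(pointsOn C j) : ℝ) + 1)⁻¹) := by gcongr
    _ ≤ (#C + d) * (n * (1 / n)) := by rw [mul_left_comm]; gcongr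
    _ ≤ #C + d :=
      mul_le_of_le_one_right (by positivity) ((mul_one_div _ _).trans_le (div_self_le_one _))

/-- Let `H` be the family of all separated `d`-intervals in `[0,1]^{∪d}` of
total length greater than `1/n`.  Then every finite set of points meeting all
members of `H` has at least `nd² − d` points, i.e. `τ(H) ≥ nd² − d`. -/
theorem card_cover_ge_of_long_sep_dIntervals (d n : ℕ) (hd : 1 ≤ d) (hn : 1 ≤ n)
    (C : Finset (Fin d × ℝ))
    (hcover : ∀ (S : Fin d → Set ℝ) (e : Set (Fin d × ℝ)),
      SepUnitDInterval d S e →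
      (1 / n : ℝ) < ∑ j, (volume (S j)).toReal →
      ∃ p ∈ C, p ∈ e) :
    (n : ℝ) * d ^ 2 - d ≤ C.card :=
  card_cover_ge_of_long_sep_dIntervals_general d n C hcover
end

section
/- For every integer d ≥ 1 there exists a finite hypergraph H of separated d-intervals such that ν(H) = 1 and τ(H) = τ*(H) = d. (Such an H is obtained from a decomposition of the edge set of the complete graph K_{2d} into d Hamiltonian paths: H has 2d separated d-intervals e_1, …, e_{2d}, where the j-th component of e_i is the unit interval starting at the position of vertex i along the j-th Hamiltonian path.) -/
/-- A separated `d`-interval, modelled on `d` fixed parallel copies of the real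
line: for each line `j` it contains a (possibly empty) closed interval. -/
def IsSepDInterval (d : ℕ) (h : Set (Fin d × ℝ)) : Prop :=
  ∃ S : Fin d → Set ℝ,
    (∀ j, S j = ∅ ∨ ∃ a b : ℝ, a ≤ b ∧ S j = Set.Icc a b) ∧
    h = {p : Fin d × ℝ | p.2 ∈ S p.1}

/-! The `2d` edges are indexed by `(i, s) : Fin d × Fin 2`. Edge `(i, s)` is the interval
`[s, s + 1]` on line `i` and, on every other line `j`, a single guest point strictly inside
`[c, c + 1]`, where `c = s` if `i < j` and `c = 1 - s` otherwise, at fractional height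
`(i + 1) / (d + 1)`, which records `i`. Two edges `(i, s)` and `(j, t)` with `i < j` meet on line
`j` if `s = t` and on line `i` otherwise, so `ν = 1`, and the `d` points `(j, 1)` cover all edges.
Distinct edges have distinct guest points on a line, and a guest point, being non-integral, lies
in only one of the two intervals of its line; so every point lies in at most two of the `2d`
edges, and double counting shows that every fractional cover has weight at least `d`. -/

open Set Function

namespace Hypergraph

variable {α : Type*} {H : Set (Set α)}

def IsCover (H : Set (Set α)) (C : Finset α) : Prop := ∀ e ∈ H, ∃ x ∈ C, x ∈ e

def IsFractionalCover (H : Set (Set α)) (f : α → ℝ) : Prop :=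
  f.support.Finite ∧ (∀ x, 0 ≤ f x) ∧ ∀ e ∈ H, 1 ≤ ∑ᶠ x ∈ e, f x

theorem sum_indicator_apply_eq_ncard_mul {ι : Type*} [Fintype ι] (E : ι → Set α)
    (f : α → ℝ) (x : α) : ∑ i, (E i).indicator f x = {i | x ∈ E i}.ncard * f x := by
  classical
  rw [Set.ncard_eq_toFinset_card', Set.toFinset_ofPred, ← nsmul_eq_mul, ← Finset.sum_const,
    Finset.sum_filter]
  simp only [Set.indicator_apply]

theorem card_le_mul_finsum_of_ncard_le {ι : Type*} [Fintype ι] {E : ι → Set α} {k : ℕ}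
    (hdeg : ∀ x, {i | x ∈ E i}.ncard ≤ k) {f : α → ℝ}
    (hf : IsFractionalCover (range E) f) : (Fintype.card ι : ℝ) ≤ k * ∑ᶠ x, f x := by
  obtain ⟨hfin, hpos, hcov⟩ := hf
  set T := hfin.toFinset
  have hT : ∀ e : Set α, ∑ᶠ x ∈ e, f x = ∑ x ∈ T, e.indicator f x := fun e => by
    rw [finsum_mem_def, finsum_eq_sum_of_support_subset]
    rw [support_indicator, hfin.coe_toFinset]
    exact inter_subset_right
  calc (Fintype.card ι : ℝ) = ∑ _i : ι, (1 : ℝ) := by simp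
    _ ≤ ∑ i, ∑ᶠ x ∈ E i, f x := Finset.sum_le_sum fun i _ => hcov _ (mem_range_self i)
    _ = ∑ x ∈ T, ∑ i, (E i).indicator f x := by simp only [hT]; exact Finset.sum_comm
    _ ≤ ∑ x ∈ T, k * f x := Finset.sum_le_sum fun x _ => by
      rw [sum_indicator_apply_eq_ncard_mul]
      exact mul_le_mul_of_nonneg_right (by exact_mod_cast hdeg x) (hpos x)
    _ = k * ∑ᶠ x, f x := by rw [← Finset.mul_sum, finsum_eq_sum f hfin]

theorem finsum_indicator_one (C : Finset α) :
    ∑ᶠ x, (C : Set α).indicator (1 : α → ℝ) x = C.card := by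
  rw [finsum_eq_sum_of_support_subset _ support_indicator_subset,
    Finset.sum_congr rfl fun x hx => indicator_of_mem (Finset.mem_coe.2 hx) _]
  simp

theorem IsCover.isFractionalCover_indicator {C : Finset α} (hC : IsCover H C) :
    IsFractionalCover H ((C : Set α).indicator 1) := by
  have hnonneg : ∀ x, 0 ≤ (C : Set α).indicator (1 : α → ℝ) x :=
    indicator_nonneg fun _ _ => zero_le_one
  refine ⟨C.finite_toSet.subset support_indicator_subset, hnonneg, fun e he => ?_⟩
  obtain ⟨x, hxC, hxe⟩ := hC e he
  rw [finsum_mem_def]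
  calc (1 : ℝ) = e.indicator ((C : Set α).indicator 1) x := by
        rw [indicator_of_mem hxe, indicator_of_mem (Finset.mem_coe.2 hxC), Pi.one_apply]
    _ ≤ _ := by
      refine single_le_finsum x (C.finite_toSet.subset ?_) (indicator_nonneg fun y _ => hnonneg y)
      rw [support_indicator]
      exact inter_subset_right.trans support_indicator_subset

theorem tau_eq_and_tauStar_eq_of_isCover {C : Finset α} (hC : IsCover H C)
    (hlow : ∀ f, IsFractionalCover H f → (C.card : ℝ) ≤ ∑ᶠ x, f x) :
    tau H = C.card ∧ tauStar H = C.card := by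
  constructor
  · refine IsLeast.csInf_eq ⟨⟨C, hC, rfl⟩, ?_⟩
    rintro _ ⟨C', hC', rfl⟩
    have := hlow _ (IsCover.isFractionalCover_indicator hC')
    exact_mod_cast this.trans_eq (finsum_indicator_one C')
  · obtain ⟨hfin, hpos, hcov⟩ := hC.isFractionalCover_indicator
    refine IsLeast.csInf_eq ⟨⟨_, hfin, hpos, hcov, (finsum_indicator_one C).symm⟩, ?_⟩
    rintro _ ⟨f, hfin, hpos, hcov, rfl⟩
    exact hlow f ⟨hfin, hpos, hcov⟩

theorem nu_eq_one_of_pairwise_inter_nonempty (hne : H.Nonempty)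
    (hH : H.Pairwise fun e e' => (e ∩ e').Nonempty) : nu H = 1 := by
  refine IsGreatest.csSup_eq ⟨?_, ?_⟩
  · obtain ⟨e, he⟩ := hne
    exact ⟨{e}, by simpa using he, by simp, Finset.card_singleton e⟩
  · rintro _ ⟨M, hMH, hM, rfl⟩
    refine Finset.card_le_one.2 fun e he e' he' => by_contra fun hne => ?_
    exact not_disjoint_iff_nonempty_inter.2 (hH (hMH he) (hMH he') hne) (hM he he' hne)

end Hypergraph

theorem natCast_add_mem_Icc_iff {a t : ℕ} {u : ℝ} (hu₀ : 0 < u) (hu₁ : u < 1) :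
    (a : ℝ) + u ∈ Icc (t : ℝ) (t + 1) ↔ a = t := by
  constructor
  · rintro ⟨hlo, hhi⟩
    have h₁ : a < t + 1 := by exact_mod_cast (by linarith : (a : ℝ) < t + 1)
    have h₂ : t < a + 1 := by exact_mod_cast (by linarith : (t : ℝ) < a + 1)
    omega
  · rintro rfl
    constructor <;> linarith

namespace SepDIntervalHypergraph

open Hypergraph

variable {d : ℕ}

noncomputable def height (i : Fin d) : ℝ := ((i : ℕ) + 1) / (d + 1)

theorem height_pos (i : Fin d) : 0 < height i := by
  unfold height; positivity

theorem height_lt_one (i : Fin d) : height i < 1 := by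
  rw [height, div_lt_one (by positivity)]
  exact_mod_cast Nat.add_lt_add_right i.2 1

theorem height_injective : Injective (height (d := d)) := by
  intro i j h
  rw [height, height, div_left_inj' (by positivity), add_left_inj, Nat.cast_inj] at h
  exact Fin.ext h

def side (q : Fin d × Fin 2) (j : Fin d) : Fin 2 := if q.1 < j then q.2 else q.2.rev

noncomputable def guest (q : Fin d × Fin 2) (j : Fin d) : ℝ :=
  ((side q j : ℕ) : ℝ) + height q.1

def component (q : Fin d × Fin 2) (j : Fin d) : Set ℝ :=
  if j = q.1 then Icc (q.2 : ℕ) ((q.2 : ℕ) + 1) else {guest q j}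

def edge (q : Fin d × Fin 2) : Set (Fin d × ℝ) := {p | p.2 ∈ component q p.1}

theorem mem_edge_of_eq {q : Fin d × Fin 2} {j : Fin d} {r : ℝ} (h : j = q.1) :
    (j, r) ∈ edge q ↔ r ∈ Icc ((q.2 : ℕ) : ℝ) ((q.2 : ℕ) + 1) := by
  simp [edge, component, h]

theorem mem_edge_of_ne {q : Fin d × Fin 2} {j : Fin d} {r : ℝ} (h : j ≠ q.1) :
    (j, r) ∈ edge q ↔ r = guest q j := by
  simp [edge, component, h]

theorem guest_mem_Icc_iff (q : Fin d × Fin 2) (j : Fin d) (t : Fin 2) :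
    guest q j ∈ Icc ((t : ℕ) : ℝ) ((t : ℕ) + 1) ↔ side q j = t := by
  rw [guest, natCast_add_mem_Icc_iff (height_pos _) (height_lt_one _), Fin.val_inj]

theorem guest_injective (j : Fin d) : Injective (guest · j) := by
  intro q q' h
  have hside : side q j = side q' j := (guest_mem_Icc_iff q j _).1 <| by
    rw [show guest q j = guest q' j from h, guest_mem_Icc_iff]
  have h₁ : q.1 = q'.1 := height_injective <| by
    simpa only [guest, hside, add_right_inj] using h
  refine Prod.ext h₁ ?_
  unfold side at hside
  rw [h₁] at hside
  split_ifs at hside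
  · exact hside
  · exact Fin.rev_injective hside

theorem side_eq_or_side_eq {i j : Fin d} (hij : i ≠ j) (s t : Fin 2) :
    side (i, s) j = t ∨ side (j, t) i = s := by
  rcases hij.lt_or_gt with h | h <;>
    simp only [side, h, h.not_gt, if_true, if_false] <;>
    fin_cases s <;> fin_cases t <;> decide

theorem mk_one_mem_edge (q : Fin d × Fin 2) : (q.1, (1 : ℝ)) ∈ edge q := by
  obtain ⟨i, s⟩ := q
  rw [mem_edge_of_eq rfl]
  fin_cases s <;> norm_num

theorem guest_mem_edge (q : Fin d × Fin 2) {j : Fin d} (hj : j ≠ q.1) :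
    (j, guest q j) ∈ edge q :=
  (mem_edge_of_ne hj).2 rfl

theorem guest_mem_edge_side (q : Fin d × Fin 2) (j : Fin d) :
    (j, guest q j) ∈ edge (j, side q j) :=
  (mem_edge_of_eq rfl).2 <| (guest_mem_Icc_iff q j _).2 rfl

theorem edge_inter_edge_nonempty (q q' : Fin d × Fin 2) : (edge q ∩ edge q').Nonempty := by
  obtain ⟨i, s⟩ := q
  obtain ⟨j, t⟩ := q'
  rcases eq_or_ne i j with rfl | hij
  · exact ⟨(i, 1), mk_one_mem_edge _, mk_one_mem_edge _⟩
  rcases side_eq_or_side_eq hij s t with h | h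
  · refine ⟨(j, guest (i, s) j), guest_mem_edge _ hij.symm, ?_⟩
    simpa only [h] using guest_mem_edge_side (i, s) j
  · refine ⟨(i, guest (j, t) i), ?_, guest_mem_edge _ hij⟩
    simpa only [h] using guest_mem_edge_side (j, t) i

theorem ncard_setOf_mem_edge_le_two (x : Fin d × ℝ) : {q | x ∈ edge q}.ncard ≤ 2 := by
  obtain ⟨j, r⟩ := x
  suffices ∃ a b, {q | (j, r) ∈ edge q} ⊆ {a, b} by
    obtain ⟨a, b, hab⟩ := this
    exact (ncard_le_ncard hab (toFinite _)).trans <|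
      (ncard_insert_le _ _).trans (by rw [ncard_singleton])
  by_cases hguest : ∃ q₀ : Fin d × Fin 2, r = guest q₀ j
  · obtain ⟨q₀, rfl⟩ := hguest
    refine ⟨q₀, (j, side q₀ j), fun q (hq : (j, _) ∈ edge q) => ?_⟩
    by_cases hjq : j = q.1
    · rw [mem_edge_of_eq hjq, guest_mem_Icc_iff] at hq
      exact Or.inr (Prod.ext hjq.symm hq.symm)
    · rw [mem_edge_of_ne hjq] at hq
      exact Or.inl (guest_injective j hq.symm)
  · simp only [not_exists] at hguest
    refine ⟨(j, 0), (j, 1), fun q (hq : (j, r) ∈ edge q) => ?_⟩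
    by_cases hjq : j = q.1
    · obtain ⟨i, s⟩ := q
      obtain rfl : j = i := hjq
      fin_cases s <;> simp
    · exact absurd ((mem_edge_of_ne hjq).1 hq) (hguest q)

theorem isSepDInterval_edge (q : Fin d × Fin 2) : IsSepDInterval d (edge q) := by
  refine ⟨component q, fun j => Or.inr ?_, rfl⟩
  unfold component
  split_ifs
  · exact ⟨_, _, by linarith, rfl⟩
  · exact ⟨_, _, le_rfl, (Icc_self _).symm⟩

def apexes (d : ℕ) : Finset (Fin d × ℝ) := Finset.univ.map (Embedding.sectL (Fin d) (1 : ℝ))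

theorem card_apexes (d : ℕ) : (apexes d).card = d := by simp [apexes]

theorem isCover_apexes (d : ℕ) : IsCover (range edge) (apexes d) :=
  forall_mem_range.2 fun q => ⟨(q.1, 1), by simp [apexes], mk_one_mem_edge q⟩

theorem natCast_le_finsum_of_isFractionalCover {f : Fin d × ℝ → ℝ}
    (hf : IsFractionalCover (range edge) f) : (d : ℝ) ≤ ∑ᶠ x, f x := by
  have := card_le_mul_finsum_of_ncard_le ncard_setOf_mem_edge_le_two hf
  push_cast [Fintype.card_prod, Fintype.card_fin] at this
  linarith

end SepDIntervalHypergraph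

open SepDIntervalHypergraph Hypergraph in
/-- For every `d ≥ 1` there is a finite hypergraph of separated `d`-intervals
with `ν(H) = 1` and `τ(H) = τ*(H) = d`. -/
theorem exists_sep_dInterval_hypergraph_nu_one_tau_d (d : ℕ) (hd : 1 ≤ d) :
    ∃ H : Set (Set (Fin d × ℝ)), H.Finite ∧
      (∀ e ∈ H, IsSepDInterval d e ∧ e.Nonempty) ∧
      nu H = 1 ∧ tau H = d ∧ tauStar H = d := by
  obtain ⟨hτ, hτ'⟩ := tau_eq_and_tauStar_eq_of_isCover (isCover_apexes d)
    fun _ hf => by rw [card_apexes]; exact natCast_le_finsum_of_isFractionalCover hf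
  rw [card_apexes] at hτ hτ'
  have : Nonempty (Fin d) := ⟨⟨0, hd⟩⟩
  refine ⟨range edge, finite_range _, forall_mem_range.2 fun q =>
    ⟨isSepDInterval_edge q, _, mk_one_mem_edge q⟩, ?_, hτ, hτ'⟩
  exact nu_eq_one_of_pairwise_inter_nonempty (range_nonempty _)
    (Pairwise.range_pairwise fun q q' _ => edge_inter_edge_nonempty q q')
end

section
/- (Weighted Turán theorem.) Let G = (V, E) be a finite simple graph and let w : V → ℕ assign a positive integer weight to each vertex. Set W = ∑_{v ∈ V} w(v) and let K be the maximum of ∑_{v ∈ A} w(v) over all independent sets A of G. Then ∑_{uv ∈ E} (w(u) + w(v)) ≥ W²/K − W. -/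
/-!
Weighted Caro–Wei: greedily put into the independent set a vertex `v` whose closed
neighbourhood `N[v]` has `∑_{u ∈ N[v]} w u / (d u + 1) ≤ w v` (such a `v` exists because these
sums, summed over all `v`, give exactly `∑ w`), delete `N[v]` and recurse. This yields an
independent set of weight at least `∑ w v / (d v + 1)`, so `K ≥ ∑ w v / (d v + 1)`.
Cauchy–Schwarz gives `W² ≤ (∑ w v (d v + 1)) (∑ w v / (d v + 1)) ≤ (∑ w v d v + W) K`,
and `∑ w v d v` is the edge sum `∑_{uv ∈ E} (w u + w v)`, both being the sum of `w` over the
first vertices of all darts.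
-/

open Finset

namespace SimpleGraph

variable {V : Type*} (G : SimpleGraph V) [DecidableRel G.Adj]

section Degrees

variable [Fintype V] {M : Type*} [AddCommMonoid M]

theorem sum_dart_fst_eq_sum_degree_smul (f : V → M) :
    ∑ d : G.Dart, f d.fst = ∑ v, G.degree v • f v := by
  classical
  rw [← sum_fiberwise univ (fun d : G.Dart => d.fst)]
  refine sum_congr rfl fun v _ => ?_
  rw [sum_congr rfl fun d hd => by rw [(mem_filter.1 hd).2], sum_const]
  congr 1
  convert G.dart_fst_fiber_card_eq_degree v

theorem sum_edgeFinset_lift_add_eq_sum_dart_fst (f : V → M) :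
    ∑ e ∈ G.edgeFinset, Sym2.lift ⟨fun u v => f u + f v, fun _ _ => add_comm _ _⟩ e =
      ∑ d : G.Dart, f d.fst := by
  classical
  rw [← sum_fiberwise_of_maps_to (g := Dart.edge) (t := G.edgeFinset)
    fun d _ => mem_edgeFinset.2 d.edge_mem]
  refine sum_congr rfl fun e he => ?_
  induction e with
  | _ u v =>
    let d : G.Dart := ⟨(u, v), mem_edgeFinset.1 he⟩
    rw [show univ.filter (fun d' : G.Dart => d'.edge = s(u, v)) = {d, d.symm} from
      d.edge_fiber, sum_pair d.symm_ne.symm]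
    rfl

end Degrees

section CaroWei

variable [DecidableEq V]

theorem sum_sum_insert_filter_adj_eq {M : Type*} [AddCommMonoid M] (s : Finset V)
    (g : V → M) :
    ∑ v ∈ s, ∑ u ∈ insert v (s.filter (G.Adj v)), g u =
      ∑ u ∈ s, (#(s.filter (G.Adj u)) + 1) • g u := by
  simp only [sum_insert (fun h => G.irrefl (mem_filter.1 h).2), sum_add_distrib, add_smul,
    one_smul, add_comm (∑ v ∈ s, g v)]
  congr 1
  simp only [sum_filter]
  rw [sum_comm]
  simp only [G.adj_comm _ _, ← sum_filter, sum_const]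

variable {𝕜 : Type*} [Field 𝕜] [LinearOrder 𝕜] [IsStrictOrderedRing 𝕜]

theorem exists_sum_insert_filter_adj_div_le (w : V → 𝕜) {s : Finset V} (hs : s.Nonempty) :
    ∃ v ∈ s,
      ∑ u ∈ insert v (s.filter (G.Adj v)), w u / (#(s.filter (G.Adj u)) + 1) ≤ w v := by
  refine exists_le_of_sum_le hs (le_of_eq ?_)
  rw [sum_sum_insert_filter_adj_eq]
  refine sum_congr rfl fun u _ => ?_
  rw [nsmul_eq_mul, Nat.cast_add, Nat.cast_one, mul_div_cancel₀ _ (by positivity)]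

theorem exists_isIndepSet_subset_caroWei (w : V → 𝕜) (hw : ∀ v, 0 ≤ w v) (s : Finset V) :
    ∃ A ⊆ s, G.IsIndepSet A ∧
      ∑ u ∈ s, w u / (#(s.filter (G.Adj u)) + 1) ≤ ∑ u ∈ A, w u := by
  induction s using Finset.strongInduction with
  | _ s ih =>
    rcases s.eq_empty_or_nonempty with rfl | hs
    · exact ⟨∅, by simp⟩
    obtain ⟨v, hv, hv_le⟩ := G.exists_sum_insert_filter_adj_div_le w hs
    set N := insert v (s.filter (G.Adj v))
    have hNs : N ⊆ s := insert_subset hv (filter_subset _ _)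
    obtain ⟨A, hAs, hA, hA_le⟩ := ih (s \ N) (sdiff_ssubset hNs (insert_nonempty _ _))
    have hAN : ∀ u ∈ A, u ∉ N := fun u hu => (mem_sdiff.1 (hAs hu)).2
    refine ⟨insert v A, insert_subset hv (hAs.trans sdiff_subset), ?_, ?_⟩
    · have hvA : ∀ u ∈ A, ¬G.Adj v u := fun u hu hvu =>
        hAN u hu (mem_insert_of_mem (mem_filter.2 ⟨(mem_sdiff.1 (hAs hu)).1, hvu⟩))
      rw [coe_insert]
      exact hA.insert fun u hu _ => ⟨hvA u hu, fun huv => hvA u hu huv.symm⟩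
    · have hdeg_mono : ∀ u ∈ s \ N, w u / (#(s.filter (G.Adj u)) + 1) ≤
          w u / (#((s \ N).filter (G.Adj u)) + 1) := fun u _ =>
        div_le_div_of_nonneg_left (hw u) (by positivity) <| by
          gcongr
          exact sdiff_subset
      calc ∑ u ∈ s, w u / (#(s.filter (G.Adj u)) + 1)
          = ∑ u ∈ N, w u / (#(s.filter (G.Adj u)) + 1) +
              ∑ u ∈ s \ N, w u / (#(s.filter (G.Adj u)) + 1) := by rw [add_comm, sum_sdiff hNs]
        _ ≤ w v + ∑ u ∈ A, w u := add_le_add hv_le ((sum_le_sum hdeg_mono).trans hA_le)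
        _ = ∑ u ∈ insert v A, w u := (sum_insert fun h => hAN v h (mem_insert_self _ _)).symm

end CaroWei

end SimpleGraph

/-- **Weighted Turán theorem.**  Let `G` be a finite simple graph with positive
integer vertex weights `w`, let `W` be the total weight, and let `K` be the
maximum weight of an independent set.  Then
`∑_{uv ∈ E} (w u + w v) ≥ W²/K − W`. -/
theorem weighted_turan {V : Type*} [Fintype V] (G : SimpleGraph V)
    [DecidableRel G.Adj] (w : V → ℕ)
    (W K : ℕ) (hW : W = ∑ v, w v)
    (hK : IsGreatest {s | ∃ A : Finset V,
      (∀ u ∈ A, ∀ v ∈ A, ¬ G.Adj u v) ∧ s = ∑ v ∈ A, w v} K) :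
    (W : ℝ) ^ 2 / K - W ≤
      ∑ e ∈ G.edgeFinset,
        Sym2.lift ⟨fun u v => (w u : ℝ) + (w v : ℝ), fun u v => by ring⟩ e := by
  classical
  obtain ⟨A, -, hA, hA_ge⟩ :=
    G.exists_isIndepSet_subset_caroWei (fun v => (w v : ℝ)) (fun _ => by positivity) univ
  have hcaroWei : ∑ v, (w v : ℝ) / (G.degree v + 1) ≤ K := by
    have hAK : ∑ v ∈ A, w v ≤ K :=
      hK.2 ⟨A, fun u hu v hv huv => hA hu hv (G.ne_of_adj huv) huv, rfl⟩
    simp only [← G.neighborFinset_eq_filter, G.card_neighborFinset_eq_degree] at hA_ge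
    exact hA_ge.trans (mod_cast hAK)
  have hCS : (W : ℝ) ^ 2 ≤
      (∑ v, (w v : ℝ) * (G.degree v + 1)) * ∑ v, (w v : ℝ) / (G.degree v + 1) := by
    rw [hW, Nat.cast_sum]
    exact sum_sq_le_sum_mul_sum_of_sq_le_mul _ (fun _ _ => by positivity)
      (fun _ _ => by positivity) fun v _ => le_of_eq (by field_simp)
  have hdegSum : ∑ v, (w v : ℝ) * (G.degree v + 1) = ∑ e ∈ G.edgeFinset,
      Sym2.lift ⟨fun u v => (w u : ℝ) + (w v : ℝ), fun u v => by ring⟩ e + W := by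
    rw [G.sum_edgeFinset_lift_add_eq_sum_dart_fst,
      G.sum_dart_fst_eq_sum_degree_smul (fun v => (w v : ℝ)), hW, Nat.cast_sum,
      ← sum_add_distrib]
    exact sum_congr rfl fun v _ => by rw [nsmul_eq_mul]; ring
  rw [sub_le_iff_le_add, ← hdegSum]
  exact div_le_of_le_mul₀ (by positivity) (sum_nonneg fun _ _ => by positivity)
    (hCS.trans (by gcongr))
end

section
/- (Directed weighted Turán theorem.) Let D be a finite directed multigraph (parallel edges allowed, loops not) in which every pair of adjacent vertices is connected by at least two directed edges, not necessarily in the same direction. Let w : V(D) → ℕ assign a positive integer weight to each vertex, set W = ∑_{v} w(v), and let K be the maximum of ∑_{v ∈ A} w(v) over all independent sets A of D (sets with no edge between any two of their vertices, in either direction). Then ∑_{xy ∈ E(D)} w(x) ≥ W²/K − W, where the sum is over all directed edges xy and w(x) is the weight of the tail. -/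
/-!
Let `A` be a maximum-weight independent set. For a vertex `u ∉ A`, swapping `u` into `A` in
place of its neighbours in `A` shows that these neighbours weigh at least `w u`. Between `u` and
each such neighbour `a` run two arcs, each with tail weight at least `min (w u) (w a)`, so the
arcs between `u` and `A` carry tail weight at least `2 w u`. Hence `W² ≤ K (S + W)`, `S` being
the total tail weight, follows by induction on the graph with `A` deleted, keeping `K` as an
upper bound on independent weights.
-/

open Finset

theorem min_sum_le_sum_min {ι : Type*} (s : Finset ι) (f : ι → ℕ) (x : ℕ) :
    min x (∑ i ∈ s, f i) ≤ ∑ i ∈ s, min x (f i) := by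
  classical
  induction s using Finset.induction_on with
  | empty => simp
  | insert a s ha ih =>
    rw [sum_insert ha, sum_insert ha]
    omega

theorem sq_add_le_mul_of_le {W K₀ K S S' : ℕ} (h : W ^ 2 ≤ K * (S' + W)) (hK₀ : K₀ ≤ K)
    (hS : S' + 2 * W ≤ S) : (W + K₀) ^ 2 ≤ K * (S + (W + K₀)) := by
  have hWK := Nat.mul_le_mul_left W hK₀
  have hKK := Nat.mul_le_mul_left K₀ hK₀
  have hKS := Nat.mul_le_mul_left K hS
  nlinarith

theorem sq_div_sub_le_of_sq_le_mul {W K S : ℕ} (h : W ^ 2 ≤ K * (S + W)) :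
    (W : ℝ) ^ 2 / K - W ≤ S := by
  rcases Nat.eq_zero_or_pos K with rfl | hK
  · obtain rfl : W = 0 := by simpa using h
    simp
  · have hR : (W : ℝ) ^ 2 ≤ K * (S + W) := by exact_mod_cast h
    rw [sub_le_iff_le_add, div_le_iff₀ (by exact_mod_cast hK)]
    linarith

namespace DirectedMultigraph

variable {V E : Type*} (src tgt : E → V)

def Joins (e : E) (u v : V) : Prop := (src e = u ∧ tgt e = v) ∨ (src e = v ∧ tgt e = u)

def Adj (u v : V) : Prop := ∃ e, Joins src tgt e u v

def IsIndep (A : Finset V) : Prop := ∀ u ∈ A, ∀ v ∈ A, ¬ Adj src tgt u v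

instance [DecidableEq V] (e : E) (u v : V) : Decidable (Joins src tgt e u v) :=
  inferInstanceAs (Decidable (_ ∨ _))

instance [Fintype E] [DecidableEq V] : DecidableRel (Adj src tgt) :=
  fun u v => inferInstanceAs (Decidable (∃ e, Joins src tgt e u v))

variable {src tgt}

theorem Adj.symm {u v : V} (h : Adj src tgt u v) : Adj src tgt v u := by
  obtain ⟨e, he⟩ := h
  exact ⟨e, he.symm⟩

theorem not_adj_self (hloop : ∀ e, src e ≠ tgt e) (u : V) : ¬ Adj src tgt u u := by
  rintro ⟨e, ⟨h₁, h₂⟩ | ⟨h₁, h₂⟩⟩ <;> exact hloop e (h₁.trans h₂.symm)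

theorem isIndep_empty : IsIndep src tgt (∅ : Finset V) := by
  simp [IsIndep]

section Weights

variable [Fintype E] [DecidableEq V]

variable (src tgt) in
def arcCount (u v : V) : ℕ := #{e | src e = u ∧ tgt e = v}

variable (src tgt) in
def arcWeight (w : V → ℕ) (u v : V) : ℕ := arcCount src tgt u v * w u

variable (src tgt) in
def inducedTailWeight (w : V → ℕ) (B : Finset V) : ℕ :=
  ∑ u ∈ B, ∑ v ∈ B, arcWeight src tgt w u v

theorem inducedTailWeight_univ [Fintype V] (w : V → ℕ) :
    inducedTailWeight src tgt w univ = ∑ e, w (src e) := by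
  rw [← sum_fiberwise univ (fun e => (src e, tgt e)), Fintype.sum_prod_type]
  refine sum_congr rfl fun u _ => sum_congr rfl fun v _ => ?_
  rw [arcWeight, arcCount, ← smul_eq_mul, ← sum_const]
  refine sum_congr (by simp) fun e he => ?_
  simp only [mem_filter, Prod.mk.injEq] at he
  rw [he.2.1]

theorem two_le_arcCount_add_arcCount {u v : V}
    (h : ∃ e₁ e₂ : E, e₁ ≠ e₂ ∧ Joins src tgt e₁ u v ∧ Joins src tgt e₂ u v) :
    2 ≤ arcCount src tgt u v + arcCount src tgt v u := by
  classical
  obtain ⟨e₁, e₂, hne, h₁, h₂⟩ := h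
  calc 2 = #{e₁, e₂} := (card_pair hne).symm
    _ ≤ #{e | Joins src tgt e u v} := card_le_card (by simp [insert_subset_iff, h₁, h₂])
    _ ≤ #(({e | src e = u ∧ tgt e = v} : Finset E) ∪ ({e | src e = v ∧ tgt e = u} : Finset E)) :=
      card_le_card fun e he => by
        simp only [mem_filter, mem_univ, true_and, mem_union] at he ⊢
        exact he
    _ ≤ _ := card_union_le _ _

theorem two_mul_min_le_arcWeight_add {u v : V}
    (h : ∃ e₁ e₂ : E, e₁ ≠ e₂ ∧ Joins src tgt e₁ u v ∧ Joins src tgt e₂ u v) (w : V → ℕ) :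
    2 * min (w u) (w v) ≤ arcWeight src tgt w u v + arcWeight src tgt w v u := by
  calc 2 * min (w u) (w v)
      ≤ (arcCount src tgt u v + arcCount src tgt v u) * min (w u) (w v) :=
        Nat.mul_le_mul_right _ (two_le_arcCount_add_arcCount h)
    _ ≤ _ := by
      rw [arcWeight, arcWeight, add_mul]
      gcongr
      exacts [min_le_left _ _, min_le_right _ _]

/-- The exchange argument: `u` together with its non-neighbours in `A` is independent. -/
theorem le_sum_adj_of_isIndep_max (hloop : ∀ e, src e ≠ tgt e) (w : V → ℕ) {A B : Finset V}
    (hAB : A ⊆ B) (hA : IsIndep src tgt A)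
    (hmax : ∀ A' ⊆ B, IsIndep src tgt A' → ∑ v ∈ A', w v ≤ ∑ v ∈ A, w v)
    {u : V} (huB : u ∈ B) (huA : u ∉ A) :
    w u ≤ ∑ a ∈ A with Adj src tgt u a, w a := by
  set A' := insert u {a ∈ A | ¬ Adj src tgt u a}
  have hA'B : A' ⊆ B := insert_subset huB ((filter_subset _ _).trans hAB)
  have hA' : IsIndep src tgt A' := by
    intro x hx y hy
    simp only [A', mem_insert, mem_filter] at hx hy
    rcases hx with rfl | ⟨hx, hux⟩ <;> rcases hy with rfl | ⟨hy, huy⟩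
    · exact not_adj_self hloop _
    · exact huy
    · exact fun h => hux h.symm
    · exact hA x hx y hy
  have hle := hmax A' hA'B hA'
  rw [sum_insert (fun h => huA (mem_filter.mp h).1),
    ← sum_filter_add_sum_filter_not A (Adj src tgt u)] at hle
  omega

theorem two_mul_le_sum_arcWeight_add
    (htwo : ∀ u v : V, Adj src tgt u v →
      ∃ e₁ e₂ : E, e₁ ≠ e₂ ∧ Joins src tgt e₁ u v ∧ Joins src tgt e₂ u v)
    (w : V → ℕ) (A : Finset V) {u : V} (hu : w u ≤ ∑ a ∈ A with Adj src tgt u a, w a) :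
    2 * w u ≤ ∑ a ∈ A, (arcWeight src tgt w u a + arcWeight src tgt w a u) := by
  have hmin := min_sum_le_sum_min {a ∈ A | Adj src tgt u a} w (w u)
  calc 2 * w u ≤ 2 * ∑ a ∈ A with Adj src tgt u a, min (w u) (w a) := by omega
    _ = ∑ a ∈ A with Adj src tgt u a, 2 * min (w u) (w a) := mul_sum _ _ _
    _ ≤ ∑ a ∈ A with Adj src tgt u a,
          (arcWeight src tgt w u a + arcWeight src tgt w a u) :=
      sum_le_sum fun a ha => two_mul_min_le_arcWeight_add (htwo u a (mem_filter.mp ha).2) w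
    _ ≤ _ := sum_le_sum_of_subset (filter_subset _ _)

theorem inducedTailWeight_sdiff_add_le (w : V → ℕ) {A B : Finset V} (hAB : A ⊆ B) :
    inducedTailWeight src tgt w (B \ A) +
        ∑ u ∈ B \ A, ∑ a ∈ A, (arcWeight src tgt w u a + arcWeight src tgt w a u) ≤
      inducedTailWeight src tgt w B := by
  have hswap : ∑ u ∈ B \ A, ∑ a ∈ A, arcWeight src tgt w a u =
      ∑ a ∈ A, ∑ u ∈ B \ A, arcWeight src tgt w a u := sum_comm
  simp_rw [inducedTailWeight, ← sum_sdiff hAB, sum_add_distrib]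
  omega

theorem sq_sum_le_mul_inducedTailWeight_add (hloop : ∀ e, src e ≠ tgt e)
    (htwo : ∀ u v : V, Adj src tgt u v →
      ∃ e₁ e₂ : E, e₁ ≠ e₂ ∧ Joins src tgt e₁ u v ∧ Joins src tgt e₂ u v)
    (w : V → ℕ) {K : ℕ} (B : Finset V)
    (hK : ∀ A ⊆ B, IsIndep src tgt A → ∑ v ∈ A, w v ≤ K) :
    (∑ v ∈ B, w v) ^ 2 ≤ K * (inducedTailWeight src tgt w B + ∑ v ∈ B, w v) := by
  classical
  induction B using Finset.strongInduction with
  | H B ih =>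
  obtain ⟨A, hA, hmax⟩ := exists_max_image {A ∈ B.powerset | IsIndep src tgt A}
    (fun A => ∑ v ∈ A, w v) ⟨∅, mem_filter.mpr ⟨empty_mem_powerset B, isIndep_empty⟩⟩
  obtain ⟨hAB, hAind⟩ := mem_filter.mp hA
  rw [mem_powerset] at hAB
  replace hmax : ∀ A' ⊆ B, IsIndep src tgt A' → ∑ v ∈ A', w v ≤ ∑ v ∈ A, w v :=
    fun A' hA'B hA' => hmax A' (mem_filter.mpr ⟨mem_powerset.mpr hA'B, hA'⟩)
  have hswap : ∀ u ∈ B \ A, w u ≤ ∑ a ∈ A with Adj src tgt u a, w a := fun u hu =>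
    le_sum_adj_of_isIndep_max hloop w hAB hAind hmax (mem_sdiff.mp hu).1 (mem_sdiff.mp hu).2
  rcases A.eq_empty_or_nonempty with rfl | hAne
  · -- an empty maximum independent set forces all weights in `B` to vanish
    have hB0 : ∑ v ∈ B, w v = 0 := sum_eq_zero fun u hu => by simpa using hswap u (by simpa)
    simp [hB0]
  have hcross : 2 * ∑ v ∈ B \ A, w v ≤
      ∑ u ∈ B \ A, ∑ a ∈ A, (arcWeight src tgt w u a + arcWeight src tgt w a u) := by
    rw [mul_sum]
    exact sum_le_sum fun u hu => two_mul_le_sum_arcWeight_add htwo w A (hswap u hu)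
  have hedges := inducedTailWeight_sdiff_add_le (src := src) (tgt := tgt) w hAB
  have hih := ih (B \ A) (sdiff_ssubset hAB hAne) fun A' hA' => hK A' (hA'.trans sdiff_subset)
  have hAK := hK A hAB hAind
  rw [← sum_sdiff hAB]
  exact sq_add_le_mul_of_le hih hAK (by omega)

end Weights

end DirectedMultigraph

open DirectedMultigraph

theorem directed_weighted_turan_general {V E : Type*} [Fintype V] [Fintype E]
    (src tgt : E → V) (hloop : ∀ e, src e ≠ tgt e)
    (htwo : ∀ u v : V,
      (∃ e, (src e = u ∧ tgt e = v) ∨ (src e = v ∧ tgt e = u)) →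
      ∃ e₁ e₂ : E, e₁ ≠ e₂ ∧
        ((src e₁ = u ∧ tgt e₁ = v) ∨ (src e₁ = v ∧ tgt e₁ = u)) ∧
        ((src e₂ = u ∧ tgt e₂ = v) ∨ (src e₂ = v ∧ tgt e₂ = u)))
    (w : V → ℕ)
    (W K : ℕ) (hW : W = ∑ v, w v)
    (hK : IsGreatest {s | ∃ A : Finset V,
      (∀ u ∈ A, ∀ v ∈ A,
        ¬ ∃ e, (src e = u ∧ tgt e = v) ∨ (src e = v ∧ tgt e = u)) ∧
      s = ∑ v ∈ A, w v} K) :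
    (W : ℝ) ^ 2 / K - W ≤ ∑ e : E, (w (src e) : ℝ) := by
  classical
  have key := sq_sum_le_mul_inducedTailWeight_add hloop htwo w univ
    fun A _ hA => hK.2 ⟨A, hA, rfl⟩
  rw [inducedTailWeight_univ, ← hW] at key
  exact_mod_cast sq_div_sub_le_of_sq_le_mul key

/-- **Directed weighted Turán theorem.**  Let `D` be a finite loopless directed
multigraph, given by a finite edge type `E` with tail map `src` and head map
`tgt`, in which every pair of adjacent vertices is joined by at least two
directed edges (not necessarily in the same direction).  Let `w` be positive
integer vertex weights, `W` the total weight, and `K` the maximum weight of an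
independent set.  Then `∑_{xy ∈ E(D)} w x ≥ W²/K − W`, the sum being over all
directed edges, `w x` being the weight of the tail. -/
theorem directed_weighted_turan {V E : Type*} [Fintype V] [Fintype E]
    (src tgt : E → V) (hloop : ∀ e, src e ≠ tgt e)
    (htwo : ∀ u v : V,
      (∃ e, (src e = u ∧ tgt e = v) ∨ (src e = v ∧ tgt e = u)) →
      ∃ e₁ e₂ : E, e₁ ≠ e₂ ∧
        ((src e₁ = u ∧ tgt e₁ = v) ∨ (src e₁ = v ∧ tgt e₁ = u)) ∧
        ((src e₂ = u ∧ tgt e₂ = v) ∨ (src e₂ = v ∧ tgt e₂ = u)))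
    (w : V → ℕ) (hw : ∀ v, 0 < w v)
    (W K : ℕ) (hW : W = ∑ v, w v)
    (hK : IsGreatest {s | ∃ A : Finset V,
      (∀ u ∈ A, ∀ v ∈ A,
        ¬ ∃ e, (src e = u ∧ tgt e = v) ∨ (src e = v ∧ tgt e = u)) ∧
      s = ∑ v ∈ A, w v} K) :
    (W : ℝ) ^ 2 / K - W ≤ ∑ e : E, (w (src e) : ℝ) :=
  directed_weighted_turan_general src tgt hloop htwo w W K hW hK
end

section
/- Let H be a finite hypergraph on the vertex set [k] = {1, …, k} that is balanced, i.e. admits a perfect fractional matching, and let ℓ(h) = |h| denote the number of vertices of the edge h. If α > 0 satisfies τ*_ℓ(H) ≤ α·ν_ℓ(H), then H contains a matching M with ∑_{m ∈ M} |m| ≥ k/α. -/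
/-!
Summing a fractional `ℓ`-cover `g` against a perfect fractional matching `f` and swapping
the order of summation gives `∑ₓ g x = ∑ₑ f e ∑_{x ∈ e} g x ≥ ∑ₑ f e |e| = k`, so `k ≤ τ*_ℓ(H)`.
On a finite vertex set `ν_ℓ(H)` is attained by some matching `M`, and then
`k ≤ τ*_ℓ(H) ≤ α ν_ℓ(H) = α ∑_{m ∈ M} |m|`.
-/

section Balanced

variable {V : Type*} [Fintype V] {H : Set (Set V)} {f : Set V → ℝ}

lemma finsum_mem_eq_sum_ite {M : Type*} [AddCommMonoid M] (s : Set V)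
    [DecidablePred (· ∈ s)] (g : V → M) :
    ∑ᶠ x ∈ s, g x = ∑ x, if x ∈ s then g x else 0 := by
  simp only [finsum_eq_sum_of_fintype, finsum_eq_if]

lemma ncard_eq_finsum_mem_one (s : Set V) : (s.ncard : ℝ) = ∑ᶠ x ∈ s, (1 : ℝ) := by
  classical
  rw [finsum_mem_eq_sum_ite, ← Finset.sum_filter, Finset.sum_const, nsmul_one,
    Set.ncard_eq_toFinset_card', Set.filter_mem_univ_eq_toFinset]

lemma sum_mul_finsum_mem_eq_sum (hperf : ∀ v, ∑ᶠ e ∈ {e : Set V | v ∈ e}, f e = 1) (g : V → ℝ) :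
    ∑ e, f e * ∑ᶠ x ∈ e, g x = ∑ x, g x := by
  classical
  calc ∑ e, f e * ∑ᶠ x ∈ e, g x
      = ∑ e, ∑ x, if x ∈ e then f e * g x else 0 := by
        simp only [finsum_mem_eq_sum_ite, Finset.mul_sum, mul_ite, mul_zero]
    _ = ∑ x, (∑ᶠ e ∈ {e : Set V | x ∈ e}, f e) * g x := by
        rw [Finset.sum_comm]
        refine Finset.sum_congr rfl fun x _ => ?_
        rw [finsum_mem_eq_sum_ite, Finset.sum_mul]
        simp only [Set.mem_ofPred_eq, ite_mul, zero_mul]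
    _ = ∑ x, g x := by simp only [hperf, one_mul]

lemma card_le_finsum_of_cover (hf0 : ∀ e, 0 ≤ f e) (hfs : ∀ e, f e ≠ 0 → e ∈ H)
    (hperf : ∀ v, ∑ᶠ e ∈ {e : Set V | v ∈ e}, f e = 1) {g : V → ℝ}
    (hgc : ∀ e ∈ H, (e.ncard : ℝ) ≤ ∑ᶠ x ∈ e, g x) :
    (Fintype.card V : ℝ) ≤ ∑ᶠ x, g x := by
  classical
  calc (Fintype.card V : ℝ)
      = ∑ e, f e * ∑ᶠ x ∈ e, (1 : ℝ) := by
        rw [sum_mul_finsum_mem_eq_sum hperf, Finset.sum_const, nsmul_one, Finset.card_univ]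
    _ ≤ ∑ e, f e * ∑ᶠ x ∈ e, g x := by
        refine Finset.sum_le_sum fun e _ => ?_
        by_cases hfe : f e = 0
        · simp only [hfe, zero_mul, le_refl]
        · rw [← ncard_eq_finsum_mem_one]
          exact mul_le_mul_of_nonneg_left (hgc e (hfs e hfe)) (hf0 e)
    _ = ∑ᶠ x, g x := by rw [sum_mul_finsum_mem_eq_sum hperf, finsum_eq_sum_of_fintype]

lemma card_le_tauStarW (hf0 : ∀ e, 0 ≤ f e) (hfs : ∀ e, f e ≠ 0 → e ∈ H)
    (hperf : ∀ v, ∑ᶠ e ∈ {e : Set V | v ∈ e}, f e = 1) :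
    (Fintype.card V : ℝ) ≤ tauStarW H (fun e => e.ncard) := by
  refine le_csInf ⟨_, fun _ => 1, Set.toFinite _, fun _ => zero_le_one,
    fun e _ => (ncard_eq_finsum_mem_one e).le, rfl⟩ ?_
  rintro t ⟨g, -, -, hgc, rfl⟩
  exact card_le_finsum_of_cover hf0 hfs hperf hgc

end Balanced

lemma exists_matching_sum_eq_nuW {α : Type*} [Finite α] (H : Set (Set α)) (w : Set α → ℕ) :
    ∃ M : Finset (Set α), ↑M ⊆ H ∧ (M : Set (Set α)).PairwiseDisjoint id ∧
      nuW H w = ∑ e ∈ M, w e := by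
  set S : Set ℕ := {m | ∃ M : Finset (Set α), ↑M ⊆ H ∧ (M : Set (Set α)).PairwiseDisjoint id ∧
    m = ∑ e ∈ M, w e}
  have hne : S.Nonempty := ⟨0, ∅, by simp⟩
  have hfin : S.Finite := by
    refine (Set.finite_range fun M : Finset (Set α) => ∑ e ∈ M, w e).subset ?_
    rintro _ ⟨M, -, -, rfl⟩
    exact ⟨M, rfl⟩
  exact hne.csSup_mem hfin

theorem exists_matching_of_balanced_general (k : ℕ) (H : Set (Set (Fin k)))
    (f : Set (Fin k) → ℝ) (hf0 : ∀ e, 0 ≤ f e) (hfs : ∀ e, f e ≠ 0 → e ∈ H)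
    (hperf : ∀ v : Fin k, ∑ᶠ e ∈ {e : Set (Fin k) | v ∈ e}, f e = 1)
    (α : ℝ) (hα : 0 < α)
    (h : tauStarW H (fun e => e.ncard) ≤ α * (nuW H (fun e => e.ncard) : ℝ)) :
    ∃ M : Finset (Set (Fin k)), ↑M ⊆ H ∧
      (M : Set (Set (Fin k))).PairwiseDisjoint id ∧
      (k : ℝ) / α ≤ ∑ e ∈ M, (e.ncard : ℝ) := by
  obtain ⟨M, hMH, hMdisj, hM⟩ := exists_matching_sum_eq_nuW H (fun e => e.ncard)
  refine ⟨M, hMH, hMdisj, ?_⟩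
  have hk := card_le_tauStarW hf0 hfs hperf
  rw [Fintype.card_fin] at hk
  rw [div_le_iff₀ hα]
  calc (k : ℝ) ≤ α * nuW H (fun e => e.ncard) := hk.trans h
    _ = (∑ e ∈ M, (e.ncard : ℝ)) * α := by rw [hM, Nat.cast_sum, mul_comm]

/-- Let `H` be a finite balanced hypergraph on `[k]` (i.e. admitting a perfect
fractional matching `f`), with edge weights `ℓ(h) = |h|`.  If
`τ*_ℓ(H) ≤ α·ν_ℓ(H)`, then `H` contains a matching `M` with
`∑_{m ∈ M} |m| ≥ k/α`. -/
theorem exists_matching_of_balanced (k : ℕ) (H : Set (Set (Fin k)))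
    (hfin : H.Finite)
    (f : Set (Fin k) → ℝ) (hf0 : ∀ e, 0 ≤ f e) (hfs : ∀ e, f e ≠ 0 → e ∈ H)
    (hperf : ∀ v : Fin k, ∑ᶠ e ∈ {e : Set (Fin k) | v ∈ e}, f e = 1)
    (α : ℝ) (hα : 0 < α)
    (h : tauStarW H (fun e => e.ncard) ≤ α * (nuW H (fun e => e.ncard) : ℝ)) :
    ∃ M : Finset (Set (Fin k)), ↑M ⊆ H ∧
      (M : Set (Set (Fin k))).PairwiseDisjoint id ∧
      (k : ℝ) / α ≤ ∑ e ∈ M, (e.ncard : ℝ) :=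
  exists_matching_of_balanced_general k H f hf0 hfs hperf α hα h
end

section
/- Let d ≥ 1 and let H be a balanced finite hypergraph of discrete d-intervals on the vertex set [k] = {1, …, k}. Then H contains a matching M with ∑_{m ∈ M} |m| ≥ k/(2d), where |m| is the number of vertices of m. -/
/-- A discrete `d`-interval on `[k] = {1, …, k}`: a subset of `{1, …, k} ⊆ ℕ`
that is a union of at most `d` pairwise disjoint sets of consecutive
integers. -/
def IsDiscreteDInterval (d k : ℕ) (e : Set ℕ) : Prop :=
  e ⊆ Set.Icc 1 k ∧
  ∃ (n : ℕ) (a b : Fin n → ℕ), n ≤ d ∧ (∀ i, a i ≤ b i) ∧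
    (Set.univ : Set (Fin n)).PairwiseDisjoint (fun i => Set.Icc (a i) (b i)) ∧
    e = ⋃ i, Set.Icc (a i) (b i)

/-!
A discrete `d`-interval has at most `d` left endpoints (points whose predecessor is not in it), and
when two of them meet, a left endpoint of one lies in the other. So for a fractional matching `x`,
every meeting pair `(e, e')` is charged to a left endpoint `p` of `e` or of `e'`, and the edges
through `p` carry total weight at most `1`; this gives
`∑ₑ x e · x {e' | e' meets e} ≤ 2d ∑ₑ x e`, so some edge `e₀` has `x {e' | e' meets e₀} ≤ 2d`.
The local ratio method turns this into a matching `M` with `∑ₑ x e · w e ≤ 2d · ∑_{m ∈ M} w m`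
for all weights `w ≥ 0`: lower by `w e₀` the weight of every edge meeting `e₀`, recurse on the
edges of positive weight, and add `e₀` to the matching found unless one of its edges meets `e₀`.
For a perfect fractional matching and `w e = |e|`, the left-hand side is `k`.
-/

open Finset
open scoped Classical

variable {V : Type*}

section FractionalMatching

variable {S : Finset (Set V)} {x : Set V → ℝ}

theorem sum_filter_inter_nonempty_le_ncard (hx : ∀ e ∈ S, 0 ≤ x e)
    (hfrac : ∀ v, ∑ e ∈ S with v ∈ e, x e ≤ 1) {A : Set V} (hA : A.Finite) :
    ∑ e ∈ S with (A ∩ e).Nonempty, x e ≤ A.ncard :=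
  calc ∑ e ∈ S with (A ∩ e).Nonempty, x e
      ≤ ∑ v ∈ hA.toFinset, ∑ e ∈ S with v ∈ e, x e := by
        simp only [sum_filter]
        rw [sum_comm]
        refine sum_le_sum fun e he => ?_
        have hterm : ∀ v, 0 ≤ if v ∈ e then x e else 0 := fun v => by
          split_ifs
          exacts [hx e he, le_rfl]
        split_ifs with hAe
        · obtain ⟨v, hvA, hve⟩ := hAe
          exact (if_pos hve).symm.trans_le <|
            single_le_sum (fun v _ => hterm v) (hA.mem_toFinset.2 hvA)
        · exact sum_nonneg fun v _ => hterm v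
    _ ≤ ∑ v ∈ hA.toFinset, 1 := sum_le_sum fun v _ => hfrac v
    _ = A.ncard := by simp [Set.ncard_eq_toFinset_card A hA]

theorem sum_mul_sum_inter_nonempty_le_s16 {d : ℕ} (hx : ∀ e ∈ S, 0 ≤ x e)
    (hfrac : ∀ v, ∑ e ∈ S with v ∈ e, x e ≤ 1) {L : Set V → Set V}
    (hL : ∀ e ∈ S, (L e).encard ≤ d)
    (hLmeet : ∀ e ∈ S, ∀ e' ∈ S, (e ∩ e').Nonempty →
      (L e ∩ e').Nonempty ∨ (L e' ∩ e).Nonempty) :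
    ∑ e₀ ∈ S, x e₀ * ∑ e ∈ S with (e ∩ e₀).Nonempty, x e ≤ ∑ e₀ ∈ S, x e₀ * (2 * d) := by
  set A : Set V → Set V → ℝ := fun e e' => if (L e ∩ e').Nonempty then 1 else 0
  have hA : ∀ e ∈ S, ∑ e' ∈ S, x e * x e' * A e e' ≤ x e * d := by
    intro e he
    obtain ⟨hfin, hcard⟩ := Set.encard_le_coe_iff_finite_ncard_le.1 (hL e he)
    simp only [A, mul_ite, mul_one, mul_zero, ← sum_filter, ← mul_sum]
    exact mul_le_mul_of_nonneg_left
      ((sum_filter_inter_nonempty_le_ncard hx hfrac hfin).trans (mod_cast hcard)) (hx e he)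
  have hA01 : ∀ e e', 0 ≤ A e e' := fun e e' => by
    simp only [A]
    split_ifs <;> norm_num
  calc ∑ e₀ ∈ S, x e₀ * ∑ e ∈ S with (e ∩ e₀).Nonempty, x e
      ≤ ∑ e₀ ∈ S, ∑ e ∈ S, (x e * x e₀ * A e e₀ + x e₀ * x e * A e₀ e) := by
        refine sum_le_sum fun e₀ he₀ => ?_
        rw [sum_filter, mul_sum]
        refine sum_le_sum fun e he => ?_
        have hxx : 0 ≤ x e * x e₀ := mul_nonneg (hx e he) (hx e₀ he₀)
        split_ifs with h
        · rcases hLmeet e he e₀ he₀ h with h' | h'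
          · have : A e e₀ = 1 := if_pos h'
            nlinarith [hA01 e₀ e]
          · have : A e₀ e = 1 := if_pos h'
            nlinarith [hA01 e e₀]
        · nlinarith [hA01 e₀ e, hA01 e e₀]
    _ = 2 * ∑ e ∈ S, ∑ e' ∈ S, x e * x e' * A e e' := by
        simp only [sum_add_distrib]
        rw [sum_comm]
        ring
    _ ≤ 2 * ∑ e ∈ S, x e * d := by gcongr with e he; exact hA e he
    _ = ∑ e₀ ∈ S, x e₀ * (2 * d) := by
        rw [mul_sum]
        exact sum_congr rfl fun _ _ => by ring

theorem exists_sum_inter_nonempty_le {d : ℕ} (hS : S.Nonempty) (hx : ∀ e ∈ S, 0 < x e)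
    (hfrac : ∀ v, ∑ e ∈ S with v ∈ e, x e ≤ 1) {L : Set V → Set V}
    (hL : ∀ e ∈ S, (L e).encard ≤ d)
    (hLmeet : ∀ e ∈ S, ∀ e' ∈ S, (e ∩ e').Nonempty →
      (L e ∩ e').Nonempty ∨ (L e' ∩ e).Nonempty) :
    ∃ e₀ ∈ S, ∑ e ∈ S with (e ∩ e₀).Nonempty, x e ≤ 2 * d := by
  obtain ⟨e₀, he₀, h⟩ := exists_le_of_sum_le hS
    (sum_mul_sum_inter_nonempty_le_s16 (fun e he => (hx e he).le) hfrac hL hLmeet)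
  exact ⟨e₀, he₀, le_of_mul_le_mul_left h (hx e₀ he₀)⟩

end FractionalMatching

theorem exists_pairwiseDisjoint_sum_sub_add_le (w : Set V → ℝ) {M' : Finset (Set V)}
    (hM' : (M' : Set (Set V)).PairwiseDisjoint id) {e₀ : Set V} (he₀ : e₀ ∉ M')
    (hw : 0 ≤ w e₀) :
    ∃ M ⊆ insert e₀ M', (M : Set (Set V)).PairwiseDisjoint id ∧
      ∑ m ∈ M', (w m - if (m ∩ e₀).Nonempty then w e₀ else 0) + w e₀ ≤ ∑ m ∈ M, w m := by
  have hsum : ∑ m ∈ M', (w m - if (m ∩ e₀).Nonempty then w e₀ else 0) =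
      ∑ m ∈ M', w m - #{m ∈ M' | (m ∩ e₀).Nonempty} * w e₀ := by
    simp only [sum_sub_distrib, ← sum_filter, sum_const, nsmul_eq_mul]
  rw [hsum]
  rcases {m ∈ M' | (m ∩ e₀).Nonempty}.eq_empty_or_nonempty with hmeet | hmeet
  · refine ⟨insert e₀ M', subset_rfl, ?_, ?_⟩
    · rw [coe_insert]
      exact hM'.insert fun m hm _ => Set.disjoint_left.2 fun v hv₀ hv =>
        filter_eq_empty_iff.1 hmeet hm ⟨v, hv, hv₀⟩
    · simp [hmeet, sum_insert he₀, add_comm]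
  · refine ⟨M', subset_insert _ _, hM', ?_⟩
    have : (1 : ℝ) ≤ #{m ∈ M' | (m ∩ e₀).Nonempty} := mod_cast hmeet.card_pos
    nlinarith

theorem exists_pairwiseDisjoint_sum_mul_le {r : ℝ} (hr : 0 ≤ r) {x : Set V → ℝ}
    (E : Finset (Set V)) (hx : ∀ e ∈ E, 0 ≤ x e) (hE : ∀ e ∈ E, e.Nonempty)
    (hgood : ∀ S ⊆ E, S.Nonempty → ∃ e₀ ∈ S, ∑ e ∈ S with (e ∩ e₀).Nonempty, x e ≤ r)
    (w : Set V → ℝ) (hw : ∀ e ∈ E, 0 ≤ w e) :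
    ∃ M ⊆ E, (M : Set (Set V)).PairwiseDisjoint id ∧
      ∑ e ∈ E, x e * w e ≤ r * ∑ m ∈ M, w m := by
  induction E using Finset.strongInduction generalizing w with
  | H E ih =>
  rcases E.eq_empty_or_nonempty with rfl | hne
  · exact ⟨∅, subset_rfl, by simp, by simp⟩
  obtain ⟨e₀, he₀, hr₀⟩ := hgood E subset_rfl hne
  set w' : Set V → ℝ := fun e => w e - if (e ∩ e₀).Nonempty then w e₀ else 0
  set E' := {e ∈ E | 0 < w' e}
  have he₀E' : e₀ ∉ E' := by simp [E', w', Set.inter_self, hE e₀ he₀]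
  have hE'E : E' ⊂ E := filter_ssubset.2 ⟨e₀, he₀, fun h => he₀E' (mem_filter.2 ⟨he₀, h⟩)⟩
  obtain ⟨M', hM'E', hM', hM'w'⟩ := ih E' hE'E (fun e he => hx e (filter_subset _ _ he))
    (fun e he => hE e (filter_subset _ _ he))
    (fun S hS => hgood S (hS.trans (filter_subset _ _))) w'
    (fun e he => (mem_filter.1 he).2.le)
  obtain ⟨M, hM, hMdisj, hMw⟩ :=
    exists_pairwiseDisjoint_sum_sub_add_le w hM' (fun h => he₀E' (hM'E' h)) (hw e₀ he₀)
  refine ⟨M, hM.trans (insert_subset he₀ (hM'E'.trans hE'E.1)), hMdisj, ?_⟩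
  calc ∑ e ∈ E, x e * w e
      = ∑ e ∈ E, x e * w' e + w e₀ * ∑ e ∈ E with (e ∩ e₀).Nonempty, x e := by
        rw [sum_filter, mul_sum, ← sum_add_distrib]
        refine sum_congr rfl fun e _ => ?_
        simp only [w']
        split_ifs <;> ring
    _ ≤ ∑ e ∈ E', x e * w' e + w e₀ * r := by
        refine add_le_add ?_ (mul_le_mul_of_nonneg_left hr₀ (hw e₀ he₀))
        rw [sum_filter]
        refine sum_le_sum fun e he => ?_
        split_ifs with h
        · rfl
        · exact mul_nonpos_of_nonneg_of_nonpos (hx e he) (not_lt.1 h)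
    _ ≤ r * (∑ m ∈ M', w' m + w e₀) := by linarith [mul_comm (w e₀) r]
    _ ≤ r * ∑ m ∈ M, w m := mul_le_mul_of_nonneg_left hMw hr

theorem sum_mul_ncard_eq_card {E : Finset (Set V)} {T : Finset V} {x : Set V → ℝ}
    (hET : ∀ e ∈ E, e ⊆ T) (hx : ∀ v ∈ T, ∑ e ∈ E with v ∈ e, x e = 1) :
    ∑ e ∈ E, x e * e.ncard = #T := by
  have hncard : ∀ e ∈ E, e.ncard = #{v ∈ T | v ∈ e} := by
    intro e he
    rw [← Set.ncard_coe_finset, coe_filter]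
    congr 1
    ext v
    exact ⟨fun hv => ⟨hET e he hv, hv⟩, And.right⟩
  calc ∑ e ∈ E, x e * e.ncard = ∑ e ∈ E, ∑ v ∈ T with v ∈ e, x e := by
        refine sum_congr rfl fun e he => ?_
        rw [hncard e he, sum_const, nsmul_eq_mul, mul_comm]
    _ = ∑ v ∈ T, ∑ e ∈ E with v ∈ e, x e := by
        refine sum_comm' fun e v => ?_
        simp only [mem_filter]
        tauto
    _ = #T := by simp [sum_congr rfl hx]

theorem exists_pairwiseDisjoint_card_le_two_mul_sum_ncard {d : ℕ} {E : Finset (Set V)}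
    {T : Finset V} {x : Set V → ℝ} (hE : ∀ e ∈ E, e.Nonempty ∧ e ⊆ T) (hx : ∀ e ∈ E, 0 < x e)
    (hcover : ∀ v ∈ T, ∑ e ∈ E with v ∈ e, x e = 1) {L : Set V → Set V}
    (hL : ∀ e ∈ E, (L e).encard ≤ d)
    (hLmeet : ∀ e ∈ E, ∀ e' ∈ E, (e ∩ e').Nonempty →
      (L e ∩ e').Nonempty ∨ (L e' ∩ e).Nonempty) :
    ∃ M ⊆ E, (M : Set (Set V)).PairwiseDisjoint id ∧
      (#T : ℝ) ≤ 2 * d * ∑ m ∈ M, (m.ncard : ℝ) := by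
  have hfrac : ∀ v, ∑ e ∈ E with v ∈ e, x e ≤ 1 := by
    intro v
    by_cases hv : v ∈ T
    · exact (hcover v hv).le
    · rw [filter_false_of_mem fun e he hve => hv ((hE e he).2 hve), sum_empty]
      exact zero_le_one
  have hgood (S) (hSE : S ⊆ E) (hS : S.Nonempty) :
      ∃ e₀ ∈ S, ∑ e ∈ S with (e ∩ e₀).Nonempty, x e ≤ 2 * d :=
    exists_sum_inter_nonempty_le hS (fun e he => hx e (hSE he))
      (fun v => (sum_le_sum_of_subset_of_nonneg (filter_subset_filter _ hSE)
        fun e he _ => (hx e (mem_filter.1 he).1).le).trans (hfrac v))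
      (fun e he => hL e (hSE he)) fun e he e' he' => hLmeet e (hSE he) e' (hSE he')
  rw [← sum_mul_ncard_eq_card (fun e he => (hE e he).2) hcover]
  exact exists_pairwiseDisjoint_sum_mul_le (by positivity) E (fun e he => (hx e he).le)
    (fun e he => (hE e he).1) hgood _ fun e _ => by positivity

def leftEndpoints (e : Set ℕ) : Set ℕ := {v ∈ e | ∀ u ∈ e, u + 1 ≠ v}

theorem leftEndpoints_inter_nonempty_or {e e' : Set ℕ} (h : (e ∩ e').Nonempty) :
    (leftEndpoints e ∩ e').Nonempty ∨ (leftEndpoints e' ∩ e).Nonempty := by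
  obtain ⟨v, hv⟩ := h
  induction v with
  | zero => exact .inl ⟨0, ⟨hv.1, fun u _ => u.succ_ne_zero⟩, hv.2⟩
  | succ n ih =>
    by_cases hn : n ∈ e ∩ e'
    · exact ih hn
    rcases not_and_or.1 hn with hn | hn
    · exact .inl ⟨n + 1, ⟨hv.1, fun u hu h => hn (Nat.succ_injective h ▸ hu)⟩, hv.2⟩
    · exact .inr ⟨n + 1, ⟨hv.2, fun u hu h => hn (Nat.succ_injective h ▸ hu)⟩, hv.1⟩

theorem IsDiscreteDInterval.encard_leftEndpoints_le {d k : ℕ} {e : Set ℕ}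
    (h : IsDiscreteDInterval d k e) : (leftEndpoints e).encard ≤ d := by
  obtain ⟨-, n, a, b, hnd, -, -, rfl⟩ := h
  have hsub : leftEndpoints (⋃ i, Set.Icc (a i) (b i)) ⊆ Set.range a := by
    rintro v ⟨hv, hstart⟩
    obtain ⟨i, hi⟩ := Set.mem_iUnion.1 hv
    refine ⟨i, le_antisymm hi.1 (not_lt.1 fun hlt => hstart (v - 1) ?_ (by omega))⟩
    exact Set.mem_iUnion.2 ⟨i, by simp only [Set.mem_Icc] at hi ⊢; omega⟩
  calc (leftEndpoints _).encard ≤ (Set.range a).encard := Set.encard_le_encard hsub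
    _ ≤ n := by
        rw [← Set.image_univ]
        exact (Set.encard_image_le _ _).trans (by simp)
    _ ≤ d := by exact_mod_cast hnd

theorem exists_matching_of_balanced_discrete_general (d k : ℕ)
    (H : Set (Set ℕ)) (hfin : H.Finite)
    (hH : ∀ e ∈ H, IsDiscreteDInterval d k e)
    (f : Set ℕ → ℝ) (hf0 : ∀ e, 0 ≤ f e) (hfs : ∀ e, f e ≠ 0 → e ∈ H)
    (hperf : ∀ v ∈ Set.Icc 1 k, ∑ᶠ e ∈ {e : Set ℕ | v ∈ e}, f e = 1) :
    ∃ M : Finset (Set ℕ), ↑M ⊆ H ∧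
      (M : Set (Set ℕ)).PairwiseDisjoint id ∧
      (k : ℝ) / (2 * d) ≤ ∑ e ∈ M, (e.ncard : ℝ) := by
  set E := {e ∈ hfin.toFinset | f e ≠ 0 ∧ e.Nonempty}
  have hEH : ∀ e ∈ E, e ∈ H := fun e he => hfin.mem_toFinset.1 (mem_filter.1 he).1
  have hcover : ∀ v ∈ Finset.Icc 1 k, ∑ e ∈ E with v ∈ e, f e = 1 := by
    intro v hv
    rw [← hperf v (by simpa using hv)]
    refine (finsum_mem_eq_sum_of_subset f (fun e he => ?_) (fun e he => ?_)).symm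
    · exact mem_filter.2 ⟨mem_filter.2 ⟨hfin.mem_toFinset.2 (hfs e he.2), he.2, v, he.1⟩, he.1⟩
    · exact (mem_filter.1 he).2
  obtain ⟨M, hME, hM, hsum⟩ := exists_pairwiseDisjoint_card_le_two_mul_sum_ncard
    (fun e he => ⟨(mem_filter.1 he).2.2, by simpa using (hH e (hEH e he)).1⟩)
    (fun e he => (hf0 e).lt_of_ne' (mem_filter.1 he).2.1) hcover
    (fun e he => (hH e (hEH e he)).encard_leftEndpoints_le)
    fun _ _ _ _ => leftEndpoints_inter_nonempty_or
  refine ⟨M, fun m hm => hEH m (hME hm), hM, div_le_of_le_mul₀ (by positivity) (by positivity) ?_⟩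
  simpa [mul_comm] using hsum

/-- A balanced finite hypergraph of discrete `d`-intervals on `[k]` (one
admitting a perfect fractional matching `f`) contains a matching `M` with
`∑_{m ∈ M} |m| ≥ k/(2d)`. -/
theorem exists_matching_of_balanced_discrete (d k : ℕ) (hd : 1 ≤ d)
    (H : Set (Set ℕ)) (hfin : H.Finite)
    (hH : ∀ e ∈ H, IsDiscreteDInterval d k e)
    (f : Set ℕ → ℝ) (hf0 : ∀ e, 0 ≤ f e) (hfs : ∀ e, f e ≠ 0 → e ∈ H)
    (hperf : ∀ v ∈ Set.Icc 1 k, ∑ᶠ e ∈ {e : Set ℕ | v ∈ e}, f e = 1) :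
    ∃ M : Finset (Set ℕ), ↑M ⊆ H ∧
      (M : Set (Set ℕ)).PairwiseDisjoint id ∧
      (k : ℝ) / (2 * d) ≤ ∑ e ∈ M, (e.ncard : ℝ) :=
  exists_matching_of_balanced_discrete_general d k H hfin hH f hf0 hfs hperf
end

section
/- Let d ≥ 1 and α > 0, and suppose that every finite hypergraph G of d-intervals satisfies τ*_ℓ(G) ≤ α d·ν_ℓ(G), where ℓ(h) denotes the total length of the d-interval h. Then every finite hypergraph H of d-intervals and every weight system w : E(H) → ℕ satisfy τ_w(H) ≤ α d²·ν_w(H). -/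
open MeasureTheory

/-- The weighted matching number for a real-valued weight system: the supremum
of `∑_{e ∈ M} w e` over matchings `M` in `H`. -/
noncomputable def nuWR {α : Type*} (H : Set (Set α)) (w : Set α → ℝ) : ℝ :=
  sSup {t | ∃ M : Finset (Set α), ↑M ⊆ H ∧
    (M : Set (Set α)).PairwiseDisjoint id ∧ t = ∑ e ∈ M, w e}

/-- The fractional weighted covering number for a real-valued weight system:
the infimum of `∑ₓ g x` over finitely supported nonnegative `g : α → ℝ` with
`∑_{x ∈ e} g x ≥ w e` for every edge `e`. -/
noncomputable def tauStarWR {α : Type*} (H : Set (Set α)) (w : Set α → ℝ) : ℝ :=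
  sInf {t | ∃ g : α → ℝ, (Function.support g).Finite ∧ (∀ x, 0 ≤ g x) ∧
    (∀ e ∈ H, w e ≤ ∑ᶠ x ∈ e, g x) ∧ t = ∑ᶠ x, g x}

/-- The total length of a `d`-interval: the Lebesgue measure of the set,
i.e. the sum of the lengths of its components. -/
noncomputable def totalLength (h : Set ℝ) : ℝ := (volume h).toReal


/-!
Rounding, `τ_w ≤ d τ*_w`: given a fractional `w`-cover `g`, put an integer point at the
`k`-th quantile of the cumulative mass of `d g`, for `k = 1, …, ⌊d ∑ g⌋`. A component
`[a, b]` receives more than `d g([a, b]) - 1` of these points; since a `d`-interval has at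
most `d` components, an edge `e` with `g(e) ≥ w e` receives more than `d (w e - 1)`, hence
at least `w e`, points.

Blow-up, `τ*_w ≤ α d ν_w`: take a fractional `w`-cover `m` of value close to `τ*_w` and
stretch the line by `x ↦ t x + m((-∞, x))`, inflating every atom of `m` into an interval of
its own mass. An edge `e` becomes a `d`-interval of length `t |e| + m(e)`, which is about
`w e` on the edges that `m` covers almost tightly, so a length-matching of the stretched
tight edges is nearly a `w`-matching. A fractional length-cover of the stretched tight
edges, pulled back along the quantile map, covers the tight edges; averaging it with `m`
covers all of them. Letting `t → 0` gives the bound.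
-/

open Set Function Filter Topology

section Finsum

variable {α M : Type*} [AddCommMonoid M] {f : α → M}

theorem finsum_mem_le_finsum_mem_of_subset [PartialOrder M] [IsOrderedAddMonoid M]
    (hf : (support f).Finite) (hf0 : 0 ≤ f) {s t : Set α} (hst : s ⊆ t) :
    ∑ᶠ x ∈ s, f x ≤ ∑ᶠ x ∈ t, f x := by
  rw [finsum_mem_def, finsum_mem_def]
  exact finsum_le_finsum' (by rw [HasFiniteSupport, support_indicator]; exact hf.inter_of_right s)
    (by rw [HasFiniteSupport, support_indicator]; exact hf.inter_of_right t)
    (indicator_le_indicator_of_subset hst hf0)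

theorem finsum_mem_iUnion_of_finite_support {ι : Type*} [Fintype ι] {t : ι → Set α}
    (ht : Pairwise (Disjoint on t)) (hf : (support f).Finite) :
    ∑ᶠ x ∈ ⋃ i, t i, f x = ∑ i, ∑ᶠ x ∈ t i, f x := by
  rw [← finsum_mem_inter_support, iUnion_inter,
    finsum_mem_iUnion (fun i j hij => (ht hij).mono inter_subset_left inter_subset_left)
      fun i => hf.subset inter_subset_right, finsum_eq_sum_of_fintype]
  simp_rw [finsum_mem_inter_support]

theorem finsum_mem_mul_add_mul {f g : α → ℝ} (hf : (support f).Finite)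
    (hg : (support g).Finite) (c a b : ℝ) (s : Set α) :
    ∑ᶠ x ∈ s, c * (a * f x + b * g x) =
      c * (a * ∑ᶠ x ∈ s, f x + b * ∑ᶠ x ∈ s, g x) := by
  rw [← mul_finsum_mem, finsum_mem_add_distrib'
    ((hf.subset (support_mul_subset_right _ _)).inter_of_right s)
    ((hg.subset (support_mul_subset_right _ _)).inter_of_right s), mul_finsum_mem, mul_finsum_mem]

end Finsum

section Fibers

variable {ι α : Type*} [DecidableEq α] (S : Finset ι) (p : ι → α)

theorem finite_support_card_filter_eq :
    (support fun x => (S.filter (p · = x)).card).Finite :=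
  (S.image p).finite_toSet.subset fun x hx => by
    obtain ⟨k, hk⟩ := Finset.card_ne_zero.1 hx
    exact Finset.mem_image.2 ⟨k, (Finset.mem_filter.1 hk).1, (Finset.mem_filter.1 hk).2⟩

theorem finsum_mem_card_filter_eq (s : Set α) [DecidablePred (· ∈ s)] :
    ∑ᶠ x ∈ s, (S.filter (p · = x)).card = (S.filter (p · ∈ s)).card := by
  set t := (S.image p).filter (· ∈ s)
  have hsupp : s ∩ support (fun x => (S.filter (p · = x)).card) ⊆ t := by
    rintro x ⟨hxs, hx⟩
    obtain ⟨k, hk⟩ := Finset.card_ne_zero.1 hx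
    exact Finset.mem_filter.2 ⟨Finset.mem_image.2 ⟨k, (Finset.mem_filter.1 hk).1,
      (Finset.mem_filter.1 hk).2⟩, hxs⟩
  have hts : (t : Set α) ⊆ s := fun x hx => (Finset.mem_filter.1 (Finset.mem_coe.1 hx)).2
  have hmaps : MapsTo p (S.filter (p · ∈ s)) t := fun k hk => by
    obtain ⟨hkS, hks⟩ := Finset.mem_filter.1 (Finset.mem_coe.1 hk)
    exact Finset.mem_filter.2 ⟨Finset.mem_image_of_mem p hkS, hks⟩
  rw [finsum_mem_eq_sum_of_subset _ hsupp hts, Finset.card_eq_sum_card_fiberwise hmaps]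
  refine Finset.sum_congr rfl fun x hx => congrArg Finset.card ?_
  rw [Finset.filter_filter]
  exact Finset.filter_congr fun k _ =>
    ⟨fun h => ⟨h ▸ (Finset.mem_filter.1 hx).2, h⟩, And.right⟩

end Fibers

section Cumulative

variable {m : ℝ → ℝ}

noncomputable def sumIic (m : ℝ → ℝ) (x : ℝ) : ℝ := ∑ᶠ y ∈ Iic x, m y

noncomputable def sumIio (m : ℝ → ℝ) (x : ℝ) : ℝ := ∑ᶠ y ∈ Iio x, m y

theorem sumIio_nonneg (hm0 : 0 ≤ m) (x : ℝ) : 0 ≤ sumIio m x :=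
  finsum_nonneg fun y => finsum_nonneg fun _ => hm0 y

theorem sumIio_le_sumIic (hm : (support m).Finite) (hm0 : 0 ≤ m) (x : ℝ) :
    sumIio m x ≤ sumIic m x :=
  finsum_mem_le_finsum_mem_of_subset hm hm0 Iio_subset_Iic_self

theorem sumIic_le_sumIio (hm : (support m).Finite) (hm0 : 0 ≤ m) {x y : ℝ} (h : x < y) :
    sumIic m x ≤ sumIio m y :=
  finsum_mem_le_finsum_mem_of_subset hm hm0 (Iic_subset_Iio.2 h)

theorem sumIio_mono (hm : (support m).Finite) (hm0 : 0 ≤ m) : Monotone (sumIio m) :=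
  fun _ _ h => finsum_mem_le_finsum_mem_of_subset hm hm0 (Iio_subset_Iio h)

theorem sumIic_le_finsum (hm : (support m).Finite) (hm0 : 0 ≤ m) (x : ℝ) :
    sumIic m x ≤ ∑ᶠ y, m y := by
  rw [← finsum_mem_univ]
  exact finsum_mem_le_finsum_mem_of_subset hm hm0 (subset_univ _)

theorem sumIic_sub_sumIio (hm : (support m).Finite) {a b : ℝ} (hab : a ≤ b) :
    sumIic m b - sumIio m a = ∑ᶠ x ∈ Icc a b, m x := by
  rw [sumIic, ← Iio_union_Icc_eq_Iic hab, finsum_mem_union'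
    ((Iio_disjoint_Ici le_rfl).mono_right Icc_subset_Ici_self) (hm.inter_of_right _)
    (hm.inter_of_right _), sumIio, add_sub_cancel_left]

end Cumulative

noncomputable def quantile (F : ℝ → ℝ) (y : ℝ) : ℝ := sInf {x | y ≤ F x}

theorem quantile_mem_Icc {F : ℝ → ℝ} {a b y : ℝ} (hlt : ∀ x < a, F x < y)
    (hle : y ≤ F b) : quantile F y ∈ Icc a b := by
  have hlb : a ∈ lowerBounds {x | y ≤ F x} := fun x hx => not_lt.1 fun h => (hlt x h).not_ge hx
  exact ⟨le_csInf ⟨b, hle⟩ hlb, csInf_le ⟨a, hlb⟩ hle⟩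

theorem totalLength_iUnion_Icc {ι : Type*} [Fintype ι] {a b : ι → ℝ}
    (hab : ∀ i, a i ≤ b i) (hdisj : Pairwise (Disjoint on fun i => Icc (a i) (b i))) :
    totalLength (⋃ i, Icc (a i) (b i)) = ∑ i, (b i - a i) := by
  rw [totalLength, measure_iUnion hdisj fun _ => measurableSet_Icc, tsum_fintype,
    ENNReal.toReal_sum fun _ _ => measure_Icc_lt_top.ne]
  exact Finset.sum_congr rfl fun i _ => by
    rw [Real.volume_Icc, ENNReal.toReal_ofReal (sub_nonneg.2 (hab i))]

section Stretch

variable {ε : ℝ} {m : ℝ → ℝ}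

theorem stretch_mem_Icc (hε : 0 ≤ ε) (hm : (support m).Finite) (hm0 : 0 ≤ m) {a b z : ℝ}
    (hz : z ∈ Icc a b) :
    ε * z + sumIio m z ∈ Icc (ε * a + sumIio m a) (ε * b + sumIic m b) :=
  ⟨add_le_add (mul_le_mul_of_nonneg_left hz.1 hε) (sumIio_mono hm hm0 hz.1),
    add_le_add (mul_le_mul_of_nonneg_left hz.2 hε)
      ((sumIio_mono hm hm0 hz.2).trans (sumIio_le_sumIic hm hm0 b))⟩

theorem quantile_stretch_mem_Icc (hε : 0 < ε) (hm : (support m).Finite) (hm0 : 0 ≤ m)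
    {a b y : ℝ} (hy : y ∈ Icc (ε * a + sumIio m a) (ε * b + sumIic m b)) :
    quantile (fun x => ε * x + sumIic m x) y ∈ Icc a b :=
  quantile_mem_Icc (fun x hx => by
    linarith [mul_lt_mul_of_pos_left hx hε, sumIic_le_sumIio hm hm0 hx, hy.1]) hy.2

theorem quantile_stretch_self (hε : 0 < ε) (hm : (support m).Finite) (hm0 : 0 ≤ m) (z : ℝ) :
    quantile (fun x => ε * x + sumIic m x) (ε * z + sumIio m z) = z := by
  have := quantile_stretch_mem_Icc hε hm hm0
    (stretch_mem_Icc hε.le hm hm0 (left_mem_Icc.2 (le_refl z)))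
  rwa [Icc_self] at this

theorem IsDInterval.exists_stretch {d : ℕ} {e : Set ℝ} (he : IsDInterval d e) (hε : 0 < ε)
    (hm : (support m).Finite) (hm0 : 0 ≤ m) :
    ∃ E, IsDInterval d E ∧ totalLength E = ε * totalLength e + ∑ᶠ x ∈ e, m x ∧
      (∀ z, z ∈ e ↔ ε * z + sumIio m z ∈ E) ∧
      MapsTo (quantile fun x => ε * x + sumIic m x) E e := by
  obtain ⟨n, a, b, hn, hab, hdisj, rfl⟩ := he
  replace hdisj := pairwise_univ.1 hdisj
  set L := fun z => ε * z + sumIio m z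
  set R := fun z => ε * z + sumIic m z
  have hLR : ∀ i, L (a i) ≤ R (b i) :=
    fun i => (stretch_mem_Icc hε.le hm hm0 (left_mem_Icc.2 (hab i))).2
  have hπ : MapsTo (quantile R) (⋃ i, Icc (L (a i)) (R (b i))) (⋃ i, Icc (a i) (b i)) := by
    simp only [MapsTo, mem_iUnion]
    exact fun y ⟨i, hy⟩ => ⟨i, quantile_stretch_mem_Icc hε hm hm0 hy⟩
  have hdisjE : Pairwise (Disjoint on fun i => Icc (L (a i)) (R (b i))) :=
    fun i j hij => disjoint_left.2 fun y hi hj => disjoint_left.1 (hdisj hij)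
      (quantile_stretch_mem_Icc hε hm hm0 hi) (quantile_stretch_mem_Icc hε hm hm0 hj)
  refine ⟨⋃ i, Icc (L (a i)) (R (b i)), ⟨n, _, _, hn, hLR, pairwise_univ.2 hdisjE, rfl⟩, ?_,
    fun z => ⟨fun hz => ?_, fun hz => quantile_stretch_self hε hm hm0 z ▸ hπ hz⟩, hπ⟩
  · rw [totalLength_iUnion_Icc hLR hdisjE, totalLength_iUnion_Icc hab hdisj,
      finsum_mem_iUnion_of_finite_support hdisj hm, Finset.mul_sum, ← Finset.sum_add_distrib]
    refine Finset.sum_congr rfl fun i _ => ?_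
    rw [← sumIic_sub_sumIio hm (hab i)]
    ring
  · obtain ⟨i, hi⟩ := mem_iUnion.1 hz
    exact mem_iUnion.2 ⟨i, stretch_mem_Icc hε.le hm hm0 hi⟩

end Stretch

section Rounding

variable {g : ℝ → ℝ} {r : ℝ}

theorem floor_sub_floor_le_card_quantile_mem (hg : (support g).Finite) (hg0 : 0 ≤ g)
    (hr : 0 ≤ r) (a b : ℝ) :
    ⌊r * sumIic g b⌋₊ - ⌊r * sumIio g a⌋₊ ≤
      ((Finset.Icc 1 ⌊r * ∑ᶠ x, g x⌋₊).filter
        fun k : ℕ => quantile (fun x => r * sumIic g x) k ∈ Icc a b).card := by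
  rw [← Nat.card_Ioc]
  refine Finset.card_le_card fun k hk => ?_
  obtain ⟨hak, hkb⟩ := Finset.mem_Ioc.1 hk
  have hlt : r * sumIio g a < k := (Nat.floor_lt (mul_nonneg hr (sumIio_nonneg hg0 a))).1 hak
  have hle : (k : ℝ) ≤ r * sumIic g b :=
    (Nat.le_floor_iff (mul_nonneg hr ((sumIio_nonneg hg0 b).trans
      (sumIio_le_sumIic hg hg0 b)))).1 hkb
  refine Finset.mem_filter.2 ⟨Finset.mem_Icc.2 ⟨by omega, hkb.trans (Nat.floor_mono ?_)⟩,
    quantile_mem_Icc (fun x hx => ?_) hle⟩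
  · exact mul_le_mul_of_nonneg_left (sumIic_le_finsum hg hg0 b) hr
  · exact (mul_le_mul_of_nonneg_left (sumIic_le_sumIio hg hg0 hx) hr).trans_lt hlt

theorem le_sum_floor_mul_sub_floor_mul {ι : Type*} [Fintype ι] {d w : ℕ}
    (hι : Fintype.card ι ≤ d) {u v : ι → ℝ} (hv : ∀ i, 0 ≤ v i)
    (hvu : ∀ i, v i ≤ u i) (hw : (w : ℝ) ≤ ∑ i, (u i - v i)) :
    w ≤ ∑ i, (⌊d * u i⌋₊ - ⌊d * v i⌋₊) := by
  rcases isEmpty_or_nonempty ι with hempty | hne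
  · simpa using hw
  rcases Nat.eq_zero_or_pos w with rfl | hw0
  · exact Nat.zero_le _
  have hd : (1 : ℝ) ≤ d := by exact_mod_cast Fintype.card_pos.trans_le hι
  have hfloor :
      ∀ i, d * u i - d * v i - 1 < ((⌊d * u i⌋₊ - ⌊d * v i⌋₊ : ℕ) : ℝ) := fun i => by
    have hdv := mul_nonneg (Nat.cast_nonneg d) (hv i)
    rw [Nat.cast_sub (Nat.floor_mono (mul_le_mul_of_nonneg_left (hvu i) (Nat.cast_nonneg d)))]
    linarith [Nat.floor_le hdv, Nat.lt_floor_add_one ((d : ℝ) * u i)]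
  have hsum :
      ∑ i, ((d : ℝ) * u i - d * v i - 1) = d * ∑ i, (u i - v i) - Fintype.card ι := by
    simp only [Finset.sum_sub_distrib, ← mul_sub, ← Finset.mul_sum, Finset.sum_const,
      Finset.card_univ, nsmul_eq_mul, mul_one]
  have hlt := Finset.sum_lt_sum_of_nonempty Finset.univ_nonempty fun i _ => hfloor i
  rw [hsum, ← Nat.cast_sum] at hlt
  have hcard : (Fintype.card ι : ℝ) ≤ d := by exact_mod_cast hι
  have hw1 : (1 : ℝ) ≤ w := by exact_mod_cast hw0
  have : (w : ℝ) < ((∑ i, (⌊d * u i⌋₊ - ⌊d * v i⌋₊) : ℕ) : ℝ) + 1 := by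
    nlinarith
  exact Nat.lt_add_one_iff.1 (by exact_mod_cast this)

end Rounding

section FracCover

variable {α β : Type*} {H : Set (Set α)} {w : Set α → ℝ} {g m : α → ℝ}

structure IsFracCover (H : Set (Set α)) (w : Set α → ℝ) (g : α → ℝ) : Prop where
  finite_support : (support g).Finite
  nonneg : ∀ x, 0 ≤ g x
  le_finsum : ∀ e ∈ H, w e ≤ ∑ᶠ x ∈ e, g x

theorem IsFracCover.tauStarWR_le (hg : IsFracCover H w g) : tauStarWR H w ≤ ∑ᶠ x, g x :=
  csInf_le ⟨0, by rintro _ ⟨g, -, hg0, -, rfl⟩; exact finsum_nonneg hg0⟩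
    ⟨g, hg.finite_support, hg.nonneg, hg.le_finsum, rfl⟩

theorem exists_isFracCover (hH : H.Finite) (hne : ∀ e ∈ H, e.Nonempty) (w : Set α → ℝ) :
    ∃ g, IsFracCover H w g := by
  rcases isEmpty_or_nonempty α with _ | _
  · exact ⟨0, by simp, fun _ => le_rfl, fun e he => isEmptyElim (hne e he).some⟩
  choose! p hp using hne
  obtain ⟨W, hW⟩ := (hH.image w).bddAbove
  set g := (p '' H).indicator fun _ => max W 0
  have hg : (support g).Finite := (hH.image p).subset support_indicator_subset
  have hg0 : 0 ≤ g := indicator_nonneg fun _ _ => le_max_right W 0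
  refine ⟨g, hg, hg0, fun e he => ?_⟩
  calc w e ≤ max W 0 := (hW (mem_image_of_mem w he)).trans (le_max_left W 0)
    _ = ∑ᶠ x ∈ {p e}, g x := by
      rw [finsum_mem_singleton]
      exact (indicator_of_mem (mem_image_of_mem p he) fun _ => max W 0).symm
    _ ≤ ∑ᶠ x ∈ e, g x :=
      finsum_mem_le_finsum_mem_of_subset hg hg0 (singleton_subset_iff.2 (hp e he))

theorem exists_isFracCover_finsum_lt (h : ∃ g, IsFracCover H w g) {r : ℝ}
    (hr : tauStarWR H w < r) : ∃ g, IsFracCover H w g ∧ ∑ᶠ x, g x < r := by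
  obtain ⟨g, hg⟩ := h
  obtain ⟨_, ⟨g, hgf, hg0, hgc, rfl⟩, hlt⟩ :=
    exists_lt_of_csInf_lt (by exact ⟨_, g, hg.finite_support, hg.nonneg, hg.le_finsum, rfl⟩) hr
  exact ⟨g, ⟨hgf, hg0, hgc⟩, hlt⟩

/-- The slack `t` of the edges on which `m` is not nearly tight pays for the weight
`t / (W + t)` given to `g`. -/
theorem IsFracCover.mix {W t : ℝ} (hm : IsFracCover H w m)
    (hg : IsFracCover {e ∈ H | ∑ᶠ x ∈ e, m x ≤ w e + t} w g) (hW0 : 0 ≤ W)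
    (hW : ∀ e ∈ H, w e ≤ W) (ht : 0 < t) :
    IsFracCover H w fun x => (W + t)⁻¹ * (W * m x + t * g x) := by
  have hWt : 0 < W + t := by linarith
  refine ⟨(hm.finite_support.union hg.finite_support).subset fun x hx => ?_,
    fun x => by have := hm.nonneg x; have := hg.nonneg x; positivity, fun e he => ?_⟩
  · by_contra hx'
    simp only [mem_union, mem_support, not_or, not_not] at hx'
    simp [hx'.1, hx'.2] at hx
  rw [finsum_mem_mul_add_mul hm.finite_support hg.finite_support, le_inv_mul_iff₀ hWt]
  have hge := finsum_nonneg fun x => finsum_nonneg fun (_ : x ∈ e) => hg.nonneg x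
  have hme := hm.le_finsum e he
  by_cases htight : ∑ᶠ x ∈ e, m x ≤ w e + t
  · nlinarith [hg.le_finsum e ⟨he, htight⟩]
  · nlinarith [hW e he]

theorem mul_tauStarWR_le_of_isFracCover_tight {W t : ℝ} (hm : IsFracCover H w m)
    (hg : IsFracCover {e ∈ H | ∑ᶠ x ∈ e, m x ≤ w e + t} w g) (hW0 : 0 ≤ W)
    (hW : ∀ e ∈ H, w e ≤ W) (ht : 0 < t) :
    (W + t) * tauStarWR H w ≤ W * ∑ᶠ x, m x + t * ∑ᶠ x, g x := by
  have h := (hm.mix hg hW0 hW ht).tauStarWR_le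
  rwa [← finsum_mem_univ, finsum_mem_mul_add_mul hm.finite_support hg.finite_support,
    finsum_mem_univ, finsum_mem_univ, le_inv_mul_iff₀ (by linarith)] at h

noncomputable def pushforward (π : β → α) (g : β → ℝ) (x : α) : ℝ :=
  ∑ᶠ y ∈ π ⁻¹' {x}, g y

theorem support_pushforward_subset (π : β → α) (g : β → ℝ) :
    support (pushforward π g) ⊆ π '' support g := fun x hx => by
  obtain ⟨y, hy, hgy⟩ := exists_ne_zero_of_finsum_mem_ne_zero hx
  exact ⟨y, hgy, hy⟩

theorem finsum_mem_pushforward {π : β → α} {g : β → ℝ} (hg : (support g).Finite)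
    (s : Set α) :
    ∑ᶠ x ∈ s, pushforward π g x = ∑ᶠ y ∈ π ⁻¹' s, g y := by
  classical
  set S := hg.toFinset
  have hfiber : ∀ x, pushforward π g x = ∑ y ∈ S with π y = x, g y := fun x =>
    finsum_mem_eq_sum_of_subset _ (fun y ⟨hy, hgy⟩ => by simpa [S] using ⟨hgy, hy⟩)
      fun y hy => by simpa using (Finset.mem_filter.1 hy).2
  rw [finsum_mem_eq_sum_of_subset (t := (S.image π).filter (· ∈ s)),
    finsum_mem_eq_sum_of_subset (t := S.filter (π · ∈ s))]
  · simp only [hfiber]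
    refine (Finset.sum_fiberwise_eq_sum_filter _ _ _ _).trans ?_
    exact Finset.sum_congr (Finset.filter_congr fun y hy => by simp [Finset.mem_image_of_mem π hy])
      fun _ _ => rfl
  · exact fun y ⟨hy, hgy⟩ => by simpa [S] using ⟨hgy, hy⟩
  · exact fun y hy => (Finset.mem_filter.1 hy).2
  · rintro x ⟨hx, hpx⟩
    obtain ⟨y, hgy, rfl⟩ := support_pushforward_subset π g hpx
    simpa [S] using ⟨⟨y, hgy, rfl⟩, hx⟩
  · exact fun x hx => (Finset.mem_filter.1 hx).2

theorem finsum_pushforward {π : β → α} {g : β → ℝ} (hg : (support g).Finite) :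
    ∑ᶠ x, pushforward π g x = ∑ᶠ y, g y := by
  rw [← finsum_mem_univ, finsum_mem_pushforward hg, preimage_univ, finsum_mem_univ]

theorem IsFracCover.pushforward_of_mapsTo {E : Set α → Set β} {π : β → α}
    {T : Set (Set α)} {ℓ : Set β → ℝ} {g : β → ℝ} (hg : IsFracCover (E '' T) ℓ g)
    (hπ : ∀ e ∈ T, MapsTo π (E e) e) (hw : ∀ e ∈ T, w e ≤ ℓ (E e)) :
    IsFracCover T w (pushforward π g) where
  finite_support := (hg.finite_support.image π).subset (support_pushforward_subset π g)
  nonneg _ := finsum_nonneg fun y => finsum_nonneg fun _ => hg.nonneg y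
  le_finsum e he := calc
    w e ≤ ℓ (E e) := hw e he
    _ ≤ ∑ᶠ y ∈ E e, g y := hg.le_finsum _ (mem_image_of_mem E he)
    _ ≤ ∑ᶠ y ∈ π ⁻¹' e, g y :=
      finsum_mem_le_finsum_mem_of_subset hg.finite_support hg.nonneg (hπ e he)
    _ = ∑ᶠ x ∈ e, pushforward π g x := (finsum_mem_pushforward hg.finite_support e).symm

end FracCover

section Matching

variable {α β : Type*} {H : Set (Set α)} {w : Set α → ℕ}

theorem sum_le_nuW (hH : H.Finite) {M : Finset (Set α)} (hMH : ↑M ⊆ H)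
    (hM : (M : Set (Set α)).PairwiseDisjoint id) : ∑ e ∈ M, w e ≤ nuW H w := by
  refine le_csSup ⟨∑ e ∈ hH.toFinset, w e, ?_⟩ ⟨M, hMH, hM, rfl⟩
  rintro _ ⟨M', hM'H, -, rfl⟩
  exact Finset.sum_le_sum_of_subset fun e he => hH.mem_toFinset.2 (hM'H he)

theorem nuWR_image_le (hH : H.Finite) {T : Set (Set α)} (hTH : T ⊆ H) {E : Set α → Set β}
    (hinj : InjOn E T) (hdisj : ∀ e ∈ T, ∀ f ∈ T, Disjoint (E e) (E f) → Disjoint e f)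
    {ℓ : Set β → ℝ} {c : Set α → ℝ} (hc : ∀ e ∈ H, 0 ≤ c e)
    (hℓ : ∀ e ∈ T, ℓ (E e) ≤ w e + c e) :
    nuWR (E '' T) ℓ ≤ nuW H w + ∑ e ∈ hH.toFinset, c e := by
  classical
  refine csSup_le ⟨0, ∅, by simp, by simp, by simp⟩ ?_
  rintro _ ⟨M', hM'T, hM'disj, rfl⟩
  obtain ⟨M, hMT, rfl⟩ := Finset.subset_set_image_iff.1 hM'T
  have hMinj : InjOn E M := hinj.mono hMT
  have hM : (M : Set (Set α)).PairwiseDisjoint id := fun e he f hf hef =>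
    hdisj e (hMT he) f (hMT hf) (hM'disj (Finset.mem_coe.2 (Finset.mem_image_of_mem E he))
      (Finset.mem_coe.2 (Finset.mem_image_of_mem E hf)) (hMinj.ne he hf hef))
  have hMH : M ⊆ hH.toFinset := fun e he => hH.mem_toFinset.2 (hTH (hMT he))
  rw [Finset.sum_image fun e he f hf => hMinj he hf]
  calc ∑ e ∈ M, ℓ (E e) ≤ ∑ e ∈ M, ((w e : ℝ) + c e) :=
        Finset.sum_le_sum fun e he => hℓ e (hMT he)
    _ = ((∑ e ∈ M, w e : ℕ) : ℝ) + ∑ e ∈ M, c e := by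
        rw [Finset.sum_add_distrib, Nat.cast_sum]
    _ ≤ nuW H w + ∑ e ∈ hH.toFinset, c e :=
        add_le_add (by exact_mod_cast sum_le_nuW hH (hMT.trans hTH) hM)
          (Finset.sum_le_sum_of_subset_of_nonneg hMH fun e he _ => hc e (hH.mem_toFinset.1 he))

end Matching

theorem tauW_le_mul_finsum {d : ℕ} {H : Set (Set ℝ)} (hH : ∀ e ∈ H, IsDInterval d e)
    {w : Set ℝ → ℕ} {g : ℝ → ℝ} (hg : IsFracCover H (fun e => (w e : ℝ)) g) :
    (tauW H w : ℝ) ≤ d * ∑ᶠ x, g x := by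
  classical
  set K := ⌊(d : ℝ) * ∑ᶠ x, g x⌋₊
  set p : ℕ → ℝ := fun k => quantile (fun x => d * sumIic g x) k
  set c : ℝ → ℕ := fun x => ((Finset.Icc 1 K).filter (p · = x)).card
  have hc : (support c).Finite := finite_support_card_filter_eq _ p
  have hcover : ∀ e ∈ H, w e ≤ ∑ᶠ x ∈ e, c x := by
    intro e he
    obtain ⟨n, a, b, hn, hab, hdisj, rfl⟩ := hH e he
    replace hdisj := pairwise_univ.1 hdisj
    have hmass :
        (w (⋃ i, Icc (a i) (b i)) : ℝ) ≤ ∑ i, (sumIic g (b i) - sumIio g (a i)) := by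
      simp_rw [sumIic_sub_sumIio hg.finite_support (hab _),
        ← finsum_mem_iUnion_of_finite_support hdisj hg.finite_support]
      exact hg.le_finsum _ he
    calc w _ ≤ ∑ i, (⌊d * sumIic g (b i)⌋₊ - ⌊d * sumIio g (a i)⌋₊) :=
          le_sum_floor_mul_sub_floor_mul (by simpa using hn) (fun i => sumIio_nonneg hg.nonneg _)
            (fun i => (sumIio_mono hg.finite_support hg.nonneg (hab i)).trans
              (sumIio_le_sumIic hg.finite_support hg.nonneg _)) hmass
      _ ≤ ∑ i, ∑ᶠ x ∈ Icc (a i) (b i), c x := Finset.sum_le_sum fun i _ => by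
          rw [finsum_mem_card_filter_eq]
          exact floor_sub_floor_le_card_quantile_mem hg.finite_support hg.nonneg d.cast_nonneg _ _
      _ = ∑ᶠ x ∈ ⋃ i, Icc (a i) (b i), c x :=
          (finsum_mem_iUnion_of_finite_support hdisj hc).symm
  calc (tauW H w : ℝ) ≤ (∑ᶠ x, c x : ℕ) :=
        Nat.cast_le.2 (Nat.sInf_le ⟨c, hc, hcover, rfl⟩)
    _ = K := by
      rw [← finsum_mem_univ, finsum_mem_card_filter_eq,
        Finset.filter_true_of_mem fun _ _ => mem_univ _, Nat.card_Icc, Nat.add_sub_cancel]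
    _ ≤ d * ∑ᶠ x, g x :=
      Nat.floor_le (mul_nonneg d.cast_nonneg (finsum_nonneg hg.nonneg))

theorem tauW_le_mul_tauStarWR {d : ℕ} {H : Set (Set ℝ)} (hH : H.Finite)
    (hHd : ∀ e ∈ H, IsDInterval d e ∧ e.Nonempty) (w : Set ℝ → ℕ) :
    (tauW H w : ℝ) ≤ d * tauStarWR H (fun e => w e) := by
  obtain ⟨g, hg⟩ := exists_isFracCover hH (fun e he => (hHd e he).2) (fun e => (w e : ℝ))
  rw [tauStarWR, ← smul_eq_mul, ← Real.sInf_smul_of_nonneg d.cast_nonneg]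
  refine le_csInf
    ⟨_, smul_mem_smul_set ⟨g, hg.finite_support, hg.nonneg, hg.le_finsum, rfl⟩⟩ ?_
  rintro _ ⟨_, ⟨g, hgf, hg0, hgc, rfl⟩, rfl⟩
  exact tauW_le_mul_finsum (fun e he => (hHd e he).1) ⟨hgf, hg0, hgc⟩

section Transfer

variable {d : ℕ} {κ : ℝ} {H : Set (Set ℝ)}

theorem exists_isFracCover_tight_finsum_lt (hκ : 0 ≤ κ)
    (hyp : ∀ G : Set (Set ℝ), G.Finite → (∀ e ∈ G, IsDInterval d e ∧ e.Nonempty) →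
      tauStarWR G totalLength ≤ κ * nuWR G totalLength)
    (hH : H.Finite) (hHd : ∀ e ∈ H, IsDInterval d e ∧ e.Nonempty) {w : Set ℝ → ℕ}
    {m : ℝ → ℝ} (hm : IsFracCover H (fun e => w e) m) {t : ℝ} (ht : 0 < t) :
    ∃ g, IsFracCover {e ∈ H | ∑ᶠ x ∈ e, m x ≤ w e + t} (fun e => w e) g ∧
      ∑ᶠ x, g x < κ * (nuW H w + t * ∑ e ∈ hH.toFinset, (1 + totalLength e)) + t := by
  set T := {e ∈ H | ∑ᶠ x ∈ e, m x ≤ w e + t}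
  have hTH : T ⊆ H := sep_subset _ _
  choose! E hEd hElen hEmem hEπ using fun e (he : e ∈ H) =>
    (hHd e he).1.exists_stretch ht hm.finite_support hm.nonneg
  have hGfin : (E '' T).Finite := (hH.subset hTH).image E
  have hGd : ∀ E' ∈ E '' T, IsDInterval d E' ∧ E'.Nonempty := by
    rintro _ ⟨e, he, rfl⟩
    obtain ⟨z, hz⟩ := (hHd e (hTH he)).2
    exact ⟨hEd e (hTH he), _, (hEmem e (hTH he) z).1 hz⟩
  have hν : nuWR (E '' T) totalLength ≤
      nuW H w + t * ∑ e ∈ hH.toFinset, (1 + totalLength e) := by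
    rw [Finset.mul_sum]
    refine nuWR_image_le hH hTH (fun e he f hf hef => ext fun z => ?_)
      (fun e he f hf hEef => disjoint_left.2 fun z hze hzf => disjoint_left.1 hEef
        ((hEmem e (hTH he) z).1 hze) ((hEmem f (hTH hf) z).1 hzf))
      (fun e _ => mul_nonneg ht.le (add_nonneg zero_le_one ENNReal.toReal_nonneg))
      fun e he => ?_
    · rw [hEmem e (hTH he), hEmem f (hTH hf), hef]
    · rw [hElen e (hTH he)]
      linarith [he.2]
  obtain ⟨g, hg, hgsum⟩ := exists_isFracCover_finsum_lt
    (exists_isFracCover hGfin (fun E' hE' => (hGd E' hE').2) totalLength)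
    ((hyp _ hGfin hGd).trans_lt (lt_add_of_le_of_pos
      (mul_le_mul_of_nonneg_left hν hκ) ht))
  refine ⟨pushforward _ g, hg.pushforward_of_mapsTo (fun e he => hEπ e (hTH he))
    fun e he => ?_, by rwa [finsum_pushforward hg.finite_support]⟩
  rw [hElen e (hTH he)]
  exact (hm.le_finsum e (hTH he)).trans
    (le_add_of_nonneg_left (mul_nonneg ht.le ENNReal.toReal_nonneg))

theorem tauStarWR_le_mul_nuW_add (hκ : 0 ≤ κ)
    (hyp : ∀ G : Set (Set ℝ), G.Finite → (∀ e ∈ G, IsDInterval d e ∧ e.Nonempty) →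
      tauStarWR G totalLength ≤ κ * nuWR G totalLength)
    (hH : H.Finite) (hHd : ∀ e ∈ H, IsDInterval d e ∧ e.Nonempty) (w : Set ℝ → ℕ) :
    ∃ C, ∀ t > 0, tauStarWR H (fun e => w e) ≤ κ * nuW H w + t * C := by
  set τ := tauStarWR H (fun e => (w e : ℝ))
  set W : ℝ := ∑ e ∈ hH.toFinset, (w e : ℝ)
  set Λ : ℝ := ∑ e ∈ hH.toFinset, (1 + totalLength e)
  have hW0 : 0 ≤ W := Finset.sum_nonneg fun e _ => Nat.cast_nonneg (w e)
  have hW : ∀ e ∈ H, (w e : ℝ) ≤ W := fun e he =>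
    Finset.single_le_sum (fun f _ => Nat.cast_nonneg (w f)) (hH.mem_toFinset.2 he)
  refine ⟨W + κ * Λ + 1, fun t ht => ?_⟩
  -- the excess `t * t` of `m`, seen through the mixing weight `t / (W + t)`, costs `W t`
  obtain ⟨m, hm, hmτ⟩ := exists_isFracCover_finsum_lt
    (exists_isFracCover hH (fun e he => (hHd e he).2) _) (lt_add_of_pos_right τ (mul_pos ht ht))
  obtain ⟨g, hg, hgsum⟩ := exists_isFracCover_tight_finsum_lt hκ hyp hH hHd hm ht
  have hmix := mul_tauStarWR_le_of_isFracCover_tight hm hg hW0 hW ht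
  refine le_of_mul_le_mul_left ?_ ht
  nlinarith [mul_le_mul_of_nonneg_left hmτ.le hW0, mul_le_mul_of_nonneg_left hgsum.le ht.le]

theorem tauStarWR_le_mul_nuW (hκ : 0 ≤ κ)
    (hyp : ∀ G : Set (Set ℝ), G.Finite → (∀ e ∈ G, IsDInterval d e ∧ e.Nonempty) →
      tauStarWR G totalLength ≤ κ * nuWR G totalLength)
    (hH : H.Finite) (hHd : ∀ e ∈ H, IsDInterval d e ∧ e.Nonempty) (w : Set ℝ → ℕ) :
    tauStarWR H (fun e => w e) ≤ κ * nuW H w := by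
  obtain ⟨C, hC⟩ := tauStarWR_le_mul_nuW_add hκ hyp hH hHd w
  have hcont : Continuous fun t : ℝ => κ * nuW H w + t * C := by fun_prop
  have hlim : Tendsto (fun t => κ * nuW H w + t * C) (𝓝[>] 0) (𝓝 (κ * nuW H w)) := by
    simpa using (hcont.tendsto 0).mono_left nhdsWithin_le_nhds
  exact ge_of_tendsto hlim (eventually_nhdsWithin_of_forall hC)

end Transfer

theorem tauW_le_alpha_d_sq_mul_nuW_general (d : ℕ) (α : ℝ) (hα : 0 < α)
    (hyp : ∀ G : Set (Set ℝ), G.Finite →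
      (∀ e ∈ G, IsDInterval d e ∧ e.Nonempty) →
      tauStarWR G totalLength ≤ α * d * nuWR G totalLength)
    (H : Set (Set ℝ)) (hfin : H.Finite)
    (hH : ∀ e ∈ H, IsDInterval d e ∧ e.Nonempty)
    (w : Set ℝ → ℕ) :
    (tauW H w : ℝ) ≤ α * d ^ 2 * (nuW H w : ℝ) := by
  calc (tauW H w : ℝ) ≤ d * tauStarWR H (fun e => w e) := tauW_le_mul_tauStarWR hfin hH w
    _ ≤ d * (α * d * nuW H w) :=
      mul_le_mul_of_nonneg_left (tauStarWR_le_mul_nuW (by positivity) hyp hfin hH w)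
        d.cast_nonneg
    _ = α * d ^ 2 * nuW H w := by ring

/-- If every finite hypergraph `G` of `d`-intervals satisfies
`τ*_ℓ(G) ≤ αd·ν_ℓ(G)` (where `ℓ` is the total-length weight system), then
every finite hypergraph `H` of `d`-intervals with an arbitrary weight system
`w : E(H) → ℕ` satisfies `τ_w(H) ≤ αd²·ν_w(H)`. -/
theorem tauW_le_alpha_d_sq_mul_nuW (d : ℕ) (hd : 1 ≤ d) (α : ℝ) (hα : 0 < α)
    (hyp : ∀ G : Set (Set ℝ), G.Finite →
      (∀ e ∈ G, IsDInterval d e ∧ e.Nonempty) →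
      tauStarWR G totalLength ≤ α * d * nuWR G totalLength)
    (H : Set (Set ℝ)) (hfin : H.Finite)
    (hH : ∀ e ∈ H, IsDInterval d e ∧ e.Nonempty)
    (w : Set ℝ → ℕ) :
    (tauW H w : ℝ) ≤ α * d ^ 2 * (nuW H w : ℝ) :=
  tauW_le_alpha_d_sq_mul_nuW_general d α hα hyp H hfin hH w
end
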